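/- arXiv:1606.00045 — 9 statements merged into one kernel-verified Lean document; each statement's English description precedes it below -/
import Mathlib

section
/- Let a < b be real numbers, let X = ℝ² \ (((−∞,a] ∪ [b,+∞)) × {0}), and let ε > 0. Then there exists a homeomorphism φ : ℝ² → X such that: (a) φ is the identity outside ℝ×(−ε,ε); (b) φ preserves the foliation by horizontal lines, i.e. φ(ℝ×{t}) = ℝ×{t} for every t ≠ 0 and φ(ℝ×{0}) = (a,b)×{0}. -/
noncomputable def gg (r u y : ℝ) : ℝ := y * (r + u * |y|) / (r + |y|)
noncomputable def dd (r u w : ℝ) : ℝ :=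
  r - |w| + Real.sqrt ((r - |w|)^2 + 4*u*r*|w|)
noncomputable def FF (r u w : ℝ) : ℝ := 2*r*w / dd r u w

lemma gg_neg (r u y : ℝ) : gg r u (-y) = - gg r u y := by
  unfold gg; rw [abs_neg]; ring

lemma FF_neg (r u w : ℝ) : FF r u (-w) = - FF r u w := by
  unfold FF dd; rw [abs_neg]; ring

lemma dd_pos {r u w : ℝ} (hr : 0 < r) (hu : 0 ≤ u) (h : |w| < r ∨ 0 < u) :
    0 < dd r u w := by
  unfold dd
  set v := |w| with hv
  have hv0 : 0 ≤ v := abs_nonneg w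
  have hs0 : 0 ≤ Real.sqrt ((r - v)^2 + 4*u*r*v) := Real.sqrt_nonneg _
  rcases lt_or_ge v r with hvr | hvr
  · linarith
  · rcases h with h | h
    · linarith
    · have hv0' : 0 < v := lt_of_lt_of_le hr hvr
      have key : v - r < Real.sqrt ((r - v)^2 + 4*u*r*v) := by
        have h2 : (v - r)^2 < (r - v)^2 + 4*u*r*v := by nlinarith [mul_pos (mul_pos h hr) hv0']
        have := Real.sqrt_lt_sqrt (sq_nonneg (v - r)) h2
        rwa [Real.sqrt_sq (by linarith)] at this
      linarith

lemma gg_nonneg {r u y : ℝ} (hr : 0 < r) (hu : 0 ≤ u) (hy : 0 ≤ y) :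
    0 ≤ gg r u y := by
  unfold gg
  have : 0 ≤ |y| := abs_nonneg y
  positivity

lemma FF_gg_aux {r u y : ℝ} (hr : 0 < r) (hu : 0 ≤ u) (hy : 0 ≤ y) :
    FF r u (gg r u y) = y := by
  set z := gg r u y with hzd
  have hz0 : 0 ≤ z := gg_nonneg hr hu hy
  have hry : 0 < r + y := by linarith
  have hz : z * (r + y) = y * (r + u * y) := by
    rw [hzd]; unfold gg; rw [abs_of_nonneg hy]; field_simp
  have habs : |z| = z := abs_of_nonneg hz0
  have h1 : 0 ≤ u*y*y := by positivity
  have h2 : 0 ≤ u*y*r := by positivity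
  have hge : 0 ≤ 2*u*y + r - z := by nlinarith [hz, h1, h2]
  have hs : Real.sqrt ((r - z)^2 + 4*u*r*z) = 2*u*y + r - z := by
    rw [show (r - z)^2 + 4*u*r*z = (2*u*y + r - z)^2 by nlinarith [hz]]
    exact Real.sqrt_sq hge
  have hd : 0 < r - z + (2*u*y + r - z) := by nlinarith
  unfold FF dd
  rw [habs, hs, div_eq_iff hd.ne']
  linear_combination 2*hz

lemma FF_gg {r u : ℝ} (hr : 0 < r) (hu : 0 ≤ u) (y : ℝ) :
    FF r u (gg r u y) = y := by
  rcases le_total 0 y with hy | hy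
  · exact FF_gg_aux hr hu hy
  · have := FF_gg_aux hr hu (neg_nonneg.2 hy)
    rw [gg_neg, FF_neg] at this
    linarith

lemma gg_FF_aux {r u w : ℝ} (hr : 0 < r) (hu : 0 ≤ u) (hw : 0 ≤ w)
    (h : |w| < r ∨ 0 < u) : gg r u (FF r u w) = w := by
  have hd : 0 < dd r u w := dd_pos hr hu h
  have habsw : |w| = w := abs_of_nonneg hw
  set s := Real.sqrt ((r - w)^2 + 4*u*r*w) with hsd
  have hs0 : 0 ≤ s := Real.sqrt_nonneg _
  have hs2 : s^2 = (r - w)^2 + 4*u*r*w := Real.sq_sqrt (by positivity)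
  have hdd : dd r u w = r - w + s := by unfold dd; rw [habsw]
  set y := FF r u w with hyd
  have hy0 : 0 ≤ y := by
    rw [hyd]; unfold FF
    positivity
  have hdne : r - w + s ≠ 0 := by rw [hdd] at hd; exact hd.ne'
  have hy : y * (r - w + s) = 2*r*w := by
    rw [hyd]; unfold FF; rw [hdd]
    exact div_mul_cancel₀ _ hdne
  have hry : 0 < r + y := by linarith
  unfold gg
  rw [abs_of_nonneg hy0, div_eq_iff hry.ne']
  -- goal: y * (r + u*y) = w * (r + y)
  have key : (r - w + s)^2 * (y * (r + u*y) - w * (r + y)) = 0 := by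
    linear_combination (u*(y*(r - w + s) + 2*r*w) + (r - w)*(r - w + s)) * hy
      - (r*w)*hs2
  have hd2 : (r - w + s)^2 ≠ 0 := by
    rw [hdd] at hd; positivity
  have := mul_eq_zero.mp key
  rcases this with h1 | h1
  · exact absurd h1 hd2
  · linarith

lemma gg_FF {r u w : ℝ} (hr : 0 < r) (hu : 0 ≤ u) (h : |w| < r ∨ 0 < u) :
    gg r u (FF r u w) = w := by
  rcases le_total 0 w with hw | hw
  · exact gg_FF_aux hr hu hw h
  · have h' : |(-w)| < r ∨ 0 < u := by rwa [abs_neg]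
    have := gg_FF_aux hr hu (neg_nonneg.2 hw) h'
    rw [FF_neg, gg_neg] at this
    linarith

lemma gg_one {r : ℝ} (hr : 0 < r) (y : ℝ) : gg r 1 y = y := by
  unfold gg
  rw [one_mul, mul_div_assoc, div_self (by positivity : r + |y| ≠ 0), mul_one]

lemma gg_zero_lt {r : ℝ} (hr : 0 < r) (y : ℝ) : |gg r 0 y| < r := by
  unfold gg
  rw [abs_div, abs_of_pos (by positivity : (0:ℝ) < r + |y|), div_lt_iff₀ (by positivity),
    zero_mul, add_zero, abs_mul, abs_of_pos hr]
  nlinarith [abs_nonneg y, sq_nonneg r]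

noncomputable def uu (ε t : ℝ) : ℝ := min (|t|/ε) 1

lemma uu_nonneg {ε : ℝ} (hε : 0 < ε) (t : ℝ) : 0 ≤ uu ε t := le_min (by positivity) zero_le_one

lemma uu_zero (ε : ℝ) (hε : 0 < ε) : uu ε 0 = 0 := by
  simp [uu, le_of_lt zero_lt_one]

lemma uu_pos {ε t : ℝ} (hε : 0 < ε) (ht : t ≠ 0) : 0 < uu ε t :=
  lt_min (by positivity) zero_lt_one

lemma uu_one {ε t : ℝ} (hε : 0 < ε) (ht : t ∉ Set.Ioo (-ε) ε) : uu ε t = 1 := by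
  rw [Set.mem_Ioo, not_and_or, not_lt, not_lt] at ht
  have : ε ≤ |t| := by
    rcases ht with h | h
    · rw [abs_of_nonpos (by linarith)]; linarith
    · rw [abs_of_nonneg (by linarith)]; exact h
  exact min_eq_right ((one_le_div hε).2 this)

lemma uu_cont (ε : ℝ) : Continuous (uu ε) :=
  (continuous_abs.div_const ε).min continuous_const



/-- for `a < b` and `X = ℝ² \ ((Iic a ∪ Ici b) × {0})` and `ε > 0` there is a
homeomorphism `φ : ℝ² → X` which is the identity outside `ℝ × (-ε, ε)`, maps each horizontal
line `ℝ × {t}` (`t ≠ 0`) onto itself, and maps `ℝ × {0}` onto `(a,b) × {0}`. -/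
theorem stmt3 (a b : ℝ) (hab : a < b) (ε : ℝ) (hε : 0 < ε) :
    ∃ φ : (ℝ × ℝ) ≃ₜ ↥((((Set.Iic a ∪ Set.Ici b) ×ˢ ({0} : Set ℝ))ᶜ : Set (ℝ × ℝ))),
      (∀ p : ℝ × ℝ, p.2 ∉ Set.Ioo (-ε) ε → ((φ p : ℝ × ℝ) = p)) ∧
      (∀ t : ℝ, t ≠ 0 →
        Subtype.val '' (⇑φ '' {p : ℝ × ℝ | p.2 = t}) = {p : ℝ × ℝ | p.2 = t}) ∧
      Subtype.val '' (⇑φ '' {p : ℝ × ℝ | p.2 = 0}) = Set.Ioo a b ×ˢ ({0} : Set ℝ) := by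
  obtain ⟨m, r, hA, hB, hr⟩ : ∃ m r : ℝ, a = m - r ∧ b = m + r ∧ 0 < r :=
    ⟨(a+b)/2, (b-a)/2, by ring, by ring, by linarith⟩
  set X : Set (ℝ × ℝ) := (((Set.Iic a ∪ Set.Ici b) ×ˢ ({0} : Set ℝ))ᶜ) with hX
  -- membership criterion
  have hmemX : ∀ p : ℝ × ℝ, p ∈ X ↔ (p.2 = 0 → |p.1 - m| < r) := by
    intro p
    rw [hX]
    simp only [Set.mem_compl_iff, Set.mem_prod, Set.mem_union, Set.mem_Iic, Set.mem_Ici,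
      Set.mem_singleton_iff, not_and, not_or]
    constructor
    · intro h h0
      by_contra hc
      rw [abs_lt, not_and_or, not_lt, not_lt] at hc
      have hor : p.1 ≤ a ∨ b ≤ p.1 := by
        rcases hc with hc | hc
        · left; rw [hA]; linarith
        · right; rw [hB]; linarith
      exact h hor h0
    · intro h hor h0
      have h2 := h h0
      rw [abs_lt] at h2
      rcases hor with h' | h'
      · rw [hA] at h'; linarith [h2.1]
      · rw [hB] at h'; linarith [h2.2]
  -- the forward map lands in X
  have hmem' : ∀ p : ℝ × ℝ, (m + gg r (uu ε p.2) (p.1 - m), p.2) ∈ X := by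
    intro p
    rw [hmemX]
    intro h0
    simp only
    rw [add_sub_cancel_left, h0, uu_zero ε hε]
    exact gg_zero_lt hr _
  -- condition needed for gg_FF on points of X
  have hcond : ∀ q : X, |(q : ℝ × ℝ).1 - m| < r ∨ 0 < uu ε (q : ℝ × ℝ).2 := by
    intro q
    by_cases h0 : (q : ℝ × ℝ).2 = 0
    · exact Or.inl ((hmemX _).1 q.2 h0)
    · exact Or.inr (uu_pos hε h0)
  have hcu : Continuous (uu ε) := uu_cont ε
  have hli : ∀ p : ℝ × ℝ,
      ((m + FF r (uu ε p.2) ((m + gg r (uu ε p.2) (p.1 - m)) - m), p.2) : ℝ × ℝ) = p := by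
    intro p
    rw [add_sub_cancel_left, FF_gg hr (uu_nonneg hε _)]
    exact Prod.ext (by ring) rfl
  have hri : ∀ q : X,
      ((m + gg r (uu ε (q : ℝ × ℝ).2) ((m + FF r (uu ε (q : ℝ × ℝ).2) ((q : ℝ × ℝ).1 - m)) - m),
        (q : ℝ × ℝ).2) : ℝ × ℝ) = (q : ℝ × ℝ) := by
    intro q
    rw [add_sub_cancel_left, gg_FF hr (uu_nonneg hε _) (hcond q)]
    exact Prod.ext (by ring) rfl
  have hc1 : Continuous fun p : ℝ × ℝ => (m + gg r (uu ε p.2) (p.1 - m), p.2) := by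
    apply Continuous.prodMk _ continuous_snd
    apply Continuous.add continuous_const
    unfold gg
    exact Continuous.div (by fun_prop) (by fun_prop)
      (fun p => by have : (0:ℝ) ≤ |p.1 - m| := abs_nonneg _; positivity)
  have hc2 : Continuous fun q : X =>
      ((m + FF r (uu ε (q : ℝ × ℝ).2) ((q : ℝ × ℝ).1 - m), (q : ℝ × ℝ).2) : ℝ × ℝ) := by
    apply Continuous.prodMk _ (continuous_snd.comp continuous_subtype_val)
    apply Continuous.add continuous_const
    unfold FF
    apply Continuous.div
    · fun_prop
    · unfold dd; fun_prop
    · exact fun q => (dd_pos hr (uu_nonneg hε _) (hcond q)).ne'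
  let φ : (ℝ × ℝ) ≃ₜ X :=
    { toFun := fun p => ⟨(m + gg r (uu ε p.2) (p.1 - m), p.2), hmem' p⟩
      invFun := fun q => (m + FF r (uu ε (q : ℝ × ℝ).2) ((q : ℝ × ℝ).1 - m), (q : ℝ × ℝ).2)
      left_inv := fun p => hli p
      right_inv := fun q => Subtype.ext (hri q)
      continuous_toFun := hc1.subtype_mk _
      continuous_invFun := hc2 }
  have hφval : ∀ p : ℝ × ℝ, ((φ p : ℝ × ℝ)) = (m + gg r (uu ε p.2) (p.1 - m), p.2) :=
    fun p => rfl
  refine ⟨φ, ?_, ?_, ?_⟩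
  · -- identity outside the strip
    intro p hp
    rw [hφval, uu_one hε hp, gg_one hr]
    exact Prod.ext (by ring) rfl
  · -- horizontal lines t ≠ 0
    intro t ht
    rw [Set.image_image]
    ext q
    simp only [Set.mem_image, Set.mem_setOf_eq]
    constructor
    · rintro ⟨p, hp, rfl⟩
      rw [hφval]
      exact hp
    · intro hq
      refine ⟨(m + FF r (uu ε t) (q.1 - m), t), rfl, ?_⟩
      rw [hφval]
      simp only
      rw [add_sub_cancel_left, gg_FF hr (uu_nonneg hε _) (Or.inr (uu_pos hε ht))]
      exact Prod.ext (by ring) hq.symm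
  · -- horizontal line t = 0
    rw [Set.image_image]
    ext q
    simp only [Set.mem_image, Set.mem_setOf_eq, Set.mem_prod, Set.mem_Ioo,
      Set.mem_singleton_iff]
    constructor
    · rintro ⟨p, hp, rfl⟩
      rw [hφval]
      simp only
      rw [hp, uu_zero ε hε]
      have h1 := gg_zero_lt hr (p.1 - m)
      rw [abs_lt] at h1
      exact ⟨⟨by rw [hA]; linarith [h1.1], by rw [hB]; linarith [h1.2]⟩, rfl⟩
    · rintro ⟨⟨ha', hb'⟩, h0⟩
      have habs : |q.1 - m| < r := by
        rw [abs_lt]; rw [hA] at ha'; rw [hB] at hb'; constructor <;> linarith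
      refine ⟨(m + FF r (uu ε 0) (q.1 - m), 0), rfl, ?_⟩
      rw [hφval]
      simp only
      rw [uu_zero ε hε, add_sub_cancel_left, gg_FF hr le_rfl (Or.inl habs)]
      exact Prod.ext (by ring) h0.symm
end

section
/- Let X be a normal topological space and let α = {ω_i}_{i∈ℕ} be a locally finite family of pairwise disjoint closed subsets of X. Then for each i ∈ ℕ there exists an open neighborhood U_i of ω_i such that closure(U_i) ∩ closure(U_j) = ∅ whenever i ≠ j. -/
open Set Function

/-- Invariant: `f k` is a good open thickening of `ω k` relative to `f`. -/
def Stmt11Good {X : Type*} [TopologicalSpace X] (ω : ℕ → Set X) (k : ℕ) (f : ℕ → Set X) : Prop :=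
  IsOpen (f k) ∧ ω k ⊆ f k ∧ (∀ j, j ≠ k → Disjoint (closure (f k)) (ω j)) ∧
    ∀ l, l < k → Disjoint (closure (f k)) (closure (f l))

lemma stmt11_good_congr {X : Type*} [TopologicalSpace X] (ω : ℕ → Set X) (k : ℕ)
    {f g : ℕ → Set X} (h : ∀ l, l ≤ k → g l = f l) (hf : Stmt11Good ω k f) :
    Stmt11Good ω k g := by
  obtain ⟨h1, h2, h3, h4⟩ := hf
  refine ⟨?_, ?_, ?_, ?_⟩
  · rw [h k le_rfl]; exact h1
  · rw [h k le_rfl]; exact h2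
  · intro j hj; rw [h k le_rfl]; exact h3 j hj
  · intro l hl; rw [h k le_rfl, h l hl.le]; exact h4 l hl

lemma stmt11_key {X : Type*} [TopologicalSpace X] [NormalSpace X]
    (ω : ℕ → Set X) (hclosed : ∀ i, IsClosed (ω i))
    (hdisj : Pairwise (Function.onFun Disjoint ω)) (hlf : LocallyFinite ω)
    (i : ℕ) (prev : ℕ → Set X) :
    ∃ U : Set X, (∀ k, k < i → Disjoint (closure (prev k)) (ω i)) →
      IsOpen U ∧ ω i ⊆ U ∧ (∀ j, j ≠ i → Disjoint (closure U) (ω j)) ∧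
      ∀ k, k < i → Disjoint (closure U) (closure (prev k)) := by
  by_cases hprev : ∀ k, k < i → Disjoint (closure (prev k)) (ω i)
  swap
  · exact ⟨∅, fun h => absurd h hprev⟩
  set ω' : ℕ → Set X := fun j => if j = i then ∅ else ω j with hω'
  have hω'sub : ∀ j, ω' j ⊆ ω j := by
    intro j; simp only [hω']; split <;> simp
  set B : Set X := (⋃ j, ω' j) ∪ (⋃ k ∈ Finset.range i, closure (prev k)) with hB
  have hBclosed : IsClosed B := by
    apply IsClosed.union
    · refine (hlf.subset hω'sub).isClosed_iUnion fun j => ?_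
      simp only [hω']; split
      · exact isClosed_empty
      · exact hclosed j
    · exact isClosed_biUnion_finset fun k _ => isClosed_closure
  have hsub : ω i ⊆ Bᶜ := by
    intro x hx hxB
    rcases hxB with hxB | hxB
    · obtain ⟨j, hj⟩ := mem_iUnion.1 hxB
      simp only [hω'] at hj
      split at hj
      · exact hj
      · exact (hdisj (by assumption : j ≠ i)).le_bot ⟨hj, hx⟩
    · simp only [mem_iUnion, Finset.mem_range] at hxB
      obtain ⟨k, hk, hxk⟩ := hxB
      exact (hprev k hk).le_bot ⟨hxk, hx⟩
  obtain ⟨U, hUopen, hUsub, hUcl⟩ :=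
    normal_exists_closure_subset (hclosed i) hBclosed.isOpen_compl hsub
  refine ⟨U, fun _ => ⟨hUopen, hUsub, ?_, ?_⟩⟩
  · intro j hj
    refine Set.disjoint_left.2 fun x hxU hxj => hUcl hxU ?_
    exact Or.inl (mem_iUnion.2 ⟨j, by simp only [hω', if_neg hj]; exact hxj⟩)
  · intro k hk
    refine Set.disjoint_left.2 fun x hxU hxk => hUcl hxU ?_
    exact Or.inr (by simp only [mem_iUnion, Finset.mem_range]; exact ⟨k, hk, hxk⟩)

/-- in a normal space, a locally finite family of pairwise disjoint closed
sets can be thickened to open neighborhoods with pairwise disjoint closures. -/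
theorem stmt11 {X : Type*} [TopologicalSpace X] [NormalSpace X]
    (ω : ℕ → Set X) (hclosed : ∀ i, IsClosed (ω i))
    (hdisj : Pairwise (Function.onFun Disjoint ω))
    (hlf : LocallyFinite ω) :
    ∃ U : ℕ → Set X, (∀ i, IsOpen (U i)) ∧ (∀ i, ω i ⊆ U i) ∧
      ∀ i j, i ≠ j → closure (U i) ∩ closure (U j) = ∅ := by
  classical
  choose pick hpick using stmt11_key ω hclosed hdisj hlf
  let V : ℕ → ℕ → Set X := fun n =>
    Nat.rec (fun _ => (∅ : Set X)) (fun n ih => Function.update ih n (pick n ih)) n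
  have hVsucc : ∀ n, V (n + 1) = Function.update (V n) n (pick n (V n)) := fun n => rfl
  -- the invariant
  have hGood : ∀ n k, k < n → Stmt11Good ω k (V n) := by
    intro n
    induction n with
    | zero => omega
    | succ n ih =>
      intro k hk
      rcases lt_or_eq_of_le (Nat.lt_succ_iff.1 hk) with hk' | hk'
      · refine stmt11_good_congr ω k (fun l hl => ?_) (ih k hk')
        rw [hVsucc]
        exact Function.update_of_ne (by omega) _ _
      · subst hk'
        have hhyp : ∀ l, l < k → Disjoint (closure (V k l)) (ω k) := by
          intro l hl
          exact (ih l hl).2.2.1 k (by omega)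
        obtain ⟨h1, h2, h3, h4⟩ := hpick k (V k) hhyp
        have heq : V (k + 1) k = pick k (V k) := by
          rw [hVsucc]; exact Function.update_self _ _ _
        refine ⟨by rw [heq]; exact h1, by rw [heq]; exact h2,
          fun j hj => by rw [heq]; exact h3 j hj, fun l hl => ?_⟩
        rw [heq, hVsucc, Function.update_of_ne (by omega)]
        exact h4 l hl
  -- stability
  have hstab : ∀ m k, k < m → V m k = V (k + 1) k := by
    intro m
    induction m with
    | zero => omega
    | succ m ih =>
      intro k hk
      rcases lt_or_eq_of_le (Nat.lt_succ_iff.1 hk) with hk' | hk'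
      · rw [hVsucc, Function.update_of_ne (by omega)]
        exact ih k hk'
      · subst hk'; rfl
  refine ⟨fun n => V (n + 1) n, fun n => (hGood (n + 1) n (by omega)).1,
    fun n => (hGood (n + 1) n (by omega)).2.1, ?_⟩
  have main : ∀ i j, i < j → Disjoint (closure (V (i + 1) i)) (closure (V (j + 1) j)) := by
    intro i j hij
    have := (hGood (j + 1) j (by omega)).2.2.2 i hij
    rw [hstab (j + 1) i (by omega)] at this
    exact this.symm
  intro i j hij
  rw [← Set.disjoint_iff_inter_eq_empty]
  rcases lt_or_gt_of_ne hij with h | h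
  · exact main i j h
  · exact (main j i h).symm
end

section
/- Let X be a topological space, D a partition of X, Y = X/D the quotient space with the quotient topology, and p : X → Y the quotient map. Then the following conditions are equivalent: (1) p is a locally trivial fibration, i.e. for each y ∈ Y with fiber ω = p⁻¹(y) there exist an open neighborhood V of y and a homeomorphism φ : ω × V → p⁻¹(V) satisfying p(φ(x,v)) = v for all (x,v) ∈ ω × V; (2) the partition D is locally trivial and p is an open map. -/
/-!
Over `V`, a trivialization `φ : F × V ≃ₜ p ⁻¹' V` turns `p` into the projection `F × V → V`, which
is open, and composing `φ` with the inverse of the fibre homeomorphism `φ (·, y)` makes it the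
identity on the fibre over `y`. Conversely, if every slice `φ (ω × {t})` of a chart
`φ : ω × J ≃ₜ U` of the partition is a fibre, then `U` is saturated and `t ↦ p (φ (x, t))` is a
continuous bijection `J → p '' U`; it is open because `p` is, so it identifies `J` with the open
set `p '' U` and turns `φ` into a trivialization over `p '' U`.
-/

universe u

open Set Function TopologicalSpace

section Trivialization

variable {X Y F : Type*} [TopologicalSpace X] [TopologicalSpace Y] [TopologicalSpace F]
  {p : X → Y} {V : Set Y} {φ : F × V ≃ₜ p ⁻¹' V}

theorem snd_symm_apply_of_map_apply (hφ : ∀ z, p (φ z) = z.2) (u : p ⁻¹' V) :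
    ((φ.symm u).2 : Y) = p u := by
  rw [← hφ, φ.apply_symm_apply]

theorem restrictPreimage_eq_snd_comp_symm (hφ : ∀ z, p (φ z) = z.2) :
    V.restrictPreimage p = Prod.snd ∘ φ.symm :=
  funext fun u => Subtype.ext (snd_symm_apply_of_map_apply hφ u).symm

theorem image_univ_prod_singleton_eq_preimage (hφ : ∀ z, p (φ z) = z.2) (t : V) :
    Subtype.val '' (φ '' (univ ×ˢ {t})) = p ⁻¹' {(t : Y)} := by
  ext u
  constructor
  · rintro ⟨_, ⟨z, ⟨-, hz⟩, rfl⟩, rfl⟩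
    exact (hφ z).trans (congrArg Subtype.val hz)
  · intro hu
    have huV : u ∈ p ⁻¹' V := preimage_mono (singleton_subset_iff.2 t.2) hu
    refine ⟨_, ⟨φ.symm ⟨u, huV⟩, ⟨trivial, ?_⟩, φ.apply_symm_apply _⟩, rfl⟩
    exact Subtype.ext ((snd_symm_apply_of_map_apply hφ _).trans hu)

def fiberHomeomorph (hφ : ∀ z, p (φ z) = z.2) {y : Y} (hy : y ∈ V) : F ≃ₜ p ⁻¹' {y} where
  toFun a := ⟨φ (a, ⟨y, hy⟩), hφ _⟩
  invFun b := (φ.symm ⟨b, preimage_mono (singleton_subset_iff.2 hy) b.2⟩).1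
  left_inv a := by simp
  right_inv b := by
    have hb : (φ.symm ⟨b, preimage_mono (singleton_subset_iff.2 hy) b.2⟩).2 = ⟨y, hy⟩ :=
      Subtype.ext ((snd_symm_apply_of_map_apply hφ _).trans b.2)
    ext
    simp [← hb]
  continuous_toFun := by fun_prop
  continuous_invFun := by fun_prop

theorem exists_trivialization_apply_self (hφ : ∀ z, p (φ z) = z.2) {y : Y} (hy : y ∈ V) :
    ∃ ψ : p ⁻¹' {y} × V ≃ₜ p ⁻¹' V,
      (∀ z, p (ψ z) = z.2) ∧ ∀ a, (ψ (a, ⟨y, hy⟩) : X) = a := by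
  refine ⟨((fiberHomeomorph hφ hy).symm.prodCongr (.refl V)).trans φ, fun z => hφ _, fun a => ?_⟩
  exact congrArg Subtype.val ((fiberHomeomorph hφ hy).apply_symm_apply a)

theorem isOpenMap_of_forall_trivialization {E : Y → Type*} [∀ y, TopologicalSpace (E y)]
    (h : ∀ y, ∃ V, IsOpen V ∧ y ∈ V ∧ ∃ φ : E y × V ≃ₜ p ⁻¹' V, ∀ z, p (φ z) = z.2) :
    IsOpenMap p := by
  choose V hV hyV φ hφ using h
  have hcover := IsOpenCover.of_sets hV (eq_univ_of_forall fun y => mem_iUnion.2 ⟨y, hyV y⟩)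
  refine hcover.isOpenMap_iff_restrictPreimage.2 fun y => ?_
  rw [restrictPreimage_eq_snd_comp_symm (hφ y)]
  exact isOpenMap_snd.comp (φ y).symm.isOpenMap

end Trivialization

section Slices

variable {X Y F J : Type*} [TopologicalSpace X] [TopologicalSpace F] [TopologicalSpace J]
  {p : X → Y} {U : Set X} {φ : F × J ≃ₜ U}

theorem exists_apply_eq_of_map_eq
    (hφ : ∀ t, ∃ y, Subtype.val '' (φ '' (univ ×ˢ {t})) = p ⁻¹' {y})
    {a : F} {t : J} {u : X} (hu : p u = p (φ (a, t))) : ∃ b, (φ (b, t) : X) = u := by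
  obtain ⟨y, hy⟩ := hφ t
  have hslice : ∀ b, (φ (b, t) : X) ∈ p ⁻¹' {y} := fun b =>
    hy ▸ ⟨_, ⟨(b, t), ⟨trivial, rfl⟩, rfl⟩, rfl⟩
  obtain ⟨_, ⟨⟨b, t'⟩, ⟨-, ht'⟩, rfl⟩, rfl⟩ : u ∈ Subtype.val '' (φ '' (univ ×ˢ {t})) :=
    hy ▸ hu.trans (hslice a)
  exact ⟨b, by rw [show t' = t from ht']⟩

theorem map_apply_eq_map_apply
    (hφ : ∀ t, ∃ y, Subtype.val '' (φ '' (univ ×ˢ {t})) = p ⁻¹' {y}) (a b : F) (t : J) :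
    p (φ (a, t)) = p (φ (b, t)) := by
  obtain ⟨y, hy⟩ := hφ t
  have hslice : ∀ c, p (φ (c, t)) = y := fun c =>
    (hy ▸ ⟨_, ⟨(c, t), ⟨trivial, rfl⟩, rfl⟩, rfl⟩ : (φ (c, t) : X) ∈ p ⁻¹' {y})
  rw [hslice, hslice]

theorem preimage_image_eq_of_slices
    (hφ : ∀ t, ∃ y, Subtype.val '' (φ '' (univ ×ˢ {t})) = p ⁻¹' {y}) :
    p ⁻¹' (p '' U) = U := by
  refine (subset_preimage_image p U).antisymm' ?_
  rintro u ⟨_, hu', hu⟩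
  obtain ⟨z, hz⟩ := φ.surjective ⟨_, hu'⟩
  obtain ⟨b, rfl⟩ := exists_apply_eq_of_map_eq hφ (a := z.1) (t := z.2) (u := u) (by rw [hz, hu])
  exact (φ (b, z.2)).2

variable (p φ) in
def sliceMap (a₀ : F) (t : J) : p '' U := ⟨p (φ (a₀, t)), mem_image_of_mem p (φ _).2⟩

theorem sliceMap_bijective
    (hφ : ∀ t, ∃ y, Subtype.val '' (φ '' (univ ×ˢ {t})) = p ⁻¹' {y}) (a₀ : F) :
    Bijective (sliceMap p φ a₀) := by
  refine ⟨fun t t' htt' => ?_, ?_⟩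
  · obtain ⟨b, hb⟩ := exists_apply_eq_of_map_eq hφ (congrArg Subtype.val htt').symm
    exact congrArg Prod.snd (φ.injective (Subtype.ext hb))
  · rintro ⟨_, u, hu, rfl⟩
    refine ⟨(φ.symm ⟨u, hu⟩).2, Subtype.ext ?_⟩
    change p (φ (a₀, _)) = p u
    rw [map_apply_eq_map_apply hφ a₀ (φ.symm ⟨u, hu⟩).1, Prod.mk.eta, φ.apply_symm_apply]

variable [TopologicalSpace Y]

theorem continuous_sliceMap (hp : Continuous p) (a₀ : F) : Continuous (sliceMap p φ a₀) := by
  unfold sliceMap; fun_prop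

theorem isOpenMap_sliceMap (hpo : IsOpenMap p) (hU : IsOpen U)
    (hφ : ∀ t, ∃ y, Subtype.val '' (φ '' (univ ×ˢ {t})) = p ⁻¹' {y}) (a₀ : F) :
    IsOpenMap (sliceMap p φ a₀) := by
  intro O hO
  rw [(hpo U hU).isOpenEmbedding_subtypeVal.isOpen_iff_image_isOpen]
  have himage :
      Subtype.val '' (sliceMap p φ a₀ '' O) = p '' (Subtype.val '' (φ '' (univ ×ˢ O))) := by
    ext v
    constructor
    · rintro ⟨_, ⟨t, ht, rfl⟩, rfl⟩
      exact ⟨_, ⟨_, ⟨(a₀, t), ⟨trivial, ht⟩, rfl⟩, rfl⟩, rfl⟩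
    · rintro ⟨_, ⟨_, ⟨⟨a, t⟩, ⟨-, ht⟩, rfl⟩, rfl⟩, rfl⟩
      exact ⟨_, ⟨t, ht, rfl⟩, map_apply_eq_map_apply hφ a₀ a t⟩
  rw [himage]
  exact hpo _ (hU.isOpenMap_subtype_val _ (φ.isOpenMap _ (isOpen_univ.prod hO)))

theorem exists_trivialization_of_slices (hp : Continuous p) (hpo : IsOpenMap p) (hU : IsOpen U)
    (hφ : ∀ t, ∃ y, Subtype.val '' (φ '' (univ ×ˢ {t})) = p ⁻¹' {y}) (a₀ : F) :
    ∃ ψ : F × p '' U ≃ₜ p ⁻¹' (p '' U), ∀ z, p (ψ z) = z.2 := by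
  let q : J ≃ₜ p '' U :=
    (Equiv.ofBijective _ (sliceMap_bijective hφ a₀)).toHomeomorphOfContinuousOpen
      (continuous_sliceMap hp a₀) (isOpenMap_sliceMap hpo hU hφ a₀)
  refine ⟨((Homeomorph.refl F).prodCongr q.symm).trans
    (φ.trans (Homeomorph.setCongr (preimage_image_eq_of_slices hφ).symm)), fun ⟨a, v⟩ => ?_⟩
  change p (φ (a, q.symm v)) = v
  rw [map_apply_eq_map_apply hφ a a₀]
  exact congrArg Subtype.val (q.apply_symm_apply v)

end Slices

/-- The partition `D` is the setoid `s`; its elements are the fibres of `p = Quotient.mk s`. -/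
theorem stmt12 {X : Type u} [TopologicalSpace X] (s : Setoid X) :
    -- (1) p is a locally trivial fibration
    (∀ y : Quotient s, ∃ V : Set (Quotient s), IsOpen V ∧ y ∈ V ∧
      ∃ φ : (↥(Quotient.mk s ⁻¹' ({y} : Set (Quotient s))) × ↥V) ≃ₜ
              ↥(Quotient.mk s ⁻¹' V),
        ∀ z, Quotient.mk s ((φ z : X)) = (z.2 : Quotient s))
    ↔
    -- (2) the partition is locally trivial ...
    ((∀ x : X, ∃ (J : TopCat.{u}) (t0 : J) (U : Set X), IsOpen U ∧
        Quotient.mk s ⁻¹' {Quotient.mk s x} ⊆ U ∧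
        ∃ φ : (↥(Quotient.mk s ⁻¹' {Quotient.mk s x}) × J) ≃ₜ ↥U,
          (∀ t : J, ∃ x' : X,
            Subtype.val '' (⇑φ '' (Set.univ ×ˢ ({t} : Set J))) =
              Quotient.mk s ⁻¹' {Quotient.mk s x'}) ∧
          (∀ a : ↥(Quotient.mk s ⁻¹' {Quotient.mk s x}), (φ (a, t0) : X) = (a : X)))
      -- ... and p is an open map
      ∧ IsOpenMap (Quotient.mk s)) := by
  have hp : Continuous (Quotient.mk s) := continuous_quotient_mk'
  constructor
  · intro h
    refine ⟨fun x => ?_, isOpenMap_of_forall_trivialization h⟩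
    obtain ⟨V, hV, hxV, φ, hφ⟩ := h (Quotient.mk s x)
    obtain ⟨ψ, hψ, hψx⟩ := exists_trivialization_apply_self hφ hxV
    refine ⟨TopCat.of V, ⟨_, hxV⟩, _, hV.preimage hp, preimage_mono (singleton_subset_iff.2 hxV),
      ψ, fun t => ?_, hψx⟩
    obtain ⟨x', hx'⟩ := Quotient.mk_surjective t.1
    exact ⟨x', hx' ▸ image_univ_prod_singleton_eq_preimage hψ t⟩
  · rintro ⟨hloc, hopen⟩ y
    obtain ⟨x, rfl⟩ := Quotient.mk_surjective y
    obtain ⟨J, -, U, hU, hxU, φ, hslices, -⟩ := hloc x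
    refine ⟨_, hopen U hU, mem_image_of_mem _ (hxU rfl), ?_⟩
    exact exists_trivialization_of_slices hp hopen hU
      (fun t => (hslices t).elim fun _ h => ⟨_, h⟩) ⟨x, rfl⟩
end

section
/- Let X be a topological space, D a partition of X, Y = X/D the quotient space with the quotient topology, and p : X → Y the quotient map. For ω ∈ D and y = p(ω), define bnd(ω) = ⋂_N closure(S(N)) where N runs over all open neighborhoods of ω in X, bnds(ω) = ⋂_{N_S} closure(N_S) where N_S runs over all saturated open neighborhoods of ω in X, and bnd(y) = ⋂_V closure(V) where V runs over all neighborhoods of y in Y. Then bnd(ω) ⊆ bnds(ω) ⊆ p⁻¹(bnd(y)). Moreover, if p is an open map, then bnd(ω) = bnds(ω) = p⁻¹(bnd(y)) and p(bnds(ω)) = bnd(y). -/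
/-- for a partition of `X` (encoded as a setoid `s`) with quotient map
`p = Quotient.mk s`, an element `ω = p⁻¹{p x}` and `y = p x`, the sets
`bnd(ω) = ⋂ closure (S N)` (over open neighborhoods `N` of `ω`),
`bnds(ω) = ⋂ closure N_S` (over saturated open neighborhoods `N_S` of `ω`), and
`bnd(y) = ⋂ closure V` (over neighborhoods `V` of `y`) satisfy
`bnd(ω) ⊆ bnds(ω) ⊆ p⁻¹(bnd y)`, with all inclusions equalities (and `p(bnds ω) = bnd y`)
when `p` is an open map. -/
theorem stmt13 {X : Type*} [TopologicalSpace X] (s : Setoid X) (x : X) :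
    let p : X → Quotient s := Quotient.mk s
    let ω : Set X := p ⁻¹' {p x}
    let bndX : Set X :=
      ⋂ N ∈ {N : Set X | IsOpen N ∧ ω ⊆ N}, closure (p ⁻¹' (p '' N))
    let bndsX : Set X :=
      ⋂ N ∈ {N : Set X | IsOpen N ∧ ω ⊆ N ∧ N = p ⁻¹' (p '' N)}, closure N
    let bndY : Set (Quotient s) := ⋂ V ∈ nhds (p x), closure V
    (bndX ⊆ bndsX ∧ bndsX ⊆ p ⁻¹' bndY) ∧
    (IsOpenMap p →
      bndX = bndsX ∧ bndsX = p ⁻¹' bndY ∧ p '' bndsX = bndY) := by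
  intro p ω bndX bndsX bndY
  have hcont : Continuous p := continuous_quotient_mk'
  have hsurj : Function.Surjective p := fun q => q.exists_rep
  -- bndX ⊆ bndsX
  have h1 : bndX ⊆ bndsX := by
    intro z hz
    simp only [bndsX, Set.mem_iInter] at *
    intro N hN
    obtain ⟨hNo, hNω, hNsat⟩ := hN
    have := (Set.mem_iInter₂.1 hz) N ⟨hNo, hNω⟩
    rwa [← hNsat] at this
  -- bndsX ⊆ p⁻¹ bndY
  have h2 : bndsX ⊆ p ⁻¹' bndY := by
    intro z hz
    simp only [bndY, Set.mem_preimage, Set.mem_iInter]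
    intro V hV
    obtain ⟨W, hWV, hWo, hxW⟩ := mem_nhds_iff.1 hV
    have hsat : p ⁻¹' W = p ⁻¹' (p '' (p ⁻¹' W)) := by
      rw [Set.image_preimage_eq _ hsurj]
    have hzW : z ∈ closure (p ⁻¹' W) :=
      (Set.mem_iInter₂.1 hz) _ ⟨hWo.preimage hcont, fun a ha => show p a ∈ W by { rw [Set.mem_preimage, Set.mem_singleton_iff] at ha; rw [ha]; exact hxW }, hsat⟩
    have : p z ∈ closure W := by
      have := (hcont.closure_preimage_subset W) hzW
      exact this
    exact closure_mono hWV this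
  refine ⟨⟨h1, h2⟩, fun hopen => ?_⟩
  have h3 : bndsX ⊆ bndX := by
    intro z hz
    simp only [bndX, Set.mem_iInter]
    intro N hN
    obtain ⟨hNo, hNω⟩ := hN
    have : p ⁻¹' (p '' N) ∈ {N : Set X | IsOpen N ∧ ω ⊆ N ∧ N = p ⁻¹' (p '' N)} := by
      refine ⟨(hopen N hNo).preimage hcont, fun a ha => Set.subset_preimage_image p N (hNω ha), ?_⟩
      rw [Set.image_preimage_eq _ hsurj]
    exact (Set.mem_iInter₂.1 hz) _ this
  have h4 : p ⁻¹' bndY ⊆ bndsX := by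
    intro z hz
    simp only [bndsX, Set.mem_iInter]
    intro N hN
    obtain ⟨hNo, hNω, hNsat⟩ := hN
    have hxN : x ∈ N := hNω rfl
    have hpN : p '' N ∈ nhds (p x) :=
      (hopen N hNo).mem_nhds ⟨x, hxN, rfl⟩
    have : p z ∈ closure (p '' N) := (Set.mem_iInter₂.1 hz) _ hpN
    have := hopen.preimage_closure_subset_closure_preimage (Set.mem_preimage.2 this)
    rwa [← hNsat] at this
  have heq : bndsX = p ⁻¹' bndY := h4.antisymm' h2
  refine ⟨h1.antisymm h3, heq, ?_⟩
  rw [heq, Set.image_preimage_eq _ hsurj]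
end

section
/- Let J = (a,b)×{0} ⊂ ℝ² be an open horizontal interval (a < b, possibly a = −∞ or b = +∞), let N = J ∪ (ℝ×(0,+∞)), and let U be an open neighborhood of J in N (with the subspace topology from ℝ²). Then there exists a half open trapezoid T ⊆ U with base J; that is, there exist d > 0 and continuous functions α, β : (0,d] → ℝ with α(y) < β(y) for all y ∈ (0,d], lim_{y→0+} α(y) = a and lim_{y→0+} β(y) = b, such that {(x,y) : α(y) ≤ x ≤ β(y), 0 < y ≤ d} ⊆ U. -/
open Set Filter Topology

noncomputable def stmt14rho (ε : ℕ → ℝ) (n : ℕ) (y : ℝ) : ℝ :=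
  max 0 (min 1 ((ε n - y) / (ε n - ε (n + 1))))

noncomputable def stmt14G (A ε : ℕ → ℝ) (y : ℝ) : ℝ :=
  A 0 - ∑' n, (A n - A (n + 1)) * stmt14rho ε n y

section lemmas
variable {A ε : ℕ → ℝ} {n k m : ℕ} {y : ℝ}

lemma stmt14rho_nonneg : 0 ≤ stmt14rho ε n y := le_max_left _ _

lemma stmt14rho_le_one : stmt14rho ε n y ≤ 1 :=
  max_le zero_le_one (min_le_left _ _)

lemma stmt14rho_eq_zero (hd : ε (n + 1) < ε n) (h : ε n ≤ y) : stmt14rho ε n y = 0 := by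
  have h1 : (ε n - y) / (ε n - ε (n + 1)) ≤ 0 :=
    div_nonpos_iff.2 (Or.inr ⟨by linarith, by linarith⟩)
  have : min 1 ((ε n - y) / (ε n - ε (n + 1))) ≤ 0 := le_trans (min_le_right _ _) h1
  exact max_eq_left this

lemma stmt14rho_eq_one (hd : ε (n + 1) < ε n) (h : y ≤ ε (n + 1)) : stmt14rho ε n y = 1 := by
  have h1 : (1 : ℝ) ≤ (ε n - y) / (ε n - ε (n + 1)) :=
    (one_le_div (by linarith)).2 (by linarith)
  rw [stmt14rho, min_eq_left h1, max_eq_right zero_le_one]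

lemma stmt14rho_continuous : Continuous (stmt14rho ε n) := by
  unfold stmt14rho
  fun_prop

lemma stmt14G_eq_sum (hd : ∀ n, ε (n + 1) < ε n) (hk : ε k < y) :
    stmt14G A ε y = A 0 - ∑ n ∈ Finset.range k, (A n - A (n + 1)) * stmt14rho ε n y := by
  have hanti : Antitone ε := antitone_nat_of_succ_le fun n => (hd n).le
  rw [stmt14G, tsum_eq_sum]
  intro n hn
  rw [stmt14rho_eq_zero (hd n)
    (le_of_lt (lt_of_le_of_lt (hanti (le_of_not_gt (fun h => hn (Finset.mem_range.2 h)))) hk))]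
  ring

lemma stmt14G_ge (hA : Antitone A) (hd : ∀ n, ε (n + 1) < ε n) (hk : ε k < y) :
    A k ≤ stmt14G A ε y := by
  rw [stmt14G_eq_sum hd hk]
  have h1 : ∑ n ∈ Finset.range k, (A n - A (n + 1)) * stmt14rho ε n y
      ≤ ∑ n ∈ Finset.range k, (A n - A (n + 1)) := by
    apply Finset.sum_le_sum
    intro i _
    exact mul_le_of_le_one_right (by simpa using hA (Nat.le_succ i)) stmt14rho_le_one
  have h2 : ∑ n ∈ Finset.range k, (A n - A (n + 1)) = A 0 - A k := Finset.sum_range_sub' A k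
  linarith

lemma stmt14G_le (hA : Antitone A) (hd : ∀ n, ε (n + 1) < ε n) (hm : y ≤ ε m) (hk : ε k < y) :
    stmt14G A ε y ≤ A m := by
  have hanti : Antitone ε := antitone_nat_of_succ_le fun n => (hd n).le
  have hmk : m ≤ k := by
    by_contra h
    exact absurd (lt_of_lt_of_le hk (le_trans hm (hanti (le_of_not_ge h)))) (lt_irrefl _)
  rw [stmt14G_eq_sum hd hk]
  have h1 : ∑ n ∈ Finset.range m, (A n - A (n + 1))
      ≤ ∑ n ∈ Finset.range k, (A n - A (n + 1)) * stmt14rho ε n y := by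
    have heq : ∀ n ∈ Finset.range m, (A n - A (n + 1)) = (A n - A (n + 1)) * stmt14rho ε n y := by
      intro n hn
      rw [stmt14rho_eq_one (hd n) (le_trans hm (hanti (Finset.mem_range.1 hn)))]
      ring
    rw [Finset.sum_congr rfl heq]
    apply Finset.sum_le_sum_of_subset_of_nonneg (Finset.range_subset_range.2 hmk)
    intro i _ _
    exact mul_nonneg (by simpa using hA (Nat.le_succ i)) stmt14rho_nonneg
  have h2 : ∑ n ∈ Finset.range m, (A n - A (n + 1)) = A 0 - A m := Finset.sum_range_sub' A m
  linarith

lemma stmt14G_continuousAt (hd : ∀ n, ε (n + 1) < ε n) (hk : ε k < y) :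
    ContinuousAt (stmt14G A ε) y := by
  have hF : ContinuousAt (fun y' => A 0 - ∑ n ∈ Finset.range k,
      (A n - A (n + 1)) * stmt14rho ε n y') y := by
    apply ContinuousAt.sub continuousAt_const
    exact (continuous_finset_sum _ fun i _ =>
      continuous_const.mul stmt14rho_continuous).continuousAt
  apply hF.congr
  filter_upwards [Ioi_mem_nhds hk] with y' hy'
  exact (stmt14G_eq_sum hd hy').symm

end lemmas

lemma stmt14approx (a : EReal) (x₀ : ℝ) (ha : a < (x₀ : EReal)) :
    ∃ A : ℕ → ℝ, Antitone A ∧ (∀ n, a < (A n : EReal)) ∧ A 0 < x₀ ∧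
      ∀ c : EReal, a < c → ∃ n, (A n : EReal) < c := by
  induction a using EReal.rec with
  | bot =>
    refine ⟨fun n => x₀ - 1 - n, ?_, fun n => EReal.bot_lt_coe _, by norm_num, ?_⟩
    · intro p q hpq
      have : (p : ℝ) ≤ q := Nat.cast_le.2 hpq
      simp only
      linarith
    · intro c hc
      induction c using EReal.rec with
      | bot => exact absurd hc (lt_irrefl _)
      | coe c' =>
        obtain ⟨n, hn⟩ := exists_nat_gt (x₀ - 1 - c')
        exact ⟨n, EReal.coe_lt_coe_iff.2 (show x₀ - 1 - (n:ℝ) < c' by linarith)⟩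
      | top => exact ⟨0, EReal.coe_lt_top _⟩
  | coe a' =>
    have hax : a' < x₀ := EReal.coe_lt_coe_iff.1 ha
    refine ⟨fun n => a' + (x₀ - a') / (n + 2), ?_, ?_, ?_, ?_⟩
    · intro p q hpq
      have h1 : ((p : ℝ) + 2) ≤ (q : ℝ) + 2 := by
        have : (p : ℝ) ≤ q := Nat.cast_le.2 hpq
        linarith
      have := div_le_div_of_nonneg_left (by linarith : (0:ℝ) ≤ x₀ - a')
        (by positivity : (0:ℝ) < (p : ℝ) + 2) h1
      simp only
      linarith
    · intro n
      have : (0:ℝ) < (x₀ - a') / ((n:ℝ) + 2) := div_pos (by linarith) (by positivity)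
      exact EReal.coe_lt_coe_iff.2 (show a' < a' + (x₀ - a') / ((n:ℝ) + 2) by linarith)
    · show a' + (x₀ - a') / (((0:ℕ):ℝ) + 2) < x₀
      push_cast
      linarith
    · intro c hc
      induction c using EReal.rec with
      | bot => exact absurd hc (by simp)
      | coe c' =>
        have hac : a' < c' := EReal.coe_lt_coe_iff.1 hc
        obtain ⟨n, hn⟩ := exists_nat_gt ((x₀ - a') / (c' - a'))
        refine ⟨n, EReal.coe_lt_coe_iff.2 ?_⟩
        have h1 : x₀ - a' < n * (c' - a') := (div_lt_iff₀ (by linarith)).1 hn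
        have h2 : (x₀ - a') / ((n : ℝ) + 2) < c' - a' := by
          rw [div_lt_iff₀ (by positivity)]
          nlinarith [hac]
        show a' + (x₀ - a') / ((n:ℝ) + 2) < c'
        linarith
      | top => exact ⟨0, EReal.coe_lt_top _⟩
  | top => exact absurd ha (not_lt.2 le_top)

/-- if `J = (a,b) × {0}` (with `a < b` in the extended reals, so possibly
infinite), `N = J ∪ (ℝ × (0,∞))`, and `U` is an open neighborhood of `J` in `N`, then
there is a half open trapezoid with base `J` contained in `U`: that is, there are `d > 0`
and continuous functions `α, β : (0,d] → ℝ` with `α < β`, `α → a` and `β → b` as `y → 0+`,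
whose trapezoid `{(x,y) : 0 < y ≤ d, α y ≤ x ≤ β y}` lies in `U`. -/
theorem stmt14 (a b : EReal) (hab : a < b)
    (U : Set (ℝ × ℝ))
    (hUopen : ∃ O : Set (ℝ × ℝ), IsOpen O ∧
      U = O ∩ ({p : ℝ × ℝ | (↑p.1 : EReal) ∈ Set.Ioo a b ∧ p.2 = 0} ∪
                {p : ℝ × ℝ | 0 < p.2}))
    (hJU : {p : ℝ × ℝ | (↑p.1 : EReal) ∈ Set.Ioo a b ∧ p.2 = 0} ⊆ U) :
    ∃ (d : ℝ), 0 < d ∧ ∃ (α β : ℝ → ℝ),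
      ContinuousOn α (Set.Ioc 0 d) ∧ ContinuousOn β (Set.Ioc 0 d) ∧
      (∀ y ∈ Set.Ioc (0 : ℝ) d, α y < β y) ∧
      Filter.Tendsto (fun y => ((α y : ℝ) : EReal)) (nhdsWithin 0 (Set.Ioi 0)) (nhds a) ∧
      Filter.Tendsto (fun y => ((β y : ℝ) : EReal)) (nhdsWithin 0 (Set.Ioi 0)) (nhds b) ∧
      {p : ℝ × ℝ | p.2 ∈ Set.Ioc (0 : ℝ) d ∧ p.1 ∈ Set.Icc (α p.2) (β p.2)} ⊆ U := by
  obtain ⟨O, hOopen, rfl⟩ := hUopen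
  obtain ⟨x₀, hax, hxb⟩ := EReal.exists_between_coe_real hab
  obtain ⟨A, hAanti, hAgt, hA0, hAc⟩ := stmt14approx a x₀ hax
  have hbx : -b < ((-x₀ : ℝ) : EReal) := by
    rw [EReal.coe_neg]; exact EReal.neg_lt_neg_iff.2 hxb
  obtain ⟨C, hCanti, hCgt, hC0, hCc⟩ := stmt14approx (-b) (-x₀) hbx
  set B : ℕ → ℝ := fun n => -C n with hB
  have hBlt : ∀ n, (B n : EReal) < b := by
    intro n
    show ((-C n : ℝ) : EReal) < b
    rw [EReal.coe_neg]
    exact EReal.neg_lt_comm.2 (hCgt n)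
  -- compactness: squares inside O
  have key : ∀ n, ∃ τ > 0, Icc (A (n+1)) (B (n+1)) ×ˢ Icc 0 τ ⊆ O := by
    intro n
    have hK : IsCompact ((Icc (A (n+1)) (B (n+1)) : Set ℝ) ×ˢ ({0} : Set ℝ)) :=
      isCompact_Icc.prod isCompact_singleton
    have hKO : (Icc (A (n+1)) (B (n+1)) : Set ℝ) ×ˢ ({0} : Set ℝ) ⊆ O := by
      intro p hp
      have hp2 : p.2 = 0 := hp.2
      have hmem : p ∈ {p : ℝ × ℝ | (↑p.1 : EReal) ∈ Set.Ioo a b ∧ p.2 = 0} :=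
        ⟨⟨lt_of_lt_of_le (hAgt (n+1)) (EReal.coe_le_coe_iff.2 hp.1.1),
          lt_of_le_of_lt (EReal.coe_le_coe_iff.2 hp.1.2) (hBlt (n+1))⟩, hp2⟩
      exact (hJU hmem).1
    obtain ⟨δ, hδpos, hδ⟩ := hK.exists_thickening_subset_open hOopen hKO
    refine ⟨δ/2, by linarith, ?_⟩
    intro p hp
    apply hδ
    rw [Metric.mem_thickening_iff]
    refine ⟨(p.1, 0), ⟨hp.1, rfl⟩, ?_⟩
    have hd : dist p ((p.1, 0) : ℝ × ℝ) = |p.2| := by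
      simp [Prod.dist_eq, Real.dist_eq]
    rw [hd, abs_of_nonneg hp.2.1]
    linarith [hp.2.2]
  choose τ hτpos hτsub using key
  -- the heights ε
  let ε : ℕ → ℝ := fun n => Nat.rec (τ 0) (fun n ih => min (τ (n+1)) ih / 2) n
  have hεs : ∀ n, ε (n+1) = min (τ (n+1)) (ε n) / 2 := fun n => rfl
  have hεpos : ∀ n, 0 < ε n := by
    intro n
    induction n with
    | zero => exact hτpos 0
    | succ n ih =>
      rw [hεs]
      have := lt_min (hτpos (n+1)) ih
      linarith
  have hετ : ∀ n, ε n ≤ τ n := by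
    intro n
    cases n with
    | zero => exact le_refl _
    | succ n =>
      rw [hεs]
      have h1 : min (τ (n+1)) (ε n) ≤ τ (n+1) := min_le_left _ _
      have h2 := lt_min (hτpos (n+1)) (hεpos n)
      linarith
  have hεhalf : ∀ n, ε (n+1) ≤ ε n / 2 := by
    intro n
    rw [hεs]
    have := min_le_right (τ (n+1)) (ε n)
    linarith
  have hεdec : ∀ n, ε (n+1) < ε n := fun n =>
    lt_of_le_of_lt (hεhalf n) (by linarith [hεpos n])
  have hεsmall : ∀ y : ℝ, 0 < y → ∃ k, ε k < y := by
    intro y hy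
    have hb : ∀ n, ε n ≤ ε 0 / 2 ^ n := by
      intro n
      induction n with
      | zero => simp
      | succ n ih =>
        rw [pow_succ, ← div_div]
        linarith [hεhalf n, ih]
    obtain ⟨k, hk⟩ := pow_unbounded_of_one_lt (ε 0 / y) (one_lt_two (α := ℝ))
    refine ⟨k, lt_of_le_of_lt (hb k) ?_⟩
    rw [div_lt_iff₀ (by positivity)]
    rw [div_lt_iff₀ hy] at hk
    nlinarith [hεpos 0]
  set d := ε 0 with hd0
  set α : ℝ → ℝ := stmt14G A ε with hα
  set β : ℝ → ℝ := fun y => - stmt14G C ε y with hβ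
  have hβle : ∀ {y : ℝ} {m : ℕ}, ε (m+1) < y → β y ≤ B (m+1) := by
    intro y m h
    have := stmt14G_ge (k := m+1) (y := y) hCanti hεdec h
    show -stmt14G C ε y ≤ -C (m+1)
    linarith
  have hfind : ∀ y ∈ Ioc (0:ℝ) d, ∃ m, ε (m+1) < y ∧ y ≤ ε m := by
    intro y hy
    have hex : ∃ n, ε (n+1) < y := by
      obtain ⟨k, hk⟩ := hεsmall y hy.1
      exact ⟨k, lt_of_lt_of_le (hεdec k) hk.le⟩
    refine ⟨Nat.find hex, Nat.find_spec hex, ?_⟩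
    rcases Nat.eq_zero_or_pos (Nat.find hex) with h | h
    · rw [h]; exact hy.2
    · obtain ⟨k, hk⟩ := Nat.exists_eq_succ_of_ne_zero (Nat.pos_iff_ne_zero.1 h)
      rw [hk]
      exact le_of_not_gt (Nat.find_min hex (by omega))
  refine ⟨d, hεpos 0, α, β, ?_, ?_, ?_, ?_, ?_, ?_⟩
  · intro y hy
    obtain ⟨k, hk⟩ := hεsmall y hy.1
    exact (stmt14G_continuousAt hεdec hk).continuousWithinAt
  · intro y hy
    obtain ⟨k, hk⟩ := hεsmall y hy.1
    exact ((stmt14G_continuousAt hεdec hk).neg).continuousWithinAt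
  · intro y hy
    obtain ⟨k, hk⟩ := hεsmall y hy.1
    have h1 : α y ≤ A 0 := stmt14G_le hAanti hεdec hy.2 hk
    have h2 : stmt14G C ε y ≤ C 0 := stmt14G_le hCanti hεdec hy.2 hk
    show α y < -stmt14G C ε y
    linarith
  · rw [tendsto_order]
    constructor
    · intro c hc
      filter_upwards [Ioc_mem_nhdsGT_of_mem (left_mem_Ico.2 (hεpos 0))] with y hy
      obtain ⟨k, hk⟩ := hεsmall y hy.1
      exact lt_trans hc (lt_of_lt_of_le (hAgt k)
        (EReal.coe_le_coe_iff.2 (stmt14G_ge hAanti hεdec hk)))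
    · intro c hc
      obtain ⟨mi, hmi⟩ := hAc c hc
      filter_upwards [Ioc_mem_nhdsGT_of_mem (left_mem_Ico.2 (hεpos mi))] with y hy
      obtain ⟨k, hk⟩ := hεsmall y hy.1
      exact lt_of_le_of_lt (EReal.coe_le_coe_iff.2 (stmt14G_le hAanti hεdec hy.2 hk)) hmi
  · rw [tendsto_order]
    constructor
    · intro c hc
      obtain ⟨mi, hmi⟩ := hCc (-c) (by rwa [EReal.neg_lt_neg_iff])
      filter_upwards [Ioc_mem_nhdsGT_of_mem (left_mem_Ico.2 (hεpos mi))] with y hy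
      obtain ⟨k, hk⟩ := hεsmall y hy.1
      have h1 : stmt14G C ε y ≤ C mi := stmt14G_le hCanti hεdec hy.2 hk
      have h2 : ((stmt14G C ε y : ℝ) : EReal) < -c :=
        lt_of_le_of_lt (EReal.coe_le_coe_iff.2 h1) hmi
      have h3 : (β y : EReal) = -((stmt14G C ε y : ℝ) : EReal) := by
        show ((-stmt14G C ε y : ℝ) : EReal) = _
        rw [EReal.coe_neg]
      rw [h3, show c = -(-c) by rw [neg_neg]]
      exact EReal.neg_lt_neg_iff.2 h2
    · intro c hc
      filter_upwards [Ioc_mem_nhdsGT_of_mem (left_mem_Ico.2 (hεpos 0))] with y hy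
      obtain ⟨k, hk⟩ := hεsmall y hy.1
      have h1 : C k ≤ stmt14G C ε y := stmt14G_ge hCanti hεdec hk
      have h2 : β y ≤ -C k := by show -stmt14G C ε y ≤ -C k; linarith
      have h3 : ((-C k : ℝ) : EReal) < b := by
        rw [EReal.coe_neg]; exact EReal.neg_lt_comm.2 (hCgt k)
      exact lt_trans (lt_of_le_of_lt (EReal.coe_le_coe_iff.2 h2) h3) hc
  · rintro ⟨x, y⟩ ⟨hy, hx⟩
    obtain ⟨m, hm1, hm2⟩ := hfind y hy
    refine ⟨?_, Or.inr hy.1⟩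
    apply hτsub m
    refine ⟨⟨le_trans (stmt14G_ge hAanti hεdec hm1) hx.1, le_trans hx.2 (hβle hm1)⟩,
      hy.1.le, le_trans hm2 (hετ m)⟩
end

section
/- Let k ≥ 1, let Δ_k = {(y₁,…,y_k) ∈ ℝᵏ : y₁ < y₂ < ⋯ < y_k}, and let q₁ < q₂ < ⋯ < q_k be real numbers. Then there exists a C^∞ function u_k : ℝ × Δ_k → ℝ with the following properties: (a) for each (y₁,…,y_k) ∈ Δ_k, the map x ↦ u_k(x; y₁,…,y_k) is an orientation preserving (i.e. strictly increasing) homeomorphism of ℝ onto ℝ; (b) u_k(x; q₁,…,q_k) = x for all x ∈ ℝ; (c) u_k(y_i; y₁,…,y_k) = q_i for i = 1,…,k and all (y₁,…,y_k) ∈ Δ_k. -/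
/-!
Put `u(x; y) = x + (q₀ - y₀) + ∑ᵢ gᵢ(x)`, where the correction `gᵢ` attached to the gap
`[yᵢ, yᵢ₊₁]` vanishes left of `yᵢ`, equals `(qᵢ₊₁ - qᵢ) - (yᵢ₊₁ - yᵢ)` right of `yᵢ₊₁` and has
derivative `> -1`. At `x = y_j` the sum telescopes to `q_j - q₀ - (y_j - y₀)`, so `u(y_j) = q_j`,
and every `gᵢ` vanishes when `y = q`. Each `gᵢ` is a multiple of an integrated plateau bump
supported in `[yᵢ, yᵢ₊₁]`, with a plateau width depending smoothly on `y`, which gives smoothness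
on `ℝ × Δ_k`. The supports of the bumps are disjoint, so `∂ₓu > 0`; and `u(·; y)` is a translation
near `±∞`, hence onto.
-/

open Real Set Filter

noncomputable section

def smoothTransitionIntegral (t : ℝ) : ℝ := ∫ s in (0 : ℝ)..t, smoothTransition s

theorem hasDerivAt_smoothTransitionIntegral (t : ℝ) :
    HasDerivAt smoothTransitionIntegral (smoothTransition t) t :=
  intervalIntegral.integral_hasDerivAt_right
    (smoothTransition.continuous.intervalIntegrable _ _)
    (smoothTransition.continuous.stronglyMeasurableAtFilter _ _) smoothTransition.continuousAt

theorem contDiff_smoothTransitionIntegral {n : ℕ∞} : ContDiff ℝ n smoothTransitionIntegral := by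
  have hderiv : deriv smoothTransitionIntegral = smoothTransition :=
    funext fun t => (hasDerivAt_smoothTransitionIntegral t).deriv
  refine (contDiff_infty_iff_deriv.2
    ⟨fun t => (hasDerivAt_smoothTransitionIntegral t).differentiableAt, ?_⟩).of_le
    (mod_cast le_top)
  rw [hderiv]
  exact smoothTransition.contDiff

theorem smoothTransitionIntegral_of_nonpos {t : ℝ} (ht : t ≤ 0) :
    smoothTransitionIntegral t = 0 := by
  rw [smoothTransitionIntegral, intervalIntegral.integral_congr (g := fun _ => 0),
    intervalIntegral.integral_zero]
  intro s hs
  rw [uIcc_of_ge ht] at hs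
  exact smoothTransition.zero_of_nonpos hs.2

theorem smoothTransitionIntegral_of_one_le {t : ℝ} (ht : 1 ≤ t) :
    smoothTransitionIntegral t = smoothTransitionIntegral 1 + (t - 1) := by
  rw [smoothTransitionIntegral, smoothTransitionIntegral,
    ← intervalIntegral.integral_add_adjacent_intervals
      (smoothTransition.continuous.intervalIntegrable 0 1)
      (smoothTransition.continuous.intervalIntegrable 1 t),
    intervalIntegral.integral_congr (a := 1) (g := fun _ => 1), intervalIntegral.integral_const,
    smul_eq_mul, mul_one]
  intro s hs
  rw [uIcc_of_le ht] at hs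
  exact smoothTransition.one_of_one_le hs.1

/-- Its derivative `smoothTransition ((x - a) / ε) - smoothTransition ((x - b + ε) / ε)` is a
plateau: it rises from `0` to `1` on `[a, a + ε]` and falls back to `0` on `[b - ε, b]`. -/
def smoothRamp (ε a b x : ℝ) : ℝ :=
  ε * (smoothTransitionIntegral ((x - a) / ε) - smoothTransitionIntegral ((x - b + ε) / ε))

section smoothRamp

variable {ε a b x : ℝ}

theorem smoothRamp_of_le (hε : 0 < ε) (hεab : ε ≤ b - a) (hx : x ≤ a) :
    smoothRamp ε a b x = 0 := by
  rw [smoothRamp, smoothTransitionIntegral_of_nonpos (div_nonpos_of_nonpos_of_nonneg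
      (by linarith) hε.le), smoothTransitionIntegral_of_nonpos (div_nonpos_of_nonpos_of_nonneg
      (by linarith) hε.le), sub_self, mul_zero]

theorem smoothRamp_of_ge (hε : 0 < ε) (hεab : ε ≤ b - a) (hx : b ≤ x) :
    smoothRamp ε a b x = b - a - ε := by
  have hA : 1 ≤ (x - a) / ε := by rw [le_div_iff₀ hε]; linarith
  have hB : 1 ≤ (x - b + ε) / ε := by rw [le_div_iff₀ hε]; linarith
  rw [smoothRamp, smoothTransitionIntegral_of_one_le hA, smoothTransitionIntegral_of_one_le hB]
  field_simp
  ring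

theorem hasDerivAt_smoothRamp (hε : ε ≠ 0) :
    HasDerivAt (smoothRamp ε a b)
      (smoothTransition ((x - a) / ε) - smoothTransition ((x - b + ε) / ε)) x := by
  have hA : HasDerivAt (fun x => (x - a) / ε) (1 / ε) x :=
    ((hasDerivAt_id x).sub_const a).div_const ε
  have hB : HasDerivAt (fun x => (x - b + ε) / ε) (1 / ε) x :=
    (((hasDerivAt_id x).sub_const b).add_const ε).div_const ε
  exact ((((hasDerivAt_smoothTransitionIntegral _).comp x hA).fun_sub
    ((hasDerivAt_smoothTransitionIntegral _).comp x hB)).const_mul ε).congr_deriv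
    (by field_simp)

theorem deriv_smoothRamp_mem_Icc (hε : 0 < ε) (hεab : ε ≤ b - a) :
    deriv (smoothRamp ε a b) x ∈ Icc 0 1 := by
  rw [(hasDerivAt_smoothRamp hε.ne').deriv]
  have hle : (x - b + ε) / ε ≤ (x - a) / ε := by gcongr; linarith
  exact ⟨sub_nonneg.2 (smoothTransition.monotone hle), by
    linarith [smoothTransition.le_one ((x - a) / ε), smoothTransition.nonneg ((x - b + ε) / ε)]⟩

theorem deriv_smoothRamp_of_notMem_Ioo (hε : 0 < ε) (hεab : ε ≤ b - a) (hx : x ∉ Ioo a b) :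
    deriv (smoothRamp ε a b) x = 0 := by
  rw [(hasDerivAt_smoothRamp hε.ne').deriv]
  rcases le_or_gt x a with hxa | hax
  · rw [smoothTransition.zero_of_nonpos (div_nonpos_of_nonpos_of_nonneg (by linarith) hε.le),
      smoothTransition.zero_of_nonpos (div_nonpos_of_nonpos_of_nonneg (by linarith) hε.le),
      sub_self]
  · have hbx : b ≤ x := not_lt.1 fun hxb => hx ⟨hax, hxb⟩
    rw [smoothTransition.one_of_one_le (by rw [le_div_iff₀ hε]; linarith),
      smoothTransition.one_of_one_le (by rw [le_div_iff₀ hε]; linarith), sub_self]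

end smoothRamp

theorem ContDiffOn.smoothRamp {E : Type*} [NormedAddCommGroup E] [NormedSpace ℝ E] {s : Set E}
    {n : ℕ∞} {ε a b x : E → ℝ} (hε : ContDiffOn ℝ n ε s) (ha : ContDiffOn ℝ n a s)
    (hb : ContDiffOn ℝ n b s) (hx : ContDiffOn ℝ n x s) (hε₀ : ∀ p ∈ s, ε p ≠ 0) :
    ContDiffOn ℝ n (fun p => _root_.smoothRamp (ε p) (a p) (b p) (x p)) s :=
  hε.mul <| (contDiff_smoothTransitionIntegral.comp_contDiffOn ((hx.sub ha).div hε hε₀)).sub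
    (contDiff_smoothTransitionIntegral.comp_contDiffOn (((hx.sub hb).add hε).div hε hε₀))

def parallelSum (L M : ℝ) : ℝ := L * M / (L + M)

section parallelSum

variable {L M : ℝ}

theorem parallelSum_pos (hL : 0 < L) (hM : 0 < M) : 0 < parallelSum L M := by
  unfold parallelSum; positivity

theorem parallelSum_lt_left (hL : 0 < L) (hM : 0 < M) : parallelSum L M < L := by
  rw [parallelSum, div_lt_iff₀ (by positivity)]; nlinarith

theorem parallelSum_comm (L M : ℝ) : parallelSum L M = parallelSum M L := by
  rw [parallelSum, parallelSum, mul_comm, add_comm]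

theorem parallelSum_lt_right (hL : 0 < L) (hM : 0 < M) : parallelSum L M < M :=
  parallelSum_comm L M ▸ parallelSum_lt_left hM hL

end parallelSum

/-- Across `[a, b]` the ramp rises by `(b - a) - ε`, which the coefficient rescales to
`(d - c) - (b - a)`; the coefficient exceeds `-1` because `ε < d - c`. -/
def gapCorrection (a b c d x : ℝ) : ℝ :=
  ((d - c) - (b - a)) / ((b - a) - parallelSum (b - a) (d - c)) *
    smoothRamp (parallelSum (b - a) (d - c)) a b x

section gapCorrection

variable {a b c d x : ℝ}

theorem gapCorrection_self (a b x : ℝ) : gapCorrection a b a b x = 0 := by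
  rw [gapCorrection, sub_self, zero_div, zero_mul]

theorem gapCorrection_of_le (hab : a < b) (hcd : c < d) (hx : x ≤ a) :
    gapCorrection a b c d x = 0 := by
  rw [gapCorrection, smoothRamp_of_le (parallelSum_pos (by linarith) (by linarith))
    (parallelSum_lt_left (by linarith) (by linarith)).le hx, mul_zero]

theorem gapCorrection_of_ge (hab : a < b) (hcd : c < d) (hx : b ≤ x) :
    gapCorrection a b c d x = (d - c) - (b - a) := by
  have hε := parallelSum_lt_left (sub_pos.2 hab) (sub_pos.2 hcd)
  rw [gapCorrection, smoothRamp_of_ge (parallelSum_pos (by linarith) (by linarith)) hε.le hx,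
    sub_sub, div_mul_cancel₀ _ (by linarith)]

theorem deriv_gapCorrection (hab : a < b) (hcd : c < d) (x : ℝ) :
    deriv (gapCorrection a b c d) x =
      ((d - c) - (b - a)) / ((b - a) - parallelSum (b - a) (d - c)) *
        deriv (smoothRamp (parallelSum (b - a) (d - c)) a b) x :=
  deriv_const_mul _
    (hasDerivAt_smoothRamp (parallelSum_pos (sub_pos.2 hab) (sub_pos.2 hcd)).ne').differentiableAt

theorem differentiable_gapCorrection (hab : a < b) (hcd : c < d) :
    Differentiable ℝ (gapCorrection a b c d) := fun _ =>
  ((hasDerivAt_smoothRamp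
    (parallelSum_pos (sub_pos.2 hab) (sub_pos.2 hcd)).ne').differentiableAt).const_mul _

theorem neg_one_lt_deriv_gapCorrection (hab : a < b) (hcd : c < d) (x : ℝ) :
    -1 < deriv (gapCorrection a b c d) x := by
  have hL := sub_pos.2 hab
  have hM := sub_pos.2 hcd
  have hεL := parallelSum_lt_left hL hM
  have hεM := parallelSum_lt_right hL hM
  obtain ⟨hβ₀, hβ₁⟩ := deriv_smoothRamp_mem_Icc (x := x) (parallelSum_pos hL hM) hεL.le
  rw [deriv_gapCorrection hab hcd]
  set coef := ((d - c) - (b - a)) / ((b - a) - parallelSum (b - a) (d - c))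
  have hcoef : -1 < coef := by rw [lt_div_iff₀ (by linarith)]; linarith
  rcases le_or_gt 0 coef with h | h
  · linarith [mul_nonneg h hβ₀]
  · linarith [mul_le_mul_of_nonpos_left hβ₁ h.le]

theorem deriv_gapCorrection_of_notMem_Ioo (hab : a < b) (hcd : c < d) (hx : x ∉ Ioo a b) :
    deriv (gapCorrection a b c d) x = 0 := by
  rw [deriv_gapCorrection hab hcd, deriv_smoothRamp_of_notMem_Ioo
    (parallelSum_pos (sub_pos.2 hab) (sub_pos.2 hcd))
    (parallelSum_lt_left (sub_pos.2 hab) (sub_pos.2 hcd)).le hx, mul_zero]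

end gapCorrection

theorem ContDiffOn.gapCorrection {E : Type*} [NormedAddCommGroup E] [NormedSpace ℝ E]
    {s : Set E} {n : ℕ∞} {a b c d x : E → ℝ} (ha : ContDiffOn ℝ n a s) (hb : ContDiffOn ℝ n b s)
    (hc : ContDiffOn ℝ n c s) (hd : ContDiffOn ℝ n d s) (hx : ContDiffOn ℝ n x s)
    (hab : ∀ p ∈ s, a p < b p) (hcd : ∀ p ∈ s, c p < d p) :
    ContDiffOn ℝ n (fun p => _root_.gapCorrection (a p) (b p) (c p) (d p) (x p)) s := by
  have hL := hb.sub ha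
  have hM := hd.sub hc
  have hε : ContDiffOn ℝ n (fun p => parallelSum (b p - a p) (d p - c p)) s :=
    (hL.mul hM).div (hL.add hM) fun p hp => by linarith [hab p hp, hcd p hp]
  refine ((hM.sub hL).div (hL.sub hε) fun p hp => ?_).mul (hε.smoothRamp ha hb hx fun p hp => ?_)
  · exact (sub_pos.2 (parallelSum_lt_left (sub_pos.2 (hab p hp)) (sub_pos.2 (hcd p hp)))).ne'
  · exact (parallelSum_pos (sub_pos.2 (hab p hp)) (sub_pos.2 (hcd p hp))).ne'

def natExtend {k : ℕ} (y : Fin k → ℝ) (n : ℕ) : ℝ := if h : n < k then y ⟨n, h⟩ else 0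

section natExtend

variable {k : ℕ} {y : Fin k → ℝ}

theorem natExtend_of_lt (y : Fin k → ℝ) {n : ℕ} (h : n < k) : natExtend y n = y ⟨n, h⟩ :=
  dif_pos h

theorem natExtend_le (hy : StrictMono y) {m n : ℕ} (hmn : m ≤ n) (hn : n < k) :
    natExtend y m ≤ natExtend y n := by
  rw [natExtend_of_lt y hn, natExtend_of_lt y (hmn.trans_lt hn)]
  exact hy.monotone (Fin.mk_le_mk.2 hmn)

theorem natExtend_lt (hy : StrictMono y) {m n : ℕ} (hmn : m < n) (hn : n < k) :
    natExtend y m < natExtend y n := by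
  rw [natExtend_of_lt y hn, natExtend_of_lt y (hmn.trans hn)]
  exact hy (Fin.mk_lt_mk.2 hmn)

theorem natExtend_lt_succ (hy : StrictMono y) {i : ℕ} (hi : i + 1 < k) :
    natExtend y i < natExtend y (i + 1) :=
  natExtend_lt hy i.lt_succ_self hi

theorem eq_of_mem_Ioo_natExtend (hy : StrictMono y) {i j : ℕ} (hi : i < k) (hj : j < k)
    {x : ℝ} (hxi : x ∈ Ioo (natExtend y i) (natExtend y (i + 1)))
    (hxj : x ∈ Ioo (natExtend y j) (natExtend y (j + 1))) : i = j := by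
  by_contra hne
  rcases Nat.lt_or_gt_of_ne hne with h | h
  · linarith [hxi.2, hxj.1, natExtend_le hy (Nat.succ_le_of_lt h) hj]
  · linarith [hxj.2, hxi.1, natExtend_le hy (Nat.succ_le_of_lt h) hi]

theorem contDiff_natExtend {n : ℕ∞} (m : ℕ) :
    ContDiff ℝ n fun y : Fin k → ℝ => natExtend y m := by
  unfold natExtend
  split_ifs with h
  · exact contDiff_apply ℝ ℝ _
  · exact contDiff_const

end natExtend

theorem add_one_lt_of_mem_range_sub_one {i k : ℕ} (hi : i ∈ Finset.range (k - 1)) : i + 1 < k := by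
  rw [Finset.mem_range] at hi
  omega

def knotReparam {k : ℕ} (q y : Fin k → ℝ) (x : ℝ) : ℝ :=
  x + (natExtend q 0 - natExtend y 0) + ∑ i ∈ Finset.range (k - 1),
    gapCorrection (natExtend y i) (natExtend y (i + 1)) (natExtend q i) (natExtend q (i + 1)) x

section knotReparam

variable {k : ℕ} {q y : Fin k → ℝ}

theorem knotReparam_self (q : Fin k → ℝ) (x : ℝ) : knotReparam q q x = x := by
  simp only [knotReparam, gapCorrection_self, sub_self, add_zero, Finset.sum_const_zero]

theorem knotReparam_eq (hq : StrictMono q) (hy : StrictMono y) {j : ℕ} (hj : j ≤ k - 1) {x : ℝ}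
    (hleft : ∀ i < j, natExtend y (i + 1) ≤ x)
    (hright : ∀ i, j ≤ i → i + 1 < k → x ≤ natExtend y i) :
    knotReparam q y x = x + (natExtend q j - natExtend y j) := by
  have hsum : ∑ i ∈ Finset.range (k - 1), gapCorrection (natExtend y i) (natExtend y (i + 1))
      (natExtend q i) (natExtend q (i + 1)) x =
      ∑ i ∈ Finset.range j, ((natExtend q (i + 1) - natExtend q i) -
        (natExtend y (i + 1) - natExtend y i)) := by
    rw [← Finset.sum_subset (Finset.range_subset_range.2 hj)]
    · refine Finset.sum_congr rfl fun i hi => ?_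
      have hik : i + 1 < k := by rw [Finset.mem_range] at hi; omega
      exact gapCorrection_of_ge (natExtend_lt_succ hy hik) (natExtend_lt_succ hq hik)
        (hleft i (Finset.mem_range.1 hi))
    · intro i hi hij
      have hik := add_one_lt_of_mem_range_sub_one hi
      exact gapCorrection_of_le (natExtend_lt_succ hy hik) (natExtend_lt_succ hq hik)
        (hright i (not_lt.1 (Finset.mem_range.not.1 hij)) hik)
  rw [knotReparam, hsum, Finset.sum_sub_distrib, Finset.sum_range_sub, Finset.sum_range_sub]
  ring

theorem knotReparam_natExtend (hq : StrictMono q) (hy : StrictMono y) {j : ℕ} (hj : j < k) :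
    knotReparam q y (natExtend y j) = natExtend q j := by
  rw [knotReparam_eq hq hy (j := j) (by omega)
    (fun _ hi => natExtend_le hy hi hj) (fun _ hi _ => natExtend_le hy hi (by omega))]
  ring

theorem knotReparam_of_le (hq : StrictMono q) (hy : StrictMono y) {x : ℝ}
    (hx : x ≤ natExtend y 0) : knotReparam q y x = x + (natExtend q 0 - natExtend y 0) :=
  knotReparam_eq hq hy (Nat.zero_le _) (fun i hi => absurd hi i.not_lt_zero)
    fun i _ hi => hx.trans (natExtend_le hy i.zero_le (by omega))

theorem knotReparam_of_ge (hq : StrictMono q) (hy : StrictMono y) {x : ℝ}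
    (hx : natExtend y (k - 1) ≤ x) :
    knotReparam q y x = x + (natExtend q (k - 1) - natExtend y (k - 1)) :=
  knotReparam_eq hq hy le_rfl (fun i hi => (natExtend_le hy (by omega) (by omega)).trans hx)
    fun _ hi hik => by omega

theorem hasDerivAt_knotReparam (hq : StrictMono q) (hy : StrictMono y) (x : ℝ) :
    HasDerivAt (knotReparam q y) (1 + ∑ i ∈ Finset.range (k - 1),
      deriv (gapCorrection (natExtend y i) (natExtend y (i + 1)) (natExtend q i)
        (natExtend q (i + 1))) x) x :=
  ((hasDerivAt_id' x).add_const _).add <| HasDerivAt.fun_sum fun _ hi =>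
    (differentiable_gapCorrection (natExtend_lt_succ hy (add_one_lt_of_mem_range_sub_one hi))
      (natExtend_lt_succ hq (add_one_lt_of_mem_range_sub_one hi)) x).hasDerivAt

theorem deriv_knotReparam_pos (hq : StrictMono q) (hy : StrictMono y) (x : ℝ) :
    0 < deriv (knotReparam q y) x := by
  have hgap : ∀ i ∈ Finset.range (k - 1), natExtend y i < natExtend y (i + 1) ∧
      natExtend q i < natExtend q (i + 1) := fun i hi =>
    ⟨natExtend_lt_succ hy (add_one_lt_of_mem_range_sub_one hi),
      natExtend_lt_succ hq (add_one_lt_of_mem_range_sub_one hi)⟩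
  rw [(hasDerivAt_knotReparam hq hy x).deriv]
  by_cases h : ∃ i ∈ Finset.range (k - 1), x ∈ Ioo (natExtend y i) (natExtend y (i + 1))
  · obtain ⟨i₀, hi₀, hx⟩ := h
    rw [Finset.sum_eq_single_of_mem i₀ hi₀ fun i hi hne =>
      deriv_gapCorrection_of_notMem_Ioo (hgap i hi).1 (hgap i hi).2 fun hx' =>
        hne (eq_of_mem_Ioo_natExtend hy (add_one_lt_of_mem_range_sub_one hi).le
          (add_one_lt_of_mem_range_sub_one hi₀).le hx' hx)]
    linarith [neg_one_lt_deriv_gapCorrection (hgap i₀ hi₀).1 (hgap i₀ hi₀).2 x]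
  · simp only [not_exists, not_and] at h
    rw [Finset.sum_eq_zero fun i hi =>
      deriv_gapCorrection_of_notMem_Ioo (hgap i hi).1 (hgap i hi).2 (h i hi)]
    norm_num

theorem strictMono_knotReparam (hq : StrictMono q) (hy : StrictMono y) :
    StrictMono (knotReparam q y) :=
  strictMono_of_deriv_pos (deriv_knotReparam_pos hq hy)

theorem surjective_knotReparam (hq : StrictMono q) (hy : StrictMono y) :
    Function.Surjective (knotReparam q y) := by
  refine Continuous.surjective (continuous_iff_continuousAt.2 fun x =>
    (hasDerivAt_knotReparam hq hy x).continuousAt) ?_ ?_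
  · refine (tendsto_atTop_add_const_right _ (natExtend q (k - 1) - natExtend y (k - 1))
      tendsto_id).congr' ?_
    filter_upwards [eventually_ge_atTop (natExtend y (k - 1))] with x hx
    exact (knotReparam_of_ge hq hy hx).symm
  · refine (tendsto_atBot_add_const_right _ (natExtend q 0 - natExtend y 0)
      tendsto_id).congr' ?_
    filter_upwards [eventually_le_atBot (natExtend y 0)] with x hx
    exact (knotReparam_of_le hq hy hx).symm

theorem contDiffOn_knotReparam {n : ℕ∞} (hq : StrictMono q) :
    ContDiffOn ℝ n (fun p : ℝ × (Fin k → ℝ) => knotReparam q p.2 p.1)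
      {p | StrictMono p.2} := by
  have hy (m : ℕ) : ContDiffOn ℝ n (fun p : ℝ × (Fin k → ℝ) => natExtend p.2 m)
      {p | StrictMono p.2} :=
    ((contDiff_natExtend m).comp contDiff_snd).contDiffOn
  refine ((contDiffOn_fst.add (contDiffOn_const.sub (hy 0))).add
    (ContDiffOn.sum fun i hi => ?_))
  have hik := add_one_lt_of_mem_range_sub_one hi
  exact (hy i).gapCorrection (hy (i + 1)) contDiffOn_const contDiffOn_const contDiffOn_fst
    (fun p hp => natExtend_lt_succ hp hik) fun _ _ => natExtend_lt_succ hq hik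

end knotReparam

end

theorem stmt15_general (k : ℕ) (q : Fin k → ℝ) (hq : StrictMono q) :
    ∃ u : ℝ → (Fin k → ℝ) → ℝ,
      ContDiffOn ℝ (⊤ : ℕ∞)
        (fun p : ℝ × (Fin k → ℝ) => u p.1 p.2)
        {p : ℝ × (Fin k → ℝ) | StrictMono p.2} ∧
      (∀ y : Fin k → ℝ, StrictMono y →
        StrictMono (fun x => u x y) ∧ Function.Surjective (fun x => u x y)) ∧
      (∀ x : ℝ, u x q = x) ∧
      (∀ y : Fin k → ℝ, StrictMono y → ∀ i : Fin k, u (y i) y = q i) := by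
  refine ⟨fun x y => knotReparam q y x, contDiffOn_knotReparam hq,
    fun y hy => ⟨strictMono_knotReparam hq hy, surjective_knotReparam hq hy⟩,
    knotReparam_self q, fun y hy i => ?_⟩
  simpa only [natExtend_of_lt _ i.isLt] using knotReparam_natExtend hq hy i.isLt

/-- for `k ≥ 1` and `q₁ < ⋯ < q_k`, there is a `C^∞` function
`u : ℝ × Δ_k → ℝ` (here defined on all of `ℝ × ℝᵏ` and smooth on `ℝ × Δ_k`, where
`Δ_k = {y : y₁ < ⋯ < y_k}`) such that (a) `x ↦ u x y` is a strictly increasing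
homeomorphism of `ℝ` onto `ℝ` for each `y ∈ Δ_k`; (b) `u x q = x`; and
(c) `u (y i) y = q i`. -/
theorem stmt15 (k : ℕ) (hk : 1 ≤ k) (q : Fin k → ℝ) (hq : StrictMono q) :
    ∃ u : ℝ → (Fin k → ℝ) → ℝ,
      ContDiffOn ℝ (⊤ : ℕ∞)
        (fun p : ℝ × (Fin k → ℝ) => u p.1 p.2)
        {p : ℝ × (Fin k → ℝ) | StrictMono p.2} ∧
      (∀ y : Fin k → ℝ, StrictMono y →
        StrictMono (fun x => u x y) ∧ Function.Surjective (fun x => u x y)) ∧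
      (∀ x : ℝ, u x q = x) ∧
      (∀ y : Fin k → ℝ, StrictMono y → ∀ i : Fin k, u (y i) y = q i) :=
  stmt15_general k q hq
end

section
/- Let c < s be real numbers and let f_i : (c,s] → ℝ, i = 1,…,k, be finitely many continuous functions such that f_i(y) ≠ f_j(y) whenever i ≠ j and y ∈ (c,s]. Then there exists a homeomorphism φ : ℝ×(c,s] → ℝ×(c,s] such that: (1) φ(ℝ×{y}) = ℝ×{y} for all y ∈ (c,s]; (2) φ is the identity on ℝ×{s}; (3) for each i ∈ {1,…,k}, φ maps the graph {(f_i(y), y) : y ∈ (c,s]} of f_i onto the vertical segment {f_i(s)}×(c,s]. -/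
open Finset

/-- Piecewise-linear increasing map sending `a i ↦ b i` for `i < n`, translation outside. -/
noncomputable def pl (n : ℕ) (a b : ℕ → ℝ) (x : ℝ) : ℝ :=
  b 0 - a 0 + min x (a 0)
    + ∑ i ∈ Finset.range (n - 1),
        (b (i + 1) - b i) / (a (i + 1) - a i) * (max (min x (a (i + 1))) (a i) - a i)
    + (max x (a (n - 1)) - a (n - 1))

lemma adj_le {n : ℕ} {a : ℕ → ℝ} (ha : ∀ i, i + 1 < n → a i < a (i + 1)) :
    ∀ {i j}, i ≤ j → j < n → a i ≤ a j := by
  intro i j hij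
  induction hij with
  | refl => intro _; exact le_rfl
  | @step m hm ih =>
    intro hj
    exact (ih (by omega)).trans (ha m hj).le

lemma exists_cell {n : ℕ} {a : ℕ → ℝ} (hn : 0 < n) {x : ℝ}
    (h0 : a 0 ≤ x) (h1 : x < a (n - 1)) :
    ∃ j, j + 1 < n ∧ a j ≤ x ∧ x < a (j + 1) := by
  induction n with
  | zero => omega
  | succ m ih =>
    rcases Nat.eq_zero_or_pos m with rfl | hm
    · simp at h1; exact absurd (h0.trans_lt h1) (lt_irrefl _)
    rcases le_or_gt (a (m - 1)) x with h2 | h2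
    · exact ⟨m - 1, by omega, h2, by simpa [Nat.sub_add_cancel hm] using h1⟩
    · obtain ⟨j, hj, hj1, hj2⟩ := ih hm h2
      exact ⟨j, by omega, hj1, hj2⟩

lemma cell_trichotomy {n : ℕ} {a : ℕ → ℝ} (hn : 0 < n) (x : ℝ) :
    x ≤ a 0 ∨ a (n - 1) ≤ x ∨ ∃ j, j + 1 < n ∧ a j ≤ x ∧ x ≤ a (j + 1) := by
  rcases le_or_gt x (a 0) with h | h
  · exact Or.inl h
  rcases le_or_gt (a (n - 1)) x with h2 | h2
  · exact Or.inr (Or.inl h2)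
  · obtain ⟨j, hj, hj1, hj2⟩ := exists_cell hn h.le h2
    exact Or.inr (Or.inr ⟨j, hj, hj1, hj2.le⟩)

section PLlem
variable {n : ℕ} {a b : ℕ → ℝ} (ha : ∀ i, i + 1 < n → a i < a (i + 1)) (hn : 0 < n)

include ha hn

lemma pl_left {x : ℝ} (hx : x ≤ a 0) : pl n a b x = x + (b 0 - a 0) := by
  have h0 : ∀ i, i < n → a 0 ≤ a i := fun i hi => adj_le ha (Nat.zero_le i) hi
  unfold pl
  rw [min_eq_left hx]
  have hs : ∀ i ∈ Finset.range (n - 1),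
      (b (i + 1) - b i) / (a (i + 1) - a i) * (max (min x (a (i + 1))) (a i) - a i) = 0 := by
    intro i hi
    rw [Finset.mem_range] at hi
    have h1 : x ≤ a (i + 1) := hx.trans (h0 (i + 1) (by omega))
    have h2 : x ≤ a i := hx.trans (h0 i (by omega))
    rw [min_eq_left h1, max_eq_right h2, sub_self, mul_zero]
  rw [Finset.sum_congr rfl hs, Finset.sum_const, smul_zero,
    max_eq_right (hx.trans (h0 (n - 1) (by omega))), sub_self]
  ring

lemma pl_right {x : ℝ} (hx : a (n - 1) ≤ x) : pl n a b x = x + (b (n - 1) - a (n - 1)) := by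
  have h0 : ∀ i, i < n → a i ≤ a (n - 1) := fun i hi => adj_le ha (by omega) (by omega)
  unfold pl
  rw [min_eq_right ((h0 0 hn).trans hx)]
  have hs : ∀ i ∈ Finset.range (n - 1),
      (b (i + 1) - b i) / (a (i + 1) - a i) * (max (min x (a (i + 1))) (a i) - a i)
        = b (i + 1) - b i := by
    intro i hi
    rw [Finset.mem_range] at hi
    have hlt : a i < a (i + 1) := ha i (by omega)
    rw [min_eq_right ((h0 (i + 1) (by omega)).trans hx), max_eq_left hlt.le,
      div_mul_cancel₀ _ (by linarith)]
  rw [Finset.sum_congr rfl hs, Finset.sum_range_sub (fun i => b i),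
    max_eq_left hx]
  ring

omit hn in
lemma pl_mid {j : ℕ} {x : ℝ} (hj : j + 1 < n) (h1 : a j ≤ x) (h2 : x ≤ a (j + 1)) :
    pl n a b x = b j + (b (j + 1) - b j) / (a (j + 1) - a j) * (x - a j) := by
  have hmono : ∀ {i i'}, i ≤ i' → i' < n → a i ≤ a i' := fun h h' => adj_le ha h h'
  unfold pl
  rw [min_eq_right ((hmono (Nat.zero_le j) (by omega)).trans h1)]
  have hsplit : ∑ i ∈ Finset.range (n - 1),
      (b (i + 1) - b i) / (a (i + 1) - a i) * (max (min x (a (i + 1))) (a i) - a i)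
      = ∑ i ∈ Finset.range (j + 1),
          (b (i + 1) - b i) / (a (i + 1) - a i) * (max (min x (a (i + 1))) (a i) - a i)
        + ∑ i ∈ Finset.Ico (j + 1) (n - 1),
          (b (i + 1) - b i) / (a (i + 1) - a i) * (max (min x (a (i + 1))) (a i) - a i) := by
    exact (Finset.sum_range_add_sum_Ico _ (show j + 1 ≤ n - 1 by omega)).symm
  rw [hsplit]
  have hz : ∑ i ∈ Finset.Ico (j + 1) (n - 1),
      (b (i + 1) - b i) / (a (i + 1) - a i) * (max (min x (a (i + 1))) (a i) - a i) = 0 := by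
    apply Finset.sum_eq_zero
    intro i hi
    rw [Finset.mem_Ico] at hi
    have hxi : x ≤ a i := h2.trans (hmono (by omega) (by omega))
    have hxi1 : x ≤ a (i + 1) := hxi.trans (hmono (by omega) (by omega))
    rw [min_eq_left hxi1, max_eq_right hxi, sub_self, mul_zero]
  rw [hz, Finset.sum_range_succ]
  have hfirst : ∑ i ∈ Finset.range j,
      (b (i + 1) - b i) / (a (i + 1) - a i) * (max (min x (a (i + 1))) (a i) - a i)
      = b j - b 0 := by
    have : ∀ i ∈ Finset.range j,
        (b (i + 1) - b i) / (a (i + 1) - a i) * (max (min x (a (i + 1))) (a i) - a i)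
          = b (i + 1) - b i := by
      intro i hi
      rw [Finset.mem_range] at hi
      have hlt : a i < a (i + 1) := ha i (by omega)
      have hi1x : a (i + 1) ≤ x := (hmono (by omega) (by omega)).trans h1
      rw [min_eq_right (hi1x.trans (le_refl x) |>.trans (le_refl x)), max_eq_left hlt.le,
        div_mul_cancel₀ _ (by linarith)]
    rw [Finset.sum_congr rfl this, Finset.sum_range_sub (fun i => b i)]
  rw [hfirst, min_eq_left h2, max_eq_left h1,
    max_eq_right (h2.trans (hmono (by omega) (by omega)))]
  ring

lemma pl_apply {j : ℕ} (hj : j < n) : pl n a b (a j) = b j := by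
  rcases Nat.lt_or_ge (j + 1) n with h | h
  · rw [pl_mid ha h le_rfl (ha j h).le, sub_self, mul_zero, add_zero]
  · have hj' : j = n - 1 := by omega
    subst hj'
    rw [pl_right ha hn le_rfl]; ring

lemma pl_id {x : ℝ} : pl n a a x = x := by
  rcases cell_trichotomy hn x (a := a) with h | h | ⟨j, hj, h1, h2⟩
  · rw [pl_left ha hn h]; ring
  · rw [pl_right ha hn h]; ring
  · rw [pl_mid ha hj h1 h2, div_self (by have := ha j hj; linarith)]
    ring

end PLlem

lemma pl_strictMono {n : ℕ} {a b : ℕ → ℝ}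
    (ha : ∀ i, i + 1 < n → a i < a (i + 1)) (hb : ∀ i, i + 1 < n → b i < b (i + 1))
    (hn : 0 < n) : StrictMono (pl n a b) := by
  intro x1 x2 hx
  have hterm_le : ∀ i ∈ Finset.range (n - 1),
      (b (i + 1) - b i) / (a (i + 1) - a i) * (max (min x1 (a (i + 1))) (a i) - a i)
        ≤ (b (i + 1) - b i) / (a (i + 1) - a i) * (max (min x2 (a (i + 1))) (a i) - a i) := by
    intro i hi
    rw [Finset.mem_range] at hi
    have hsl : 0 < (b (i + 1) - b i) / (a (i + 1) - a i) :=
      div_pos (by have := hb i (by omega); linarith) (by have := ha i (by omega); linarith)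
    have : max (min x1 (a (i + 1))) (a i) ≤ max (min x2 (a (i + 1))) (a i) :=
      max_le_max (min_le_min hx.le le_rfl) le_rfl
    nlinarith [this]
  have hS : ∑ i ∈ Finset.range (n - 1),
      (b (i + 1) - b i) / (a (i + 1) - a i) * (max (min x1 (a (i + 1))) (a i) - a i)
      ≤ ∑ i ∈ Finset.range (n - 1),
      (b (i + 1) - b i) / (a (i + 1) - a i) * (max (min x2 (a (i + 1))) (a i) - a i) :=
    Finset.sum_le_sum hterm_le
  have hmin : min x1 (a 0) ≤ min x2 (a 0) := min_le_min hx.le le_rfl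
  have hmax : max x1 (a (n - 1)) ≤ max x2 (a (n - 1)) := max_le_max hx.le le_rfl
  rcases lt_or_ge x1 (a 0) with h0 | h0
  · have : min x1 (a 0) < min x2 (a 0) := by
      rw [min_eq_left h0.le]; exact lt_min hx h0
    unfold pl; linarith
  rcases le_or_gt (a (n - 1)) x1 with h1 | h1
  · have : max x1 (a (n - 1)) < max x2 (a (n - 1)) := by
      rw [max_eq_left h1]; exact lt_of_lt_of_le hx (le_max_left _ _)
    unfold pl; linarith
  · obtain ⟨j, hj, hj1, hj2⟩ := exists_cell hn h0 h1
    have hstrict : (b (j + 1) - b j) / (a (j + 1) - a j) * (max (min x1 (a (j + 1))) (a j) - a j)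
        < (b (j + 1) - b j) / (a (j + 1) - a j) * (max (min x2 (a (j + 1))) (a j) - a j) := by
      have hsl : 0 < (b (j + 1) - b j) / (a (j + 1) - a j) :=
        div_pos (by have := hb j hj; linarith) (by have := ha j hj; linarith)
      have e1 : max (min x1 (a (j + 1))) (a j) = x1 := by
        rw [min_eq_left hj2.le, max_eq_left hj1]
      have e2 : x1 < max (min x2 (a (j + 1))) (a j) :=
        lt_of_lt_of_le (lt_min hx hj2) (le_max_left _ _)
      rw [e1]
      exact mul_lt_mul_of_pos_left (by linarith) hsl
    have hS' : ∑ i ∈ Finset.range (n - 1),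
        (b (i + 1) - b i) / (a (i + 1) - a i) * (max (min x1 (a (i + 1))) (a i) - a i)
        < ∑ i ∈ Finset.range (n - 1),
        (b (i + 1) - b i) / (a (i + 1) - a i) * (max (min x2 (a (i + 1))) (a i) - a i) :=
      Finset.sum_lt_sum hterm_le ⟨j, Finset.mem_range.mpr (by omega), hstrict⟩
    unfold pl; linarith

lemma pl_inverse {n : ℕ} {a b : ℕ → ℝ}
    (ha : ∀ i, i + 1 < n → a i < a (i + 1)) (hb : ∀ i, i + 1 < n → b i < b (i + 1))
    (hn : 0 < n) (x : ℝ) : pl n b a (pl n a b x) = x := by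
  rcases cell_trichotomy hn x (a := a) with h | h | ⟨j, hj, h1, h2⟩
  · rw [pl_left ha hn h, pl_left hb hn (by
      have : x + (b 0 - a 0) ≤ a 0 + (b 0 - a 0) := by linarith
      linarith)]
    ring
  · rw [pl_right ha hn h, pl_right hb hn (by linarith)]
    ring
  · have hsl : 0 < (b (j + 1) - b j) / (a (j + 1) - a j) :=
      div_pos (by have := hb j hj; linarith) (by have := ha j hj; linarith)
    rw [pl_mid ha hj h1 h2]
    have hy1 : b j ≤ b j + (b (j + 1) - b j) / (a (j + 1) - a j) * (x - a j) := by
      nlinarith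
    have hy2 : b j + (b (j + 1) - b j) / (a (j + 1) - a j) * (x - a j) ≤ b (j + 1) := by
      have hne : a (j + 1) - a j ≠ 0 := by have := ha j hj; linarith
      have : (b (j + 1) - b j) / (a (j + 1) - a j) * (x - a j)
          ≤ (b (j + 1) - b j) / (a (j + 1) - a j) * (a (j + 1) - a j) := by
        apply mul_le_mul_of_nonneg_left (by linarith) hsl.le
      rw [div_mul_cancel₀ _ hne] at this
      linarith
    rw [pl_mid hb hj hy1 hy2]
    have hane : a (j + 1) - a j ≠ 0 := by have := ha j hj; linarith
    have hbne : b (j + 1) - b j ≠ 0 := by have := hb j hj; linarith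
    field_simp
    ring

/-- given finitely many continuous functions `f i : (c,s] → ℝ` with pairwise
disjoint graphs, there is a homeomorphism of the strip `ℝ × (c,s]` preserving each
horizontal line, fixed on `ℝ × {s}`, and mapping the graph of each `f i` onto the vertical
segment `{f i s} × (c,s]`. -/
theorem stmt16 (c s : ℝ) (hcs : c < s) (k : ℕ) (f : Fin k → ℝ → ℝ)
    (hf : ∀ i, ContinuousOn (f i) (Set.Ioc c s))
    (hne : ∀ i j, i ≠ j → ∀ y ∈ Set.Ioc c s, f i y ≠ f j y) :
    ∃ φ : ↥(Set.univ ×ˢ Set.Ioc c s : Set (ℝ × ℝ)) ≃ₜ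
          ↥(Set.univ ×ˢ Set.Ioc c s : Set (ℝ × ℝ)),
      (∀ p : ↥(Set.univ ×ˢ Set.Ioc c s : Set (ℝ × ℝ)),
        ((φ p : ℝ × ℝ)).2 = (p : ℝ × ℝ).2) ∧
      (∀ p : ↥(Set.univ ×ˢ Set.Ioc c s : Set (ℝ × ℝ)),
        ((p : ℝ × ℝ)).2 = s → φ p = p) ∧
      (∀ i, Subtype.val '' (⇑φ ''
          {p : ↥(Set.univ ×ˢ Set.Ioc c s : Set (ℝ × ℝ)) |
            (p : ℝ × ℝ).1 = f i (p : ℝ × ℝ).2}) =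
        {r : ℝ × ℝ | r.2 ∈ Set.Ioc c s ∧ r.1 = f i s}) := by
  classical
  have hsmem : s ∈ Set.Ioc c s := ⟨hcs, le_rfl⟩
  rcases Nat.eq_zero_or_pos k with rfl | hk
  · exact ⟨Homeomorph.refl _, fun p => rfl, fun p _ => rfl, fun i => i.elim0⟩
  -- sort the functions by their value at s
  set σ : Equiv.Perm (Fin k) := Tuple.sort (fun i => f i s) with hσdef
  have hinj : Function.Injective (fun i : Fin k => f i s) := by
    intro i j hij
    by_contra h
    exact hne i j h s hsmem hij
  have hmono : StrictMono (fun i : Fin k => f (σ i) s) :=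
    (Tuple.monotone_sort (fun i => f i s)).strictMono_of_injective
      (hinj.comp σ.injective)
  set A : ℕ → ℝ → ℝ := fun i y => if h : i < k then f (σ ⟨i, h⟩) y else 0 with hAdef
  set B : ℕ → ℝ := fun i => A i s with hBdef
  -- the sorted functions are strictly ordered on all of (c, s]
  have hApos : ∀ y ∈ Set.Ioc c s, ∀ i, i + 1 < k → A i y < A (i + 1) y := by
    intro y hy i hik
    have hik' : i < k := by omega
    simp only [hAdef, dif_pos hik, dif_pos hik']
    set i0 : Fin k := ⟨i, hik'⟩
    set i1 : Fin k := ⟨i + 1, hik⟩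
    have hns : f (σ i0) s < f (σ i1) s := hmono (show i0 < i1 from by
      simp only [i0, i1, Fin.mk_lt_mk]; omega)
    have hne' : ∀ z ∈ Set.Ioc c s, f (σ i0) z ≠ f (σ i1) z := by
      intro z hz
      refine hne _ _ (fun h => ?_) z hz
      have : i0 = i1 := σ.injective h
      simp only [i0, i1, Fin.mk.injEq] at this
      omega
    by_contra hcon
    push_neg at hcon
    have hlt : f (σ i1) y < f (σ i0) y :=
      lt_of_le_of_ne hcon (fun h => hne' y hy h.symm)
    have hsub : Set.Icc y s ⊆ Set.Ioc c s :=
      fun z hz => ⟨lt_of_lt_of_le hy.1 hz.1, hz.2⟩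
    have hcont : ContinuousOn (fun z => f (σ i1) z - f (σ i0) z) (Set.Icc y s) :=
      ((hf (σ i1)).mono hsub).sub ((hf (σ i0)).mono hsub)
    have h0 : (0 : ℝ) ∈ Set.Icc (f (σ i1) y - f (σ i0) y) (f (σ i1) s - f (σ i0) s) :=
      ⟨by linarith, by linarith⟩
    obtain ⟨z, hz, hz0⟩ := intermediate_value_Icc hy.2 hcont h0
    have hz0' : f (σ i1) z - f (σ i0) z = 0 := hz0
    exact hne' z (hsub hz) (by linarith)
  have hBpos : ∀ i, i + 1 < k → B i < B (i + 1) := fun i h => hApos s hsmem i h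
  have hmem : ∀ p : ↥(Set.univ ×ˢ Set.Ioc c s : Set (ℝ × ℝ)),
      (p : ℝ × ℝ).2 ∈ Set.Ioc c s := fun p => p.2.2
  -- continuity of the sorted family
  have contA : ∀ i, Continuous fun p : ↥(Set.univ ×ˢ Set.Ioc c s : Set (ℝ × ℝ)) =>
      A i (p : ℝ × ℝ).2 := by
    intro i
    by_cases h : i < k
    · simp only [hAdef, dif_pos h]
      exact (hf (σ ⟨i, h⟩)).comp_continuous
        (continuous_snd.comp continuous_subtype_val) hmem
    · simp only [hAdef, dif_neg h]
      exact continuous_const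
  have contx : Continuous fun p : ↥(Set.univ ×ˢ Set.Ioc c s : Set (ℝ × ℝ)) =>
      (p : ℝ × ℝ).1 := continuous_fst.comp continuous_subtype_val
  -- joint continuity of the forward map
  have contF : Continuous fun p : ↥(Set.univ ×ˢ Set.Ioc c s : Set (ℝ × ℝ)) =>
      pl k (fun i => A i (p : ℝ × ℝ).2) B (p : ℝ × ℝ).1 := by
    unfold pl
    refine Continuous.add (Continuous.add (Continuous.add ?_ ?_) ?_) ?_
    · exact continuous_const.sub (contA 0)
    · exact contx.min (contA 0)
    · refine continuous_finset_sum _ (fun i hi => ?_)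
      rw [Finset.mem_range] at hi
      have hik : i + 1 < k := by omega
      refine Continuous.mul ?_ ?_
      · exact continuous_const.div ((contA (i + 1)).sub (contA i))
          (fun p => ne_of_gt (sub_pos.mpr (hApos _ (hmem p) i hik)))
      · exact ((contx.min (contA (i + 1))).max (contA i)).sub (contA i)
    · exact (contx.max (contA (k - 1))).sub (contA (k - 1))
  -- joint continuity of the inverse map
  have contG : Continuous fun p : ↥(Set.univ ×ˢ Set.Ioc c s : Set (ℝ × ℝ)) =>
      pl k B (fun i => A i (p : ℝ × ℝ).2) (p : ℝ × ℝ).1 := by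
    unfold pl
    refine Continuous.add (Continuous.add (Continuous.add ?_ ?_) ?_) ?_
    · exact (contA 0).sub continuous_const
    · exact contx.min continuous_const
    · refine continuous_finset_sum _ (fun i hi => ?_)
      rw [Finset.mem_range] at hi
      have hik : i + 1 < k := by omega
      refine Continuous.mul ?_ ?_
      · exact ((contA (i + 1)).sub (contA i)).div continuous_const
          (fun p => ne_of_gt (sub_pos.mpr (hBpos i hik)))
      · exact ((contx.min continuous_const).max continuous_const).sub continuous_const
    · exact (contx.max continuous_const).sub continuous_const
  -- the homeomorphism
  refine ⟨{
    toFun := fun p => ⟨(pl k (fun i => A i (p : ℝ × ℝ).2) B (p : ℝ × ℝ).1, (p : ℝ × ℝ).2),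
      Set.mem_prod.mpr ⟨Set.mem_univ _, hmem p⟩⟩
    invFun := fun p => ⟨(pl k B (fun i => A i (p : ℝ × ℝ).2) (p : ℝ × ℝ).1, (p : ℝ × ℝ).2),
      Set.mem_prod.mpr ⟨Set.mem_univ _, hmem p⟩⟩
    left_inv := by
      intro p
      apply Subtype.ext
      apply Prod.ext
      · exact pl_inverse (hApos _ (hmem p)) hBpos hk _
      · rfl
    right_inv := by
      intro p
      apply Subtype.ext
      apply Prod.ext
      · exact pl_inverse hBpos (hApos _ (hmem p)) hk _
      · rfl
    continuous_toFun := (contF.prodMk (continuous_snd.comp continuous_subtype_val)).subtype_mk _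
    continuous_invFun := (contG.prodMk (continuous_snd.comp continuous_subtype_val)).subtype_mk _
    }, fun p => rfl, ?_, ?_⟩
  · -- identity on y = s
    intro p hp
    apply Subtype.ext
    apply Prod.ext
    · show pl k (fun i => A i (p : ℝ × ℝ).2) B (p : ℝ × ℝ).1 = (p : ℝ × ℝ).1
      have hAB : (fun i => A i (p : ℝ × ℝ).2) = B := by
        funext i; rw [hp]
      rw [hAB]
      exact pl_id hBpos hk
    · rfl
  · -- graphs go to vertical segments
    intro i
    have hj : ((σ.symm i : Fin k) : ℕ) < k := (σ.symm i).2
    have hAj : ∀ y, A ((σ.symm i : Fin k) : ℕ) y = f i y := by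
      intro y
      simp only [hAdef, dif_pos hj]
      congr 1
      rw [Fin.eta, Equiv.apply_symm_apply]
    ext r
    simp only [Set.mem_image, Set.mem_setOf_eq]
    constructor
    · rintro ⟨q, ⟨p, hp, rfl⟩, rfl⟩
      refine ⟨hmem p, ?_⟩
      show pl k (fun i' => A i' (p : ℝ × ℝ).2) B (p : ℝ × ℝ).1 = f i s
      rw [hp, ← hAj, pl_apply (hApos _ (hmem p)) hk hj, hBdef]
      exact hAj s
    · rintro ⟨hr2, hr1⟩
      have hmem' : (f i r.2, r.2) ∈ (Set.univ ×ˢ Set.Ioc c s : Set (ℝ × ℝ)) :=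
        Set.mem_prod.mpr ⟨Set.mem_univ _, hr2⟩
      refine ⟨_, ⟨⟨(f i r.2, r.2), hmem'⟩, rfl, rfl⟩, ?_⟩
      show (pl k (fun i' => A i' r.2) B (f i r.2), r.2) = r
      have : pl k (fun i' => A i' r.2) B (f i r.2) = f i s := by
        rw [← hAj, pl_apply (hApos _ hr2) hk hj, hBdef]
        exact hAj s
      rw [this, ← hr1]
end

section
/- Let c < d be real numbers, let {d_i}_{i∈ℕ} ⊂ (c,d] be a sequence with lim_{i→∞} d_i = c, and for each i ∈ ℕ let f_i : (c, d_i] → ℝ be a continuous function such that the graphs of f_i and f_j are disjoint for i ≠ j. Then there exists a homeomorphism η : ℝ×(c,d] → ℝ×(c,d] such that: (i) η(ℝ×{y}) = ℝ×{y} for all y ∈ (c,d]; (ii) for each i ∈ ℕ, η maps the graph {(f_i(y), y) : y ∈ (c, d_i]} of f_i onto a vertical segment {q_i}×(c, d_i] for some q_i ∈ ℝ. -/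
/-!
Two strands that never meet lie on the same side of each other on their whole common domain
(intermediate value theorem), so "lies below" is a strict total order on the strands; embedding
this countable order into `ℝ` gives the heights `q i` of the vertical segments.

Since `t i → c`, the values of `t` together with `d` form a decreasing sequence `level k` that
passes below every `y > c`, and on the band `(level (k + 1), level k]` exactly the finitely many
strands with `level k ≤ t i` are alive. At height `y` in that band, the piecewise linear
homeomorphism of `ℝ` through the nodes `(f i y, q i)` of these strands straightens them. To reach
the chart of the next band continuously, it is followed by a convex combination, linear in `y`,
of the identity and the homeomorphism `bridge k` that turns the chart of band `k` at
`y = level (k + 1)` into the chart of band `k + 1` there; `bridge k` fixes the heights of the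
strands alive in band `k`. Increasing homeomorphisms of `ℝ` form a convex set, and the fiberwise
inverse of a continuous family of them is continuous, so this is a homeomorphism of the strip.
-/

open Set Filter Function Topology

noncomputable section

theorem IsPreconnected.lt_of_lt_of_forall_ne {X α : Type*} [TopologicalSpace X]
    [LinearOrder α] [TopologicalSpace α] [OrderClosedTopology α] {s : Set X} (hs : IsPreconnected s)
    {f g : X → α} (hf : ContinuousOn f s) (hg : ContinuousOn g s) (hne : ∀ x ∈ s, f x ≠ g x)
    {a b : X} (ha : a ∈ s) (hb : b ∈ s) (hab : f a < g a) : f b < g b := by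
  by_contra! hba
  obtain ⟨x, hx, hfg⟩ := hs.intermediate_value₂ ha hb hf hg hab.le hba
  exact hne x hx hfg

theorem Finset.exists_list_pairwise {α : Type*} (r : α → α → Prop) [IsStrictTotalOrder α r]
    (s : Finset α) : ∃ l : List α, (∀ a, a ∈ l ↔ a ∈ s) ∧ l.Pairwise r := by
  classical
  let := linearOrderOfSTO r
  exact ⟨s.sort (· ≤ ·), fun a => s.mem_sort _, s.sortedLT_sort.pairwise⟩

theorem exists_real_strictMono_of_isStrictTotalOrder {α : Type*} [Countable α]
    (r : α → α → Prop) [IsStrictTotalOrder α r] : ∃ q : α → ℝ, ∀ a b, r a b → q a < q b := by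
  classical
  let := linearOrderOfSTO r
  obtain ⟨e⟩ := Order.embedding_from_countable_to_dense α ℝ
  exact ⟨e, fun a b h => e.strictMono h⟩

/-! ### Increasing homeomorphisms of `ℝ` -/

theorem strictMono_convexComb (φ ψ : ℝ ≃o ℝ) {s : ℝ} (hs₀ : 0 ≤ s) (hs₁ : s ≤ 1) :
    StrictMono fun x => (1 - s) * φ x + s * ψ x := by
  intro x y hxy
  have := φ.strictMono hxy
  have := ψ.strictMono hxy
  rcases hs₀.lt_or_eq with hs | rfl <;> nlinarith

theorem surjective_convexComb (φ ψ : ℝ ≃o ℝ) {s : ℝ} (hs₀ : 0 ≤ s) (hs₁ : s ≤ 1) :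
    Surjective fun x => (1 - s) * φ x + s * ψ x := by
  intro z
  have hcont : Continuous fun x => (1 - s) * φ x + s * ψ x := by
    have := φ.continuous; have := ψ.continuous; fun_prop
  set x₁ := min (φ.symm z) (ψ.symm z)
  set x₂ := max (φ.symm z) (ψ.symm z)
  have h₁ : (1 - s) * φ x₁ + s * ψ x₁ ≤ z := by
    have := φ.le_symm_apply.1 (min_le_left (φ.symm z) (ψ.symm z))
    have := ψ.le_symm_apply.1 (min_le_right (φ.symm z) (ψ.symm z))
    nlinarith
  have h₂ : z ≤ (1 - s) * φ x₂ + s * ψ x₂ := by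
    have := φ.symm_apply_le.1 (le_max_left (φ.symm z) (ψ.symm z))
    have := ψ.symm_apply_le.1 (le_max_right (φ.symm z) (ψ.symm z))
    nlinarith
  obtain ⟨x, -, hx⟩ := intermediate_value_Icc min_le_max hcont.continuousOn ⟨h₁, h₂⟩
  exact ⟨x, hx⟩

theorem continuous_orderIso_symm_apply {Y : Type*} [TopologicalSpace Y] (g : Y → ℝ ≃o ℝ)
    (hg : Continuous fun p : ℝ × Y => g p.2 p.1) :
    Continuous fun p : ℝ × Y => (g p.2).symm p.1 := by
  have hg' (x : ℝ) : Continuous fun p : ℝ × Y => g p.2 x :=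
    hg.comp (continuous_const.prodMk continuous_snd)
  refine continuous_iff_continuousAt.2 fun p => tendsto_order.2 ⟨fun a ha => ?_, fun a ha => ?_⟩
  · filter_upwards [(hg' a).continuousAt.eventually_lt continuous_fst.continuousAt
      ((g p.2).lt_symm_apply.1 ha)] with p' hp'
    exact (g p'.2).lt_symm_apply.2 hp'
  · filter_upwards [continuous_fst.continuousAt.eventually_lt (hg' a).continuousAt
      ((g p.2).symm_apply_lt.1 ha)] with p' hp'
    exact (g p'.2).symm_apply_lt.2 hp'

def fiberwiseHomeomorph {Y : Type*} [TopologicalSpace Y] (g : Y → ℝ ≃o ℝ)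
    (hg : Continuous fun p : ℝ × Y => g p.2 p.1) : ℝ × Y ≃ₜ ℝ × Y where
  toFun p := (g p.2 p.1, p.2)
  invFun p := ((g p.2).symm p.1, p.2)
  left_inv p := by simp
  right_inv p := by simp
  continuous_toFun := hg.prodMk continuous_snd
  continuous_invFun := (continuous_orderIso_symm_apply g hg).prodMk continuous_snd

def stripHomeomorphProd (T : Set ℝ) : ↥(univ ×ˢ T : Set (ℝ × ℝ)) ≃ₜ ℝ × T :=
  (Homeomorph.Set.prod univ T).trans ((Homeomorph.Set.univ ℝ).prodCongr (Homeomorph.refl T))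

/-! ### Piecewise linear interpolation -/

def clamp01 (u : ℝ) : ℝ := max 0 (min 1 u)

theorem clamp01_of_nonpos {u : ℝ} (h : u ≤ 0) : clamp01 u = 0 := by
  simp [clamp01, min_le_of_right_le h]

theorem clamp01_of_one_le {u : ℝ} (h : 1 ≤ u) : clamp01 u = 1 := by
  simp [clamp01, min_eq_left h]

theorem abs_mul_clamp01_le (C u : ℝ) : |C * clamp01 u| ≤ |C| := by
  rw [abs_mul, abs_of_nonneg (show 0 ≤ clamp01 u from le_max_left _ _)]
  exact mul_le_of_le_one_right (abs_nonneg C) (max_le zero_le_one (min_le_left _ _))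

theorem continuous_clamp01 : Continuous clamp01 :=
  continuous_const.max (continuous_const.min continuous_id)

theorem strictMono_mul_add_mul_clamp01 {D C : ℝ} (hD : 0 < D) (hDC : 0 < D + C) :
    StrictMono fun u => D * u + C * clamp01 u := by
  intro u v huv
  have h₀ : clamp01 u ≤ clamp01 v := by unfold clamp01; gcongr
  have h₁ : clamp01 v - clamp01 u ≤ v - u := by
    simp only [clamp01, max_def, min_def]; split_ifs <;> linarith
  rcases le_total 0 C with hC | hC <;> nlinarith

/-- The piecewise linear map through the nodes of `l`, a translation outside them. -/
def plInterp : List (ℝ × ℝ) → ℝ → ℝ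
  | [], x => x
  | [(a, b)], x => x - a + b
  | (a₁, b₁) :: (a₂, b₂) :: l, x =>
      plInterp ((a₂, b₂) :: l) x + (a₂ - a₁ - (b₂ - b₁)) * clamp01 ((a₂ - x) / (a₂ - a₁))

def NodesIncreasing (l : List (ℝ × ℝ)) : Prop :=
  l.Pairwise fun p q => p.1 < q.1 ∧ p.2 < q.2

theorem continuous_plInterp : ∀ l : List (ℝ × ℝ), Continuous (plInterp l)
  | [] => continuous_id
  | [(a, b)] => by simp only [plInterp]; fun_prop
  | (_, _) :: (a₂, b₂) :: l => (continuous_plInterp ((a₂, b₂) :: l)).add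
      (continuous_const.mul (continuous_clamp01.comp
        ((continuous_const.sub continuous_id).div_const _)))

theorem exists_abs_plInterp_sub_le : ∀ l : List (ℝ × ℝ), ∃ C, ∀ x, |plInterp l x - x| ≤ C
  | [] => ⟨0, fun x => by simp [plInterp]⟩
  | [(a, b)] => ⟨|b - a|, fun x => (congrArg abs (by ring : x - a + b - x = b - a)).le⟩
  | (a₁, b₁) :: (a₂, b₂) :: l => by
    obtain ⟨C, hC⟩ := exists_abs_plInterp_sub_le ((a₂, b₂) :: l)
    refine ⟨C + |a₂ - a₁ - (b₂ - b₁)|, fun x => ?_⟩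
    have := abs_mul_clamp01_le (a₂ - a₁ - (b₂ - b₁)) ((a₂ - x) / (a₂ - a₁))
    calc |plInterp ((a₁, b₁) :: (a₂, b₂) :: l) x - x|
        = |(plInterp ((a₂, b₂) :: l) x - x) +
            (a₂ - a₁ - (b₂ - b₁)) * clamp01 ((a₂ - x) / (a₂ - a₁))| := by
          rw [plInterp]; ring_nf
      _ ≤ C + |a₂ - a₁ - (b₂ - b₁)| := (abs_add_le _ _).trans (add_le_add (hC x) this)

theorem plInterp_surjective (l : List (ℝ × ℝ)) : Surjective (plInterp l) := by
  obtain ⟨C, hC⟩ := exists_abs_plInterp_sub_le l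
  refine (continuous_plInterp l).surjective ?_ ?_
  · refine tendsto_atTop_mono (fun x => ?_) (tendsto_atTop_add_const_right _ (-C) tendsto_id)
    dsimp only [id]
    linarith [(abs_le.1 (hC x)).1]
  · refine tendsto_atBot_mono (fun x => ?_) (tendsto_atBot_add_const_right _ C tendsto_id)
    dsimp only [id]
    linarith [(abs_le.1 (hC x)).2]

theorem plInterp_cons_of_le_head {a b x : ℝ} {l : List (ℝ × ℝ)}
    (hl : NodesIncreasing ((a, b) :: l)) (hx : x ≤ a) :
    plInterp ((a, b) :: l) x = x - a + b := by
  induction l generalizing a b with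
  | nil => rfl
  | cons p l ih =>
    obtain ⟨a₂, b₂⟩ := p
    obtain ⟨hhead, htail⟩ := List.pairwise_cons.1 hl
    have h₁₂ := hhead (a₂, b₂) List.mem_cons_self
    rw [plInterp, ih htail (hx.trans h₁₂.1.le),
      clamp01_of_one_le (by rw [le_div_iff₀ (by linarith [h₁₂.1])]; linarith)]
    ring

theorem plInterp_cons_cons_of_le {a₁ b₁ a₂ b₂ x : ℝ} {l : List (ℝ × ℝ)}
    (hl : NodesIncreasing ((a₁, b₁) :: (a₂, b₂) :: l)) (hx : a₂ ≤ x) :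
    plInterp ((a₁, b₁) :: (a₂, b₂) :: l) x = plInterp ((a₂, b₂) :: l) x := by
  have h₁₂ := (List.pairwise_cons.1 hl).1 (a₂, b₂) List.mem_cons_self
  rw [plInterp, clamp01_of_nonpos (div_nonpos_of_nonpos_of_nonneg (by linarith) (by linarith)),
    mul_zero, add_zero]

theorem plInterp_of_mem {l : List (ℝ × ℝ)} (hl : NodesIncreasing l) {a b : ℝ}
    (hab : (a, b) ∈ l) : plInterp l a = b := by
  induction l with
  | nil => simp at hab
  | cons p l ih =>
    rcases List.mem_cons.1 hab with rfl | hmem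
    · rw [plInterp_cons_of_le_head hl le_rfl]; ring
    obtain ⟨a₁, b₁⟩ := p
    rcases l with _ | ⟨⟨a₂, b₂⟩, l'⟩
    · simp at hmem
    have ha₂ : a₂ ≤ a := by
      rcases List.mem_cons.1 hmem with h | h
      · exact (Prod.ext_iff.1 h).1.ge
      · exact ((List.pairwise_cons.1 (List.pairwise_cons.1 hl).2).1 _ h).1.le
    rw [plInterp_cons_cons_of_le hl ha₂, ih (List.pairwise_cons.1 hl).2 hmem]

theorem plInterp_strictMono {l : List (ℝ × ℝ)} (hl : NodesIncreasing l) :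
    StrictMono (plInterp l) := by
  induction l with
  | nil => exact strictMono_id
  | cons p l ih =>
    obtain ⟨a₁, b₁⟩ := p
    rcases l with _ | ⟨⟨a₂, b₂⟩, l'⟩
    · exact fun x y hxy => by simpa [plInterp] using hxy
    have h₁₂ := (List.pairwise_cons.1 hl).1 (a₂, b₂) List.mem_cons_self
    refine StrictMonoOn.Iic_union_Ici (a := a₂) ?_ ?_
    · -- on `Iic a₂` the map is `b₂ - g ((a₂ - x) / (a₂ - a₁))` with `g` strictly monotone
      have hg := strictMono_mul_add_mul_clamp01 (D := a₂ - a₁) (C := b₂ - b₁ - (a₂ - a₁))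
        (by linarith) (by linarith)
      intro x hx y hy hxy
      rw [plInterp, plInterp, plInterp_cons_of_le_head (List.pairwise_cons.1 hl).2 hx,
        plInterp_cons_of_le_head (List.pairwise_cons.1 hl).2 hy]
      have := hg (show (a₂ - y) / (a₂ - a₁) < (a₂ - x) / (a₂ - a₁) by gcongr; linarith)
      have hD : a₂ - a₁ ≠ 0 := by linarith
      simp only [mul_div_cancel₀ _ hD] at this
      linarith
    · intro x hx y hy hxy
      rw [plInterp_cons_cons_of_le hl hx, plInterp_cons_cons_of_le hl hy]
      exact ih (List.pairwise_cons.1 hl).2 hxy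

def plIso (l : List (ℝ × ℝ)) (hl : NodesIncreasing l) : ℝ ≃o ℝ :=
  (plInterp_strictMono hl).orderIsoOfSurjective _ (plInterp_surjective l)

theorem continuousOn_plInterp {Z ι : Type*} [TopologicalSpace Z] {s : Set Z} {L : List ι}
    {a : ι → Z → ℝ} (b : ι → ℝ) {x : Z → ℝ} (ha : ∀ i ∈ L, ContinuousOn (a i) s)
    (hL : L.IsChain fun i j => ∀ z ∈ s, a i z ≠ a j z) (hx : ContinuousOn x s) :
    ContinuousOn (fun z => plInterp (L.map fun i => (a i z, b i)) (x z)) s := by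
  induction L with
  | nil => exact hx
  | cons i L ih =>
    rcases L with _ | ⟨j, L'⟩
    · exact (hx.sub (ha i List.mem_cons_self)).add continuousOn_const
    have hij := (List.isChain_cons_cons.1 hL).1
    have hai := ha i List.mem_cons_self
    have haj := ha j (List.mem_cons_of_mem _ List.mem_cons_self)
    have htail := ih (fun k hk => ha k (List.mem_cons_of_mem _ hk)) (List.isChain_cons_cons.1 hL).2
    show ContinuousOn (fun z => plInterp ((a j z, b j) :: L'.map fun i => (a i z, b i)) (x z) +
      (a j z - a i z - (b j - b i)) * clamp01 ((a j z - x z) / (a j z - a i z))) s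
    exact htail.add
      (((haj.sub hai).sub continuousOn_const).mul (continuous_clamp01.comp_continuousOn
        ((haj.sub hx).div (haj.sub hai) fun z hz => sub_ne_zero.2 (hij z hz).symm)))

/-! ### Families of disjoint graphs -/

structure StrandFamily (c d : ℝ) where
  t : ℕ → ℝ
  f : ℕ → ℝ → ℝ
  t_mem : ∀ i, t i ∈ Ioc c d
  tendsto_t : Tendsto t atTop (𝓝 c)
  continuousOn_f : ∀ i, ContinuousOn (f i) (Ioc c (t i))
  f_ne : ∀ i j, i ≠ j → ∀ y, y ∈ Ioc c (t i) → y ∈ Ioc c (t j) → f i y ≠ f j y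

namespace StrandFamily

variable {c d : ℝ} (S : StrandFamily c d)

def Below (i j : ℕ) : Prop :=
  S.f i (min (S.t i) (S.t j)) < S.f j (min (S.t i) (S.t j))

theorem below_iff {i j : ℕ} {y : ℝ} (hy : c < y) (hyi : y ≤ S.t i) (hyj : y ≤ S.t j) :
    S.Below i j ↔ S.f i y < S.f j y := by
  obtain rfl | hij := eq_or_ne i j
  · simp [Below]
  set I := Ioc c (min (S.t i) (S.t j))
  have hm : min (S.t i) (S.t j) ∈ I := ⟨lt_min (S.t_mem i).1 (S.t_mem j).1, le_rfl⟩
  have hy : y ∈ I := ⟨hy, le_min hyi hyj⟩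
  have hi : I ⊆ Ioc c (S.t i) := Ioc_subset_Ioc_right (min_le_left _ _)
  have hj : I ⊆ Ioc c (S.t j) := Ioc_subset_Ioc_right (min_le_right _ _)
  have hfi := (S.continuousOn_f i).mono hi
  have hfj := (S.continuousOn_f j).mono hj
  have hne (z) (hz : z ∈ I) := S.f_ne i j hij z (hi hz) (hj hz)
  exact ⟨isPreconnected_Ioc.lt_of_lt_of_forall_ne hfi hfj hne hm hy,
    isPreconnected_Ioc.lt_of_lt_of_forall_ne hfi hfj hne hy hm⟩

instance : IsStrictTotalOrder ℕ S.Below where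
  irrefl i := lt_irrefl _
  trichotomous i j hij hji := by
    by_contra hne
    have hm := lt_min (S.t_mem i).1 (S.t_mem j).1
    rw [S.below_iff hm (min_le_left _ _) (min_le_right _ _)] at hij
    rw [S.below_iff hm (min_le_right _ _) (min_le_left _ _)] at hji
    exact S.f_ne i j hne _ ⟨hm, min_le_left _ _⟩ ⟨hm, min_le_right _ _⟩
      (le_antisymm (not_lt.1 hji) (not_lt.1 hij))
  trans i j k hij hjk := by
    set m := min (S.t i) (min (S.t j) (S.t k))
    have hm : c < m := lt_min (S.t_mem i).1 (lt_min (S.t_mem j).1 (S.t_mem k).1)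
    have hmi : m ≤ S.t i := min_le_left _ _
    have hmj : m ≤ S.t j := (min_le_right _ _).trans (min_le_left _ _)
    have hmk : m ≤ S.t k := (min_le_right _ _).trans (min_le_right _ _)
    rw [S.below_iff hm hmi hmj] at hij
    rw [S.below_iff hm hmj hmk] at hjk
    exact (S.below_iff hm hmi hmk).2 (hij.trans hjk)

def q : ℕ → ℝ := (exists_real_strictMono_of_isStrictTotalOrder S.Below).choose

theorem q_lt_q {i j : ℕ} (h : S.Below i j) : S.q i < S.q j :=
  (exists_real_strictMono_of_isStrictTotalOrder S.Below).choose_spec i j h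

theorem finite_setOf_le_t {r : ℝ} (hr : c < r) : {i | r ≤ S.t i}.Finite := by
  have h : ∀ᶠ i in cofinite, S.t i < r :=
    Nat.cofinite_eq_atTop ▸ S.tendsto_t.eventually (eventually_lt_nhds hr)
  simpa using h

theorem exists_max_t_lt {r : ℝ} (hr : c < r) :
    ∃ j, S.t j < r ∧ ∀ i, S.t i < r → S.t i ≤ S.t j := by
  obtain ⟨i₀, hi₀⟩ := (S.tendsto_t.eventually (eventually_lt_nhds hr)).exists
  obtain ⟨j, ⟨hj₀, hj⟩, hmax⟩ := exists_max_image {i | S.t i₀ ≤ S.t i ∧ S.t i < r} S.t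
    ((S.finite_setOf_le_t (S.t_mem i₀).1).subset fun i hi => hi.1) ⟨i₀, le_rfl, hi₀⟩
  refine ⟨j, hj, fun i hi => ?_⟩
  rcases le_total (S.t i₀) (S.t i) with h | h
  · exact hmax i ⟨h, hi⟩
  · exact h.trans hj₀

def level : ℕ → ℝ
  | 0 => d
  | k + 1 => sSup (S.t '' {i | S.t i < level k})

theorem exists_level_succ_eq_t {k : ℕ} (hk : c < S.level k) :
    ∃ j, S.t j < S.level k ∧ (∀ i, S.t i < S.level k → S.t i ≤ S.t j) ∧
      S.level (k + 1) = S.t j := by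
  obtain ⟨j, hj, hmax⟩ := S.exists_max_t_lt hk
  refine ⟨j, hj, hmax, IsGreatest.csSup_eq ⟨⟨j, hj, rfl⟩, ?_⟩⟩
  rintro _ ⟨i, hi, rfl⟩
  exact hmax i hi

theorem lt_level : ∀ k, c < S.level k
  | 0 => (S.t_mem 0).1.trans_le (S.t_mem 0).2
  | k + 1 => by
    obtain ⟨j, -, -, hj⟩ := S.exists_level_succ_eq_t (lt_level k)
    exact hj ▸ (S.t_mem j).1

theorem level_succ_lt (k : ℕ) : S.level (k + 1) < S.level k := by
  obtain ⟨j, hj, -, hj'⟩ := S.exists_level_succ_eq_t (S.lt_level k)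
  exact hj' ▸ hj

theorem t_le_level_succ {k i : ℕ} (hi : S.t i < S.level k) : S.t i ≤ S.level (k + 1) := by
  obtain ⟨j, -, hmax, hj⟩ := S.exists_level_succ_eq_t (S.lt_level k)
  exact hj ▸ hmax i hi

theorem strictAnti_level : StrictAnti S.level :=
  strictAnti_nat_of_succ_lt S.level_succ_lt

theorem exists_level_succ_lt {y : ℝ} (hy : c < y) : ∃ k, S.level (k + 1) < y := by
  by_contra! h
  choose j _ _ hj using fun k => S.exists_level_succ_eq_t (S.lt_level k)
  have hinj : Injective j := fun a b hab =>
    Nat.succ_injective (S.strictAnti_level.injective ((hj a).trans (hab ▸ (hj b).symm)))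
  exact infinite_of_injective_forall_mem hinj (fun k => show y ≤ S.t (j k) from hj k ▸ h k)
    (S.finite_setOf_le_t hy)

theorem le_t_iff_level_le {k i : ℕ} {y : ℝ} (hy : y ∈ Ioc (S.level (k + 1)) (S.level k)) :
    y ≤ S.t i ↔ S.level k ≤ S.t i :=
  ⟨fun h => not_lt.1 fun h' => ((S.t_le_level_succ h').trans_lt hy.1).not_ge h,
    fun h => hy.2.trans h⟩

def band (y : Ioc c d) : ℕ :=
  Nat.find (S.exists_level_succ_lt y.2.1)

theorem mem_Ioc_band (y : Ioc c d) :
    (y : ℝ) ∈ Ioc (S.level (S.band y + 1)) (S.level (S.band y)) := by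
  refine ⟨Nat.find_spec (S.exists_level_succ_lt y.2.1), ?_⟩
  rcases h : S.band y with _ | k
  · exact y.2.2
  · exact not_lt.1 <|
      Nat.find_min (S.exists_level_succ_lt y.2.1) (h ▸ k.lt_succ_self : k < S.band y)

theorem band_eq {y : Ioc c d} {k : ℕ} (hy : (y : ℝ) ∈ Ioc (S.level (k + 1)) (S.level k)) :
    S.band y = k :=
  (Nat.find_eq_iff _).2 ⟨hy.1, fun _ hn =>
    not_lt.2 (hy.2.trans (S.strictAnti_level.antitone (Nat.succ_le_of_lt hn)))⟩

theorem exists_active (k : ℕ) :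
    ∃ l : List ℕ, (∀ i, i ∈ l ↔ i ∈ (S.finite_setOf_le_t (S.lt_level k)).toFinset) ∧
      l.Pairwise S.Below :=
  Finset.exists_list_pairwise S.Below _

def active (k : ℕ) : List ℕ :=
  (S.exists_active k).choose

theorem mem_active {k i : ℕ} : i ∈ S.active k ↔ S.level k ≤ S.t i := by
  rw [active, (S.exists_active k).choose_spec.1, Set.Finite.mem_toFinset, mem_ofPred_eq]

theorem pairwise_active (k : ℕ) : (S.active k).Pairwise S.Below :=
  (S.exists_active k).choose_spec.2

def nodes (k : ℕ) (y : ℝ) : List (ℝ × ℝ) :=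
  (S.active k).map fun i => (S.f i y, S.q i)

theorem nodesIncreasing_nodes {k : ℕ} {y : ℝ} (hy : y ∈ Ioc c (S.level k)) :
    NodesIncreasing (S.nodes k y) :=
  List.pairwise_map.2 <| (S.pairwise_active k).imp_of_mem fun hi hj hij =>
    ⟨(S.below_iff hy.1 (hy.2.trans (S.mem_active.1 hi))
      (hy.2.trans (S.mem_active.1 hj))).1 hij, S.q_lt_q hij⟩

theorem plInterp_nodes_f {k i : ℕ} {y : ℝ} (hy : y ∈ Ioc c (S.level k))
    (hi : i ∈ S.active k) :
    plInterp (S.nodes k y) (S.f i y) = S.q i :=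
  plInterp_of_mem (S.nodesIncreasing_nodes hy) (List.mem_map_of_mem hi)

theorem continuousOn_plInterp_nodes (k : ℕ) :
    ContinuousOn (fun p : ℝ × ℝ => plInterp (S.nodes k p.2) p.1)
      {p | p.2 ∈ Ioc c (S.level k)} := by
  have hdom {i : ℕ} (hi : i ∈ S.active k) {y : ℝ} (hy : y ∈ Ioc c (S.level k)) :
      y ∈ Ioc c (S.t i) :=
    ⟨hy.1, hy.2.trans (S.mem_active.1 hi)⟩
  refine continuousOn_plInterp (a := fun i p => S.f i p.2) S.q (fun i hi => ?_) ?_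
    continuous_fst.continuousOn
  · exact (S.continuousOn_f i).comp continuous_snd.continuousOn fun p hp => hdom hi hp
  · exact ((S.pairwise_active k).imp_of_mem fun hi hj hij (p : ℝ × ℝ) hp =>
      S.f_ne _ _ (ne_of_irrefl hij) p.2 (hdom hi hp) (hdom hj hp)).isChain

def chart (k : ℕ) (y : ℝ) (hy : y ∈ Ioc c (S.level k)) : ℝ ≃o ℝ :=
  plIso (S.nodes k y) (S.nodesIncreasing_nodes hy)

theorem level_succ_mem (k : ℕ) : S.level (k + 1) ∈ Ioc c (S.level k) :=
  ⟨S.lt_level _, (S.level_succ_lt k).le⟩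

theorem level_mem (k : ℕ) : S.level k ∈ Ioc c (S.level k) :=
  ⟨S.lt_level k, le_rfl⟩

def bridge (k : ℕ) : ℝ ≃o ℝ :=
  (S.chart k _ (S.level_succ_mem k)).symm.trans (S.chart (k + 1) _ (S.level_mem (k + 1)))

theorem bridge_q {k i : ℕ} (hi : i ∈ S.active k) : S.bridge k (S.q i) = S.q i := by
  have hi' : i ∈ S.active (k + 1) :=
    S.mem_active.2 ((S.level_succ_lt k).le.trans (S.mem_active.1 hi))
  calc S.bridge k (S.q i)
      = plInterp (S.nodes (k + 1) (S.level (k + 1))) (S.f i (S.level (k + 1))) := by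
        rw [bridge, OrderIso.trans_apply, (OrderIso.symm_apply_eq _).2
          (S.plInterp_nodes_f (S.level_succ_mem k) hi).symm]
        rfl
    _ = S.q i := S.plInterp_nodes_f (S.level_mem _) hi'

def bandParam (k : ℕ) (y : ℝ) : ℝ :=
  (S.level k - y) / (S.level k - S.level (k + 1))

def bandMap (k : ℕ) (y x : ℝ) : ℝ :=
  (1 - S.bandParam k y) * plInterp (S.nodes k y) x +
    S.bandParam k y * S.bridge k (plInterp (S.nodes k y) x)

theorem bandParam_mem {k : ℕ} {y : ℝ} (hy : y ∈ Icc (S.level (k + 1)) (S.level k)) :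
    S.bandParam k y ∈ Icc 0 1 := by
  have h := sub_pos.2 (S.level_succ_lt k)
  exact ⟨div_nonneg (by linarith [hy.2]) h.le, (div_le_one h).2 (by linarith [hy.1])⟩

theorem strictMono_bandMap {k : ℕ} {y : ℝ} (hy : y ∈ Icc (S.level (k + 1)) (S.level k)) :
    StrictMono (S.bandMap k y) :=
  have hy' : y ∈ Ioc c (S.level k) := ⟨(S.lt_level _).trans_le hy.1, hy.2⟩
  strictMono_convexComb (S.chart k y hy') ((S.chart k y hy').trans (S.bridge k))
    (S.bandParam_mem hy).1 (S.bandParam_mem hy).2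

theorem surjective_bandMap {k : ℕ} {y : ℝ} (hy : y ∈ Icc (S.level (k + 1)) (S.level k)) :
    Surjective (S.bandMap k y) :=
  have hy' : y ∈ Ioc c (S.level k) := ⟨(S.lt_level _).trans_le hy.1, hy.2⟩
  surjective_convexComb (S.chart k y hy') ((S.chart k y hy').trans (S.bridge k))
    (S.bandParam_mem hy).1 (S.bandParam_mem hy).2

theorem bandMap_f {k i : ℕ} {y : ℝ} (hy : y ∈ Ioc c (S.level k)) (hi : i ∈ S.active k) :
    S.bandMap k y (S.f i y) = S.q i := by
  rw [bandMap, S.plInterp_nodes_f hy hi, S.bridge_q hi]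
  ring

theorem bandMap_level_succ (k : ℕ) (x : ℝ) :
    S.bandMap k (S.level (k + 1)) x = S.bandMap (k + 1) (S.level (k + 1)) x := by
  have h₁ : S.bandParam k (S.level (k + 1)) = 1 :=
    div_self (sub_ne_zero.2 (S.level_succ_lt k).ne')
  have h₀ : S.bandParam (k + 1) (S.level (k + 1)) = 0 := by simp [bandParam]
  have hbridge : S.bridge k (plInterp (S.nodes k (S.level (k + 1))) x) =
      plInterp (S.nodes (k + 1) (S.level (k + 1))) x :=
    congrArg (S.chart (k + 1) _ (S.level_mem (k + 1)))
      ((S.chart k _ (S.level_succ_mem k)).symm_apply_apply x)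
  rw [bandMap, bandMap, h₀, h₁, hbridge]
  ring

theorem continuousOn_bandMap (k : ℕ) :
    ContinuousOn (fun p : ℝ × ℝ => S.bandMap k p.2 p.1)
      {p | p.2 ∈ Icc (S.level (k + 1)) (S.level k)} := by
  have hchart := (S.continuousOn_plInterp_nodes k).mono
    fun p (hp : p.2 ∈ Icc (S.level (k + 1)) (S.level k)) =>
      (⟨(S.lt_level (k + 1)).trans_le hp.1, hp.2⟩ : p.2 ∈ Ioc c (S.level k))
  have hs : Continuous fun p : ℝ × ℝ => S.bandParam k p.2 := by
    unfold bandParam; fun_prop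
  exact ((continuous_const.sub hs).continuousOn.mul hchart).add
    (hs.continuousOn.mul ((S.bridge k).continuous.comp_continuousOn hchart))

def straighten (y : Ioc c d) : ℝ → ℝ :=
  S.bandMap (S.band y) y

theorem straighten_eq_bandMap {y : Ioc c d} {k : ℕ}
    (hy : (y : ℝ) ∈ Icc (S.level (k + 1)) (S.level k)) : S.straighten y = S.bandMap k y := by
  rcases hy.1.eq_or_lt with h | h
  · rw [straighten, S.band_eq (k := k + 1) ⟨h ▸ S.level_succ_lt (k + 1), h.ge⟩, ← h]
    exact funext fun x => (S.bandMap_level_succ k x).symm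
  · rw [straighten, S.band_eq ⟨h, hy.2⟩]

theorem continuous_straighten : Continuous fun p : ℝ × Ioc c d => S.straighten p.2 p.1 := by
  have hy : Continuous fun p : ℝ × Ioc c d => (p.2 : ℝ) :=
    continuous_subtype_val.comp continuous_snd
  refine LocallyFinite.continuous
    (f := fun k => {p : ℝ × Ioc c d | (p.2 : ℝ) ∈ Icc (S.level (k + 1)) (S.level k)})
    (fun p => ?_) ?_ (fun k => isClosed_Icc.preimage hy) fun k => ?_
  · -- the bands accumulate only at `c`, which is not in the strip
    obtain ⟨K, hK⟩ := S.exists_level_succ_lt p.2.2.1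
    refine ⟨{p' | S.level (K + 1) < p'.2}, (isOpen_lt continuous_const hy).mem_nhds hK,
      (finite_Iic K).subset ?_⟩
    rintro k ⟨p', hp'B, hp'U⟩
    exact Nat.lt_succ_iff.1 (S.strictAnti_level.lt_iff_gt.1 (hp'U.trans_le hp'B.2))
  · exact iUnion_eq_univ_iff.2 fun p => ⟨S.band p.2, Ioc_subset_Icc_self (S.mem_Ioc_band p.2)⟩
  · refine ((S.continuousOn_bandMap k).comp (continuous_fst.prodMk hy).continuousOn
      fun p hp => hp).congr fun p hp => ?_
    simp [S.straighten_eq_bandMap hp]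

def straightenIso (y : Ioc c d) : ℝ ≃o ℝ :=
  have hy := Ioc_subset_Icc_self (S.mem_Ioc_band y)
  (S.strictMono_bandMap hy).orderIsoOfSurjective _ (S.surjective_bandMap hy)

theorem straighten_f {i : ℕ} (y : Ioc c d) (hy : (y : ℝ) ≤ S.t i) :
    S.straighten y (S.f i y) = S.q i :=
  S.bandMap_f ⟨y.2.1, (S.mem_Ioc_band y).2⟩
    (S.mem_active.2 ((S.le_t_iff_level_le (S.mem_Ioc_band y)).1 hy))

def straightening :
    ↥(univ ×ˢ Ioc c d : Set (ℝ × ℝ)) ≃ₜ ↥(univ ×ˢ Ioc c d : Set (ℝ × ℝ)) :=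
  (stripHomeomorphProd (Ioc c d)).trans <|
    (fiberwiseHomeomorph S.straightenIso S.continuous_straighten).trans
      (stripHomeomorphProd _).symm

theorem coe_straightening (p : ↥(univ ×ˢ Ioc c d : Set (ℝ × ℝ))) :
    (S.straightening p : ℝ × ℝ) = (S.straighten ⟨p.1.2, p.2.2⟩ p.1.1, p.1.2) :=
  rfl

theorem image_straightening_graph (i : ℕ) :
    Subtype.val '' (S.straightening '' {p | (p : ℝ × ℝ).2 ∈ Ioc c (S.t i) ∧
      (p : ℝ × ℝ).1 = S.f i (p : ℝ × ℝ).2}) =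
      {r : ℝ × ℝ | r.2 ∈ Ioc c (S.t i) ∧ r.1 = S.q i} := by
  ext ⟨x, y⟩
  constructor
  · rintro ⟨_, ⟨p, ⟨hy, hx⟩, rfl⟩, hp⟩
    obtain ⟨rfl, rfl⟩ := Prod.ext_iff.1 hp
    refine ⟨hy, ?_⟩
    rw [coe_straightening, hx]
    exact S.straighten_f _ hy.2
  · rintro ⟨hy, rfl⟩
    refine ⟨_, ⟨⟨(S.f i y, y), trivial, hy.1, hy.2.trans (S.t_mem i).2⟩, ⟨hy, rfl⟩, rfl⟩, ?_⟩
    exact Prod.ext (S.straighten_f ⟨y, _⟩ hy.2) rfl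

end StrandFamily

theorem stmt17_general (c d : ℝ) (t : ℕ → ℝ) (ht : ∀ i, t i ∈ Set.Ioc c d)
    (htc : Filter.Tendsto t Filter.atTop (nhds c))
    (f : ℕ → ℝ → ℝ) (hf : ∀ i, ContinuousOn (f i) (Set.Ioc c (t i)))
    (hdisj : ∀ i j, i ≠ j →
      ∀ y, y ∈ Set.Ioc c (t i) → y ∈ Set.Ioc c (t j) → f i y ≠ f j y) :
    ∃ η : ↥(Set.univ ×ˢ Set.Ioc c d : Set (ℝ × ℝ)) ≃ₜ
          ↥(Set.univ ×ˢ Set.Ioc c d : Set (ℝ × ℝ)),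
      (∀ p : ↥(Set.univ ×ˢ Set.Ioc c d : Set (ℝ × ℝ)),
        ((η p : ℝ × ℝ)).2 = (p : ℝ × ℝ).2) ∧
      (∀ i, ∃ q : ℝ, Subtype.val '' (⇑η ''
          {p : ↥(Set.univ ×ˢ Set.Ioc c d : Set (ℝ × ℝ)) |
            (p : ℝ × ℝ).2 ∈ Set.Ioc c (t i) ∧ (p : ℝ × ℝ).1 = f i (p : ℝ × ℝ).2}) =
        {r : ℝ × ℝ | r.2 ∈ Set.Ioc c (t i) ∧ r.1 = q}) := by
  let S : StrandFamily c d := ⟨t, f, ht, htc, hf, hdisj⟩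
  exact ⟨S.straightening, fun p => rfl, fun i => ⟨S.q i, S.image_straightening_graph i⟩⟩

/-- given a sequence of levels `t i ∈ (c,d]` tending to `c` and continuous
functions `f i : (c, t i] → ℝ` with pairwise disjoint graphs, there is a homeomorphism of
the strip `ℝ × (c,d]` preserving each horizontal line and mapping the graph of each `f i`
onto a vertical segment `{q i} × (c, t i]`. -/
theorem stmt17 (c d : ℝ) (hcd : c < d) (t : ℕ → ℝ) (ht : ∀ i, t i ∈ Set.Ioc c d)
    (htc : Filter.Tendsto t Filter.atTop (nhds c))
    (f : ℕ → ℝ → ℝ) (hf : ∀ i, ContinuousOn (f i) (Set.Ioc c (t i)))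
    (hdisj : ∀ i j, i ≠ j →
      ∀ y, y ∈ Set.Ioc c (t i) → y ∈ Set.Ioc c (t j) → f i y ≠ f j y) :
    ∃ η : ↥(Set.univ ×ˢ Set.Ioc c d : Set (ℝ × ℝ)) ≃ₜ
          ↥(Set.univ ×ˢ Set.Ioc c d : Set (ℝ × ℝ)),
      (∀ p : ↥(Set.univ ×ˢ Set.Ioc c d : Set (ℝ × ℝ)),
        ((η p : ℝ × ℝ)).2 = (p : ℝ × ℝ).2) ∧
      (∀ i, ∃ q : ℝ, Subtype.val '' (⇑η ''
          {p : ↥(Set.univ ×ˢ Set.Ioc c d : Set (ℝ × ℝ)) |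
            (p : ℝ × ℝ).2 ∈ Set.Ioc c (t i) ∧ (p : ℝ × ℝ).1 = f i (p : ℝ × ℝ).2}) =
        {r : ℝ × ℝ | r.2 ∈ Set.Ioc c (t i) ∧ r.1 = q}) :=
  stmt17_general c d t ht htc f hf hdisj
end
end

section
/- Let c < d be real numbers and for each i ∈ ℕ let T_i ⊂ ℝ×(c,d] be a half open trapezoid with upper base at level d_i ∈ (c,d], such that T_i ∩ T_j = ∅ for i ≠ j and lim_{i→∞} d_i = c. Then there exists a homeomorphism η : ℝ×(c,d] → ℝ×(c,d] such that: (i) η(ℝ×{y}) = ℝ×{y} for all y ∈ (c,d]; (ii) for each i ∈ ℕ, η(T_i) is a half open rectangle, i.e. a set of the form [a_i, b_i]×(c, d_i] with a_i < b_i. -/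
/-!
Sort the trapezoids by decreasing level of the upper base (a level `y > c` meets only finitely
many of them) and straighten them one at a time. When trapezoid `n` is treated, the earlier
ones are already rectangles reaching at least as high, and by connectedness of the levels
trapezoid `n` lies between the same two of them at every level. Two piecewise linear maps of
each horizontal line, supported between these neighbours and depending continuously on the
level, move the sides of trapezoid `n` onto vertical lines; above its upper base they are the
identity. So at every level `y > c` the construction becomes stationary after finitely many
steps, and the limit is the required homeomorphism.
-/

open Set Filter Topology Function

theorem finite_setOf_le_of_tendsto {t : ℕ → ℝ} {c x : ℝ} (ht : Tendsto t atTop (𝓝 c))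
    (hx : c < x) : {j | x ≤ t j}.Finite := by
  have : ∀ᶠ j in cofinite, t j < x := Nat.cofinite_eq_atTop ▸ ht.eventually_lt_const hx
  simpa only [not_lt] using eventually_cofinite.1 this

theorem exists_bijective_antitone_comp {α : Type*} [LinearOrder α] (t : ℕ → α)
    (hfin : ∀ i, {j | t i ≤ t j}.Finite) : ∃ σ : ℕ → ℕ, σ.Bijective ∧ Antitone (t ∘ σ) := by
  classical
  let key : ℕ → αᵒᵈ ×ₗ ℕ := fun i => toLex (OrderDual.toDual (t i), i)
  have le_of_key_le {i j} (h : key i ≤ key j) : t j ≤ t i := Prod.Lex.monotone_fst _ _ h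
  -- every `i` has finitely many `key`-predecessors, so counting them embeds `key`'s order in `ℕ`
  let rank (i : ℕ) : ℕ := {j | key j < key i}.ncard
  have rank_lt {i j} (h : key i < key j) : rank i < rank j :=
    ncard_lt_ncard ⟨fun k hk => lt_trans hk h, fun hsub => lt_irrefl (key i) (hsub h)⟩
      ((hfin j).subset fun k hk => le_of_key_le hk.le)
  have rank_inj : Injective rank := fun i j h => by
    have : key i = key j := by
      by_contra hne
      rcases lt_or_gt_of_ne hne with hlt | hlt <;> have := rank_lt hlt <;> omega
    exact (congrArg (fun x => (ofLex x).2) this :)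
  have : Infinite (range rank) := (infinite_range_of_injective rank_inj).to_subtype
  let e := Nat.Subtype.orderIsoOfNat (range rank)
  refine ⟨(Equiv.ofInjective rank rank_inj).symm ∘ e,
    (Equiv.ofInjective rank rank_inj).symm.bijective.comp e.bijective, fun k l hkl => ?_⟩
  have hrank : ∀ k, rank ((Equiv.ofInjective rank rank_inj).symm (e k)) = e k :=
    fun k => Equiv.apply_ofInjective_symm rank_inj _
  refine le_of_key_le (not_lt.1 fun h => ?_)
  have := rank_lt h
  simp only [comp_apply, hrank] at this
  exact absurd (e.monotone hkl) (not_le.2 this)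

noncomputable section

def ramp (l r x : ℝ) : ℝ := min (max ((x - l) / (r - l)) 0) 1

section Ramp

variable {l r x y : ℝ}

theorem ramp_of_le (hlr : l ≤ r) (hx : x ≤ l) : ramp l r x = 0 := by
  have : (x - l) / (r - l) ≤ 0 := div_nonpos_of_nonpos_of_nonneg (by linarith) (by linarith)
  simp [ramp, max_eq_right this]

theorem ramp_of_ge (hlr : l < r) (hx : r ≤ x) : ramp l r x = 1 := by
  have : 1 ≤ (x - l) / (r - l) := by rw [le_div_iff₀ (by linarith)]; linarith
  simp [ramp, max_eq_left (zero_le_one.trans this), this]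

theorem ramp_of_mem (hlr : l < r) (hx : x ∈ Icc l r) : ramp l r x = (x - l) / (r - l) := by
  have h₀ : 0 ≤ (x - l) / (r - l) := div_nonneg (by linarith [hx.1]) (by linarith)
  have h₁ : (x - l) / (r - l) ≤ 1 := by rw [div_le_one (by linarith)]; linarith [hx.2]
  simp [ramp, max_eq_left h₀, h₁]

theorem ramp_sub_ramp_mem (hlr : l < r) (hxy : x ≤ y) :
    ramp l r y - ramp l r x ∈ Icc 0 ((y - x) / (r - l)) := by
  have hz : (x - l) / (r - l) ≤ (y - l) / (r - l) := by gcongr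
  have hd : (y - l) / (r - l) - (x - l) / (r - l) = (y - x) / (r - l) := by ring
  rw [← hd]
  simp only [ramp]
  generalize (x - l) / (r - l) = z₁ at hz ⊢
  generalize (y - l) / (r - l) = z₂ at hz ⊢
  simp only [mem_Icc, min_def, max_def]
  split_ifs <;> constructor <;> linarith

theorem ContinuousOn.ramp {X : Type*} [TopologicalSpace X] {s : Set X} {l r x : X → ℝ}
    (hl : ContinuousOn l s) (hr : ContinuousOn r s) (hx : ContinuousOn x s)
    (hlr : ∀ z ∈ s, l z < r z) : ContinuousOn (fun z => ramp (l z) (r z) (x z)) s :=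
  have hdiv : ContinuousOn (fun z => (x z - l z) / (r z - l z)) s :=
    (hx.sub hl).div (hr.sub hl) fun z hz => sub_ne_zero.2 (hlr z hz).ne'
  (hdiv.sup continuousOn_const).inf continuousOn_const

end Ramp

/-- For `u < p < v` and `u < a < v`: the homeomorphism of `ℝ` which is the identity outside
`(u, v)` and maps `[u, p]` and `[p, v]` affinely onto `[u, a]` and `[a, v]`. -/
def pivot (u p v a x : ℝ) : ℝ := x + (a - p) * (ramp u p x - ramp p v x)

section Pivot

variable {u p v a x : ℝ}

theorem pivot_of_le (hup : u < p) (hpv : p < v) (hx : x ≤ u) : pivot u p v a x = x := by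
  simp [pivot, ramp_of_le hup.le hx, ramp_of_le hpv.le (hx.trans hup.le)]

theorem pivot_of_ge (hup : u < p) (hpv : p < v) (hx : v ≤ x) : pivot u p v a x = x := by
  simp [pivot, ramp_of_ge hup (hpv.le.trans hx), ramp_of_ge hpv hx]

theorem pivot_eq_of_mem_left (hup : u < p) (hpv : p < v) (hx : x ∈ Icc u p) :
    pivot u p v a x = u + (a - u) / (p - u) * (x - u) := by
  rw [pivot, ramp_of_mem hup hx, ramp_of_le hpv.le hx.2]
  field_simp [(sub_pos.2 hup).ne']
  ring

theorem pivot_eq_of_mem_right (hup : u < p) (hpv : p < v) (hx : x ∈ Icc p v) :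
    pivot u p v a x = v - (v - a) / (v - p) * (v - x) := by
  rw [pivot, ramp_of_ge hup hx.1, ramp_of_mem hpv hx]
  field_simp [(sub_pos.2 hpv).ne']
  ring

theorem pivot_self (hup : u < p) (hpv : p < v) : pivot u p v a p = a := by
  rw [pivot_eq_of_mem_left hup hpv (right_mem_Icc.2 hup.le)]
  field_simp [(sub_pos.2 hup).ne']
  ring

theorem pivot_same : pivot u p v p x = x := by simp [pivot]

theorem strictMono_pivot (hup : u < p) (hpv : p < v) (hua : u < a) (hav : a < v) :
    StrictMono (pivot u p v a) := by
  intro x y hxy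
  obtain ⟨h₁, h₁'⟩ := ramp_sub_ramp_mem hup hxy.le
  obtain ⟨h₂, h₂'⟩ := ramp_sub_ramp_mem hpv hxy.le
  rw [le_div_iff₀ (by linarith)] at h₁' h₂'
  have hyx : 0 < y - x := by linarith
  have key : 0 < (y - x) + (a - p) * ((ramp u p y - ramp u p x) - (ramp p v y - ramp p v x)) := by
    rcases le_total p a with hpa | hap
    · nlinarith [mul_nonneg (sub_nonneg.2 hpa) h₁, mul_nonneg (sub_pos.2 hav).le h₂]
    · nlinarith [mul_nonneg (sub_nonneg.2 hap) h₂, mul_nonneg (sub_pos.2 hua).le h₁]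
  simp only [pivot]
  linarith

theorem pivot_pivot (hup : u < p) (hpv : p < v) (hua : u < a) (hav : a < v) (x : ℝ) :
    pivot u a v p (pivot u p v a x) = x := by
  have hmono := (strictMono_pivot hup hpv hua hav).monotone
  rcases le_total x u with hxu | hux
  · rw [pivot_of_le hup hpv hxu, pivot_of_le hua hav hxu]
  rcases le_total x p with hxp | hpx
  · have hy : pivot u p v a x ∈ Icc u a := by
      constructor
      · calc u = pivot u p v a u := (pivot_of_le hup hpv le_rfl).symm
          _ ≤ _ := hmono hux
      · calc pivot u p v a x ≤ pivot u p v a p := hmono hxp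
          _ = a := pivot_self hup hpv
    rw [pivot_eq_of_mem_left hua hav hy, pivot_eq_of_mem_left hup hpv ⟨hux, hxp⟩]
    field_simp [(sub_pos.2 hup).ne', (sub_pos.2 hua).ne']
    ring
  rcases le_total x v with hxv | hvx
  · have hy : pivot u p v a x ∈ Icc a v := by
      constructor
      · calc a = pivot u p v a p := (pivot_self hup hpv).symm
          _ ≤ _ := hmono hpx
      · calc pivot u p v a x ≤ pivot u p v a v := hmono hxv
          _ = v := pivot_of_ge hup hpv le_rfl
    rw [pivot_eq_of_mem_right hua hav hy, pivot_eq_of_mem_right hup hpv ⟨hpx, hxv⟩]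
    field_simp [(sub_pos.2 hpv).ne', (sub_pos.2 hav).ne']
    ring
  · rw [pivot_of_ge hup hpv hvx, pivot_of_ge hua hav hvx]

theorem ContinuousOn.pivot {X : Type*} [TopologicalSpace X] {s : Set X} {u p v a x : X → ℝ}
    (hu : ContinuousOn u s) (hp : ContinuousOn p s) (hv : ContinuousOn v s)
    (ha : ContinuousOn a s) (hx : ContinuousOn x s)
    (hup : ∀ z ∈ s, u z < p z) (hpv : ∀ z ∈ s, p z < v z) :
    ContinuousOn (fun z => _root_.pivot (u z) (p z) (v z) (a z) (x z)) s :=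
  hx.add ((ha.sub hp).mul ((hu.ramp hp hx hup).sub (hp.ramp hv hx hpv)))

end Pivot

theorem continuousOn_of_eq_on_levels {s : Set ℝ} {G : ℕ → ℝ → ℝ → ℝ} {H : ℝ → ℝ → ℝ} {τ : ℕ → ℝ}
    (hG : ∀ k, ContinuousOn (fun p : ℝ × ℝ => G k p.2 p.1) (univ ×ˢ s))
    (hτ : ∀ y ∈ s, ∃ k, τ k < y) (hH : ∀ k, ∀ y ∈ s, τ k < y → H y = G k y) :
    ContinuousOn (fun p : ℝ × ℝ => H p.2 p.1) (univ ×ˢ s) := by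
  intro p hp
  obtain ⟨k, hk⟩ := hτ p.2 hp.2
  refine (hG k p hp).congr_of_eventuallyEq ?_ (by rw [hH k _ hp.2 hk])
  filter_upwards [self_mem_nhdsWithin,
    nhdsWithin_le_nhds ((isOpen_lt continuous_const continuous_snd).mem_nhds hk)]
    with q hq hqk
  rw [hH k _ hq.2 hqk]

/-- A homeomorphism of `ℝ × s` mapping each line `ℝ × {y}` increasingly onto itself, given
line by line: `toFun y` is its action on `ℝ × {y}`. -/
structure LevelHomeo (s : Set ℝ) where
  toFun : ℝ → ℝ → ℝ
  invFun : ℝ → ℝ → ℝ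
  continuousOn_toFun : ContinuousOn (fun p : ℝ × ℝ => toFun p.2 p.1) (univ ×ˢ s)
  continuousOn_invFun : ContinuousOn (fun p : ℝ × ℝ => invFun p.2 p.1) (univ ×ˢ s)
  left_inv : ∀ y ∈ s, LeftInverse (invFun y) (toFun y)
  right_inv : ∀ y ∈ s, Function.RightInverse (invFun y) (toFun y)
  strictMono : ∀ y ∈ s, StrictMono (toFun y)

namespace LevelHomeo

variable {s : Set ℝ}

instance : CoeFun (LevelHomeo s) (fun _ => ℝ → ℝ → ℝ) := ⟨toFun⟩

theorem continuousOn_comp {E : LevelHomeo s} {X : Type*} [TopologicalSpace X] {t : Set X}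
    {f g : X → ℝ} (hf : ContinuousOn f t) (hg : ContinuousOn g t) (hgs : MapsTo g t s) :
    ContinuousOn (fun z => E (g z) (f z)) t :=
  E.continuousOn_toFun.comp (hf.prodMk hg) fun _ hz => ⟨trivial, hgs hz⟩

def refl (s : Set ℝ) : LevelHomeo s where
  toFun _ := id
  invFun _ := id
  continuousOn_toFun := continuous_fst.continuousOn
  continuousOn_invFun := continuous_fst.continuousOn
  left_inv _ _ _ := rfl
  right_inv _ _ _ := rfl
  strictMono _ _ := strictMono_id

def trans (E F : LevelHomeo s) : LevelHomeo s where
  toFun y := F y ∘ E y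
  invFun y := E.invFun y ∘ F.invFun y
  continuousOn_toFun := F.continuousOn_toFun.comp (E.continuousOn_toFun.prodMk continuousOn_snd)
    fun _ hp => ⟨trivial, hp.2⟩
  continuousOn_invFun := E.continuousOn_invFun.comp
    (F.continuousOn_invFun.prodMk continuousOn_snd) fun _ hp => ⟨trivial, hp.2⟩
  left_inv y hy := (F.left_inv y hy).comp (E.left_inv y hy)
  right_inv y hy := (F.right_inv y hy).comp (E.right_inv y hy)
  strictMono y hy := (F.strictMono y hy).comp (E.strictMono y hy)

theorem trans_invFun (E F : LevelHomeo s) (y x : ℝ) :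
    (E.trans F).invFun y x = E.invFun y (F.invFun y x) := rfl

def restrict (E : LevelHomeo s) {t : Set ℝ} (hts : t ⊆ s) : LevelHomeo t where
  toFun := E.toFun
  invFun := E.invFun
  continuousOn_toFun := E.continuousOn_toFun.mono (prod_mono subset_rfl hts)
  continuousOn_invFun := E.continuousOn_invFun.mono (prod_mono subset_rfl hts)
  left_inv y hy := E.left_inv y (hts hy)
  right_inv y hy := E.right_inv y (hts hy)
  strictMono y hy := E.strictMono y (hts hy)

def pivot (u p v a : ℝ → ℝ) (hu : ContinuousOn u s) (hp : ContinuousOn p s)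
    (hv : ContinuousOn v s) (ha : ContinuousOn a s) (hup : ∀ y ∈ s, u y < p y)
    (hpv : ∀ y ∈ s, p y < v y) (hua : ∀ y ∈ s, u y < a y) (hav : ∀ y ∈ s, a y < v y) :
    LevelHomeo s where
  toFun y := _root_.pivot (u y) (p y) (v y) (a y)
  invFun y := _root_.pivot (u y) (a y) (v y) (p y)
  continuousOn_toFun := by
    have h : MapsTo Prod.snd (univ ×ˢ s : Set (ℝ × ℝ)) s := fun _ hz => hz.2
    exact (hu.comp continuousOn_snd h).pivot (hp.comp continuousOn_snd h)
      (hv.comp continuousOn_snd h) (ha.comp continuousOn_snd h) continuousOn_fst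
      (fun _ hz => hup _ hz.2) (fun _ hz => hpv _ hz.2)
  continuousOn_invFun := by
    have h : MapsTo Prod.snd (univ ×ˢ s : Set (ℝ × ℝ)) s := fun _ hz => hz.2
    exact (hu.comp continuousOn_snd h).pivot (ha.comp continuousOn_snd h)
      (hv.comp continuousOn_snd h) (hp.comp continuousOn_snd h) continuousOn_fst
      (fun _ hz => hua _ hz.2) (fun _ hz => hav _ hz.2)
  left_inv y hy := pivot_pivot (hup y hy) (hpv y hy) (hua y hy) (hav y hy)
  right_inv y hy := pivot_pivot (hua y hy) (hav y hy) (hup y hy) (hpv y hy)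
  strictMono y hy := strictMono_pivot (hup y hy) (hpv y hy) (hua y hy) (hav y hy)

def toHomeomorph (E : LevelHomeo s) : ↥(univ ×ˢ s : Set (ℝ × ℝ)) ≃ₜ ↥(univ ×ˢ s : Set (ℝ × ℝ)) where
  toFun p := ⟨(E p.1.2 p.1.1, p.1.2), trivial, p.2.2⟩
  invFun p := ⟨(E.invFun p.1.2 p.1.1, p.1.2), trivial, p.2.2⟩
  left_inv p := Subtype.ext (Prod.ext (E.left_inv _ p.2.2 _) rfl)
  right_inv p := Subtype.ext (Prod.ext (E.right_inv _ p.2.2 _) rfl)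
  continuous_toFun :=
    ((E.continuousOn_toFun.comp_continuous continuous_subtype_val fun p => p.2).prodMk
      continuous_subtype_val.snd).subtype_mk _
  continuous_invFun :=
    ((E.continuousOn_invFun.comp_continuous continuous_subtype_val fun p => p.2).prodMk
      continuous_subtype_val.snd).subtype_mk _

theorem toHomeomorph_apply (E : LevelHomeo s) (p : ↥(univ ×ˢ s : Set (ℝ × ℝ))) :
    (E.toHomeomorph p : ℝ × ℝ) = (E p.1.2 p.1.1, p.1.2) := rfl

theorem image_toHomeomorph (E : LevelHomeo s) {I : Set ℝ} (hI : I ⊆ s) {l r : ℝ → ℝ} {a b : ℝ}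
    (hl : ∀ y ∈ I, E y (l y) = a) (hr : ∀ y ∈ I, E y (r y) = b) :
    Subtype.val '' (E.toHomeomorph ''
      {p : ↥(univ ×ˢ s : Set (ℝ × ℝ)) |
        (p : ℝ × ℝ) ∈ {q : ℝ × ℝ | q.2 ∈ I ∧ q.1 ∈ Icc (l q.2) (r q.2)}}) =
      Icc a b ×ˢ I := by
  ext ⟨x, y⟩
  constructor
  · rintro ⟨_, ⟨⟨⟨x', y'⟩, hp⟩, ⟨hy, hx⟩, rfl⟩, h⟩
    simp only [toHomeomorph_apply, Prod.mk.injEq] at h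
    obtain ⟨rfl, rfl⟩ := h
    have hmono := (E.strictMono y' (hI hy)).monotone
    exact ⟨⟨hl y' hy ▸ hmono hx.1, hr y' hy ▸ hmono hx.2⟩, hy⟩
  · rintro ⟨hx, hy⟩
    have hmono := E.strictMono y (hI hy)
    have hinv := E.right_inv y (hI hy) x
    refine ⟨_, ⟨⟨(E.invFun y x, y), trivial, hI hy⟩, ⟨hy, ?_, ?_⟩, rfl⟩, ?_⟩
    · rw [← hmono.le_iff_le, hinv, hl y hy]; exact hx.1
    · rw [← hmono.le_iff_le, hinv, hr y hy]; exact hx.2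
    · simp [toHomeomorph_apply, hinv]

theorem exists_eq_of_stabilizes (E : ℕ → LevelHomeo s) (τ : ℕ → ℝ)
    (hτ : ∀ y ∈ s, ∃ k, τ k < y)
    (hE : ∀ k m, k ≤ m → ∀ y ∈ s, τ k < y → E m y = E k y ∧ (E m).invFun y = (E k).invFun y) :
    ∃ L : LevelHomeo s, ∀ k, ∀ y ∈ s, τ k < y → L y = E k y ∧ L.invFun y = (E k).invFun y := by
  classical
  let N (y : ℝ) : ℕ := if h : ∃ k, τ k < y then h.choose else 0
  have hN : ∀ y ∈ s, τ (N y) < y := fun y hy => by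
    simpa only [N, dif_pos (hτ y hy)] using (hτ y hy).choose_spec
  have hEN : ∀ k, ∀ y ∈ s, τ k < y →
      E (N y) y = E k y ∧ (E (N y)).invFun y = (E k).invFun y := fun k y hy hk => by
    obtain ⟨h₁, h₁'⟩ := hE k (max k (N y)) (le_max_left _ _) y hy hk
    obtain ⟨h₂, h₂'⟩ := hE (N y) (max k (N y)) (le_max_right _ _) y hy (hN y hy)
    exact ⟨h₂.symm.trans h₁, h₂'.symm.trans h₁'⟩
  refine ⟨{ toFun := fun y => E (N y) y
            invFun := fun y => (E (N y)).invFun y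
            continuousOn_toFun := continuousOn_of_eq_on_levels (fun k => (E k).continuousOn_toFun)
              hτ fun k y hy hk => (hEN k y hy hk).1
            continuousOn_invFun := continuousOn_of_eq_on_levels
              (fun k => (E k).continuousOn_invFun) hτ fun k y hy hk => (hEN k y hy hk).2
            left_inv := fun y hy => (E (N y)).left_inv y hy
            right_inv := fun y hy => (E (N y)).right_inv y hy
            strictMono := fun y hy => (E (N y)).strictMono y hy }, hEN⟩

end LevelHomeo

theorem IsPreconnected.forall_lt_or_forall_lt {X : Type*} [TopologicalSpace X] {s : Set X}
    (hs : IsPreconnected s) {P Q : X → ℝ} (hP : ContinuousOn P s) (hPQ : ∀ y ∈ s, P y ≤ Q y)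
    {A B : ℝ} (hAB : A ≤ B) (h : ∀ y ∈ s, Q y < A ∨ B < P y) :
    (∀ y ∈ s, Q y < A) ∨ (∀ y ∈ s, B < P y) := by
  by_contra! ⟨⟨y₁, hy₁, h₁⟩, ⟨y₂, hy₂, h₂⟩⟩
  have hB₁ : B < P y₁ := (h y₁ hy₁).resolve_left h₁.not_gt
  obtain ⟨y₀, hy₀, hPy₀⟩ := hs.intermediate_value hy₂ hy₁ hP ⟨h₂, hB₁.le⟩
  rcases h y₀ hy₀ with h₀ | h₀
  · linarith [hPQ y₀ hy₀]
  · exact h₀.ne' hPy₀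

/-- Trapezoids listed by decreasing level of their upper bases: the `k`-th one is
`{(x, y) | c < y ≤ top k, left k y ≤ x ≤ right k y}`. -/
structure SortedTrapezoids (c : ℝ) where
  top : ℕ → ℝ
  left : ℕ → ℝ → ℝ
  right : ℕ → ℝ → ℝ
  c_lt_top : ∀ k, c < top k
  antitone_top : Antitone top
  tendsto_top : Tendsto top atTop (𝓝 c)
  continuousOn_left : ∀ k, ContinuousOn (left k) (Ioc c (top k))
  continuousOn_right : ∀ k, ContinuousOn (right k) (Ioc c (top k))
  left_lt_right : ∀ k, ∀ y ∈ Ioc c (top k), left k y < right k y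
  disjoint : ∀ k l, k ≠ l → ∀ y ∈ Ioc c (top k), y ∈ Ioc c (top l) →
    Disjoint (Icc (left k y) (right k y)) (Icc (left l y) (right l y))

def LevelHomeo.Rectifies {c : ℝ} (E : LevelHomeo (Ioi c)) (F : SortedTrapezoids c) (k : ℕ) :
    Prop :=
  ∃ a b, ∀ y ∈ Ioc c (F.top k), E y (F.left k y) = a ∧ E y (F.right k y) = b

namespace SortedTrapezoids

variable {c : ℝ} (F : SortedTrapezoids c) (E : LevelHomeo (Ioi c)) (n : ℕ) {k : ℕ} {y : ℝ}

def upperLeft (k : ℕ) : ℝ := E (F.top k) (F.left k (F.top k))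

def upperRight (k : ℕ) : ℝ := E (F.top k) (F.right k (F.top k))

theorem top_mem_Ioc (k : ℕ) : F.top k ∈ Ioc c (F.top k) := right_mem_Ioc.2 (F.c_lt_top k)

theorem upperLeft_lt_upperRight (k : ℕ) : F.upperLeft E k < F.upperRight E k :=
  E.strictMono _ (F.c_lt_top k) (F.left_lt_right k _ (F.top_mem_Ioc k))

theorem _root_.LevelHomeo.Rectifies.apply_left {F : SortedTrapezoids c} {E : LevelHomeo (Ioi c)}
    (h : E.Rectifies F k) (hy : y ∈ Ioc c (F.top k)) : E y (F.left k y) = F.upperLeft E k := by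
  obtain ⟨a, b, hab⟩ := h
  rw [upperLeft, (hab y hy).1, (hab _ (F.top_mem_Ioc k)).1]

theorem _root_.LevelHomeo.Rectifies.apply_right {F : SortedTrapezoids c} {E : LevelHomeo (Ioi c)}
    (h : E.Rectifies F k) (hy : y ∈ Ioc c (F.top k)) : E y (F.right k y) = F.upperRight E k := by
  obtain ⟨a, b, hab⟩ := h
  rw [upperRight, (hab y hy).2, (hab _ (F.top_mem_Ioc k)).2]

theorem min_top_mem_Ioc (hy : c < y) : min y (F.top n) ∈ Ioc c (F.top n) :=
  ⟨lt_min hy (F.c_lt_top n), min_le_right _ _⟩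

/-- The sides of the `n`-th trapezoid in the coordinates given by `E`, continued vertically
above its upper base, so that the step straightening it is the identity there. -/
def leftSide (y : ℝ) : ℝ := E (min y (F.top n)) (F.left n (min y (F.top n)))

def rightSide (y : ℝ) : ℝ := E (min y (F.top n)) (F.right n (min y (F.top n)))

theorem leftSide_of_le (hy : y ≤ F.top n) : F.leftSide E n y = E y (F.left n y) := by
  rw [leftSide, min_eq_left hy]

theorem rightSide_of_le (hy : y ≤ F.top n) : F.rightSide E n y = E y (F.right n y) := by
  rw [rightSide, min_eq_left hy]

theorem leftSide_of_ge (hy : F.top n ≤ y) : F.leftSide E n y = F.upperLeft E n := by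
  rw [leftSide, min_eq_right hy, upperLeft]

theorem rightSide_of_ge (hy : F.top n ≤ y) : F.rightSide E n y = F.upperRight E n := by
  rw [rightSide, min_eq_right hy, upperRight]

theorem leftSide_lt_rightSide (hy : c < y) : F.leftSide E n y < F.rightSide E n y :=
  E.strictMono _ (F.min_top_mem_Ioc n hy).1 (F.left_lt_right n _ (F.min_top_mem_Ioc n hy))

theorem continuousOn_leftSide : ContinuousOn (F.leftSide E n) (Ioi c) :=
  LevelHomeo.continuousOn_comp
    ((F.continuousOn_left n).comp (continuous_id.min continuous_const).continuousOn
      fun _ hy => F.min_top_mem_Ioc n hy)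
    (continuous_id.min continuous_const).continuousOn fun _ hy => (F.min_top_mem_Ioc n hy).1

theorem continuousOn_rightSide : ContinuousOn (F.rightSide E n) (Ioi c) :=
  LevelHomeo.continuousOn_comp
    ((F.continuousOn_right n).comp (continuous_id.min continuous_const).continuousOn
      fun _ hy => F.min_top_mem_Ioc n hy)
    (continuous_id.min continuous_const).continuousOn fun _ hy => (F.min_top_mem_Ioc n hy).1

theorem rightSide_lt_or_lt_leftSide (hE : ∀ k < n, E.Rectifies F k) (hk : k < n) :
    (∀ y ∈ Ioi c, F.rightSide E n y < F.upperLeft E k) ∨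
      (∀ y ∈ Ioi c, F.upperRight E k < F.leftSide E n y) := by
  refine isPreconnected_Ioi.forall_lt_or_forall_lt (F.continuousOn_leftSide E n)
    (fun y hy => (F.leftSide_lt_rightSide E n hy).le) (F.upperLeft_lt_upperRight E k).le
    fun y hy => ?_
  set y' := min y (F.top n)
  have hyn : y' ∈ Ioc c (F.top n) := F.min_top_mem_Ioc n hy
  have hyk : y' ∈ Ioc c (F.top k) := ⟨hyn.1, hyn.2.trans (F.antitone_top hk.le)⟩
  have hmono := E.strictMono y' hyn.1
  rw [← (hE k hk).apply_left hyk, ← (hE k hk).apply_right hyk, leftSide, rightSide,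
    hmono.lt_iff_lt, hmono.lt_iff_lt]
  by_contra! h
  refine disjoint_left.1 (F.disjoint n k hk.ne' y' hyn hyk)
    ⟨le_max_left _ _, max_le (F.left_lt_right n y' hyn).le h.1⟩
    ⟨le_max_right _ _, max_le h.2 (F.left_lt_right k y' hyk).le⟩

def leftNeighbours : Finset ℕ :=
  (Finset.range n).filter fun k => F.upperRight E k < F.upperLeft E n

def rightNeighbours : Finset ℕ :=
  (Finset.range n).filter fun k => ¬ F.upperRight E k < F.upperLeft E n

variable {F E n}

theorem upperRight_lt_leftSide (hE : ∀ k < n, E.Rectifies F k) (hk : k ∈ F.leftNeighbours E n)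
    (hy : c < y) : F.upperRight E k < F.leftSide E n y := by
  rw [leftNeighbours, Finset.mem_filter, Finset.mem_range] at hk
  refine ((F.rightSide_lt_or_lt_leftSide E n hE hk.1).resolve_left fun h => ?_) y hy
  have := h _ (F.c_lt_top n)
  rw [rightSide_of_ge _ _ _ le_rfl] at this
  linarith [F.upperLeft_lt_upperRight E k, F.upperLeft_lt_upperRight E n]

theorem rightSide_lt_upperLeft (hE : ∀ k < n, E.Rectifies F k) (hk : k ∈ F.rightNeighbours E n)
    (hy : c < y) : F.rightSide E n y < F.upperLeft E k := by
  rw [rightNeighbours, Finset.mem_filter, Finset.mem_range] at hk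
  refine ((F.rightSide_lt_or_lt_leftSide E n hE hk.1).resolve_right fun h => hk.2 ?_) y hy
  simpa only [leftSide_of_ge _ _ _ le_rfl] using h _ (F.c_lt_top n)

variable (F E n)

/-- At level `y` the step moves only points strictly between `leftWall` and `rightWall`: these
enclose the `n`-th trapezoid and its final position but no rectangle built before. -/
def leftWall (y : ℝ) : ℝ :=
  if h : (F.leftNeighbours E n).Nonempty then (F.leftNeighbours E n).sup' h (F.upperRight E)
  else min (F.leftSide E n y) (F.upperLeft E n) - 1

def rightWall (y : ℝ) : ℝ :=
  if h : (F.rightNeighbours E n).Nonempty then (F.rightNeighbours E n).inf' h (F.upperLeft E)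
  else max (F.rightSide E n y) (F.upperRight E n) + 1

theorem continuousOn_leftWall : ContinuousOn (F.leftWall E n) (Ioi c) := by
  by_cases h : (F.leftNeighbours E n).Nonempty
  · exact continuousOn_const.congr fun y _ => dif_pos h
  · exact (((F.continuousOn_leftSide E n).inf continuousOn_const).sub continuousOn_const).congr
      fun y _ => dif_neg h

theorem continuousOn_rightWall : ContinuousOn (F.rightWall E n) (Ioi c) := by
  by_cases h : (F.rightNeighbours E n).Nonempty
  · exact continuousOn_const.congr fun y _ => dif_pos h
  · exact (((F.continuousOn_rightSide E n).sup continuousOn_const).add continuousOn_const).congr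
      fun y _ => dif_neg h

variable {F E n}

theorem upperRight_le_leftWall (hk : k ∈ F.leftNeighbours E n) :
    F.upperRight E k ≤ F.leftWall E n y := by
  rw [leftWall, dif_pos ⟨k, hk⟩]
  exact Finset.le_sup' _ hk

theorem rightWall_le_upperLeft (hk : k ∈ F.rightNeighbours E n) :
    F.rightWall E n y ≤ F.upperLeft E k := by
  rw [rightWall, dif_pos ⟨k, hk⟩]
  exact Finset.inf'_le _ hk

theorem leftWall_lt (hE : ∀ k < n, E.Rectifies F k) (hy : c < y) :
    F.leftWall E n y < F.leftSide E n y ∧ F.leftWall E n y < F.upperLeft E n := by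
  rw [leftWall]
  split_ifs with h
  · simp only [Finset.sup'_lt_iff]
    exact ⟨fun k hk => upperRight_lt_leftSide hE hk hy, fun k hk => (Finset.mem_filter.1 hk).2⟩
  · constructor <;> linarith [min_le_left (F.leftSide E n y) (F.upperLeft E n),
      min_le_right (F.leftSide E n y) (F.upperLeft E n)]

theorem lt_rightWall (hE : ∀ k < n, E.Rectifies F k) (hy : c < y) :
    F.rightSide E n y < F.rightWall E n y ∧ F.upperRight E n < F.rightWall E n y := by
  rw [rightWall]
  split_ifs with h
  · simp only [Finset.lt_inf'_iff]
    refine ⟨fun k hk => rightSide_lt_upperLeft hE hk hy, fun k hk => ?_⟩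
    simpa only [rightSide_of_ge _ _ _ le_rfl] using rightSide_lt_upperLeft hE hk (F.c_lt_top n)
  · constructor <;> linarith [le_max_left (F.rightSide E n y) (F.upperRight E n),
      le_max_right (F.rightSide E n y) (F.upperRight E n)]

theorem leftSide_lt_rightWall (hE : ∀ k < n, E.Rectifies F k) (hy : c < y) :
    F.leftSide E n y < F.rightWall E n y :=
  (F.leftSide_lt_rightSide E n hy).trans (lt_rightWall hE hy).1

theorem upperLeft_lt_rightWall (hE : ∀ k < n, E.Rectifies F k) (hy : c < y) :
    F.upperLeft E n < F.rightWall E n y :=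
  (F.upperLeft_lt_upperRight E n).trans (lt_rightWall hE hy).2

variable (F E n)

def moveLeft (y x : ℝ) : ℝ :=
  pivot (F.leftWall E n y) (F.leftSide E n y) (F.rightWall E n y) (F.upperLeft E n) x

def movedRightSide (y : ℝ) : ℝ := F.moveLeft E n y (F.rightSide E n y)

variable {F E n}

theorem strictMono_moveLeft (hE : ∀ k < n, E.Rectifies F k) (hy : c < y) :
    StrictMono (F.moveLeft E n y) :=
  strictMono_pivot (leftWall_lt hE hy).1 (leftSide_lt_rightWall hE hy) (leftWall_lt hE hy).2
    (upperLeft_lt_rightWall hE hy)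

theorem upperLeft_lt_movedRightSide (hE : ∀ k < n, E.Rectifies F k) (hy : c < y) :
    F.upperLeft E n < F.movedRightSide E n y := by
  calc F.upperLeft E n = F.moveLeft E n y (F.leftSide E n y) :=
        (pivot_self (leftWall_lt hE hy).1 (leftSide_lt_rightWall hE hy)).symm
    _ < _ := strictMono_moveLeft hE hy (F.leftSide_lt_rightSide E n hy)

theorem movedRightSide_lt_rightWall (hE : ∀ k < n, E.Rectifies F k) (hy : c < y) :
    F.movedRightSide E n y < F.rightWall E n y := by
  calc F.movedRightSide E n y < F.moveLeft E n y (F.rightWall E n y) :=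
        strictMono_moveLeft hE hy (lt_rightWall hE hy).1
    _ = _ := pivot_of_ge (leftWall_lt hE hy).1 (leftSide_lt_rightWall hE hy) le_rfl

theorem continuousOn_movedRightSide (hE : ∀ k < n, E.Rectifies F k) :
    ContinuousOn (F.movedRightSide E n) (Ioi c) :=
  (F.continuousOn_leftWall E n).pivot (F.continuousOn_leftSide E n)
    (F.continuousOn_rightWall E n) continuousOn_const (F.continuousOn_rightSide E n)
    (fun _ hy => (leftWall_lt hE hy).1) fun _ hy => leftSide_lt_rightWall hE hy

variable (F E n)

/-- Move the left side of the `n`-th trapezoid into place, then its right side. -/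
def step (hE : ∀ k < n, E.Rectifies F k) : LevelHomeo (Ioi c) :=
  (E.trans (LevelHomeo.pivot (F.leftWall E n) (F.leftSide E n) (F.rightWall E n)
      (fun _ => F.upperLeft E n) (F.continuousOn_leftWall E n) (F.continuousOn_leftSide E n)
      (F.continuousOn_rightWall E n) continuousOn_const (fun _ hy => (leftWall_lt hE hy).1)
      (fun _ hy => leftSide_lt_rightWall hE hy) (fun _ hy => (leftWall_lt hE hy).2)
      fun _ hy => upperLeft_lt_rightWall hE hy)).trans
    (LevelHomeo.pivot (fun _ => F.upperLeft E n) (F.movedRightSide E n) (F.rightWall E n)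
      (fun _ => F.upperRight E n) continuousOn_const (F.continuousOn_movedRightSide hE)
      (F.continuousOn_rightWall E n) continuousOn_const
      (fun _ hy => upperLeft_lt_movedRightSide hE hy)
      (fun _ hy => movedRightSide_lt_rightWall hE hy) (fun _ _ => F.upperLeft_lt_upperRight E n)
      fun _ hy => (lt_rightWall hE hy).2)

variable {F E n}

theorem step_apply (hE : ∀ k < n, E.Rectifies F k) (y x : ℝ) :
    F.step E n hE y x = pivot (F.upperLeft E n) (F.movedRightSide E n y) (F.rightWall E n y)
      (F.upperRight E n) (F.moveLeft E n y (E y x)) := rfl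

theorem step_apply_of_mem (hE : ∀ k < n, E.Rectifies F k) (hk : k < n) (hy : c < y) {x : ℝ}
    (hx : E y x ∈ Icc (F.upperLeft E k) (F.upperRight E k)) : F.step E n hE y x = E y x := by
  have hl := (leftWall_lt hE hy).1
  have hr := leftSide_lt_rightWall hE hy
  rw [step_apply]
  by_cases hkl : k ∈ F.leftNeighbours E n
  · have hxu : E y x ≤ F.leftWall E n y := hx.2.trans (upperRight_le_leftWall hkl)
    rw [moveLeft, pivot_of_le hl hr hxu, pivot_of_le (upperLeft_lt_movedRightSide hE hy)
      (movedRightSide_lt_rightWall hE hy) (hxu.trans (leftWall_lt hE hy).2.le)]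
  · have hkr : k ∈ F.rightNeighbours E n := by
      simp only [leftNeighbours, rightNeighbours, Finset.mem_filter, Finset.mem_range] at hkl ⊢
      exact ⟨hk, fun h => hkl ⟨hk, h⟩⟩
    have hvx : F.rightWall E n y ≤ E y x := (rightWall_le_upperLeft hkr).trans hx.1
    rw [moveLeft, pivot_of_ge hl hr hvx, pivot_of_ge (upperLeft_lt_movedRightSide hE hy)
      (movedRightSide_lt_rightWall hE hy) hvx]

theorem rectifies_step (hE : ∀ k < n, E.Rectifies F k) :
    ∀ k < n + 1, (F.step E n hE).Rectifies F k := by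
  intro k hk
  refine ⟨F.upperLeft E k, F.upperRight E k, fun y hy => ?_⟩
  have hlr := (F.upperLeft_lt_upperRight E k).le
  rcases (Nat.lt_succ_iff.1 hk).lt_or_eq with hk | rfl
  · have hl := (hE k hk).apply_left hy
    have hr := (hE k hk).apply_right hy
    rw [step_apply_of_mem hE hk hy.1 (by rw [hl]; exact ⟨le_rfl, hlr⟩),
      step_apply_of_mem hE hk hy.1 (by rw [hr]; exact ⟨hlr, le_rfl⟩), hl, hr]
    exact ⟨rfl, rfl⟩
  · have hleft : F.moveLeft E k y (F.leftSide E k y) = F.upperLeft E k :=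
      pivot_self (leftWall_lt hE hy.1).1 (leftSide_lt_rightWall hE hy.1)
    have hright : F.moveLeft E k y (F.rightSide E k y) = F.movedRightSide E k y := rfl
    have hu := upperLeft_lt_movedRightSide hE hy.1
    have hv := movedRightSide_lt_rightWall hE hy.1
    rw [step_apply, step_apply, ← leftSide_of_le _ _ _ hy.2, ← rightSide_of_le _ _ _ hy.2, hleft,
      hright]
    exact ⟨pivot_of_le hu hv le_rfl, pivot_self hu hv⟩

theorem step_of_top_le (hE : ∀ k < n, E.Rectifies F k) (hy : F.top n ≤ y) :
    F.step E n hE y = E y ∧ (F.step E n hE).invFun y = E.invFun y := by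
  have hl := leftSide_of_ge F E n hy
  have hmid : F.movedRightSide E n y = F.upperRight E n := by
    rw [movedRightSide, moveLeft, hl, rightSide_of_ge F E n hy, pivot_same]
  constructor <;> funext x
  · rw [step_apply, hmid, moveLeft, hl, pivot_same, pivot_same]
  · simp only [step, LevelHomeo.trans_invFun, LevelHomeo.pivot]
    rw [hmid, hl, pivot_same, pivot_same]

variable (F)

def stages : (n : ℕ) → {E : LevelHomeo (Ioi c) // ∀ k < n, E.Rectifies F k}
  | 0 => ⟨LevelHomeo.refl _, fun _ hk => absurd hk (Nat.not_lt_zero _)⟩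
  | n + 1 => ⟨F.step (stages n).1 n (stages n).2, rectifies_step (stages n).2⟩

theorem stages_succ (n : ℕ) :
    (F.stages (n + 1)).1 = F.step (F.stages n).1 n (F.stages n).2 := rfl

theorem stages_stable {k m : ℕ} (hkm : k ≤ m) (hy : F.top k < y) :
    (F.stages m).1 y = (F.stages k).1 y ∧ (F.stages m).1.invFun y = (F.stages k).1.invFun y := by
  induction m, hkm using Nat.le_induction with
  | base => exact ⟨rfl, rfl⟩
  | succ m hkm ih =>
    obtain ⟨h, h'⟩ := step_of_top_le (F.stages m).2 ((F.antitone_top hkm).trans hy.le)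
    rw [stages_succ]
    exact ⟨h.trans ih.1, h'.trans ih.2⟩

theorem exists_rectifying : ∃ E : LevelHomeo (Ioi c), ∀ k, E.Rectifies F k := by
  have hτ : ∀ y ∈ Ioi c, ∃ k, F.top k < y := fun y hy =>
    (F.tendsto_top.eventually (gt_mem_nhds hy)).exists
  obtain ⟨L, hL⟩ := LevelHomeo.exists_eq_of_stabilizes (fun m => (F.stages m).1) F.top hτ
    fun k m hkm y _ hy => F.stages_stable hkm hy
  refine ⟨L, fun k => ⟨L (F.top k) (F.left k (F.top k)), L (F.top k) (F.right k (F.top k)),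
    fun y hy => ?_⟩⟩
  obtain ⟨m, hm⟩ := hτ y hy.1
  have hm' : F.top (max m (k + 1)) < y := (F.antitone_top (le_max_left _ _)).trans_lt hm
  obtain ⟨a, b, hab⟩ := (F.stages (max m (k + 1))).2 k (by omega)
  rw [(hL _ y hy.1 hm').1, (hL _ _ (F.c_lt_top k) (hm'.trans_le hy.2)).1, (hab y hy).1,
    (hab y hy).2, (hab _ (F.top_mem_Ioc k)).1, (hab _ (F.top_mem_Ioc k)).2]
  exact ⟨rfl, rfl⟩

end SortedTrapezoids

end

theorem stmt18_general (c d : ℝ) (t : ℕ → ℝ) (ht : ∀ i, t i ∈ Set.Ioc c d)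
    (htc : Filter.Tendsto t Filter.atTop (nhds c))
    (α β : ℕ → ℝ → ℝ)
    (hα : ∀ i, ContinuousOn (α i) (Set.Ioc c (t i)))
    (hβ : ∀ i, ContinuousOn (β i) (Set.Ioc c (t i)))
    (hαβ : ∀ i, ∀ y ∈ Set.Ioc c (t i), α i y < β i y)
    (T : ℕ → Set (ℝ × ℝ))
    (hT : ∀ i, T i =
      {p : ℝ × ℝ | p.2 ∈ Set.Ioc c (t i) ∧ p.1 ∈ Set.Icc (α i p.2) (β i p.2)})
    (hdisj : Pairwise (Function.onFun Disjoint T)) :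
    ∃ η : ↥(Set.univ ×ˢ Set.Ioc c d : Set (ℝ × ℝ)) ≃ₜ
          ↥(Set.univ ×ˢ Set.Ioc c d : Set (ℝ × ℝ)),
      (∀ p : ↥(Set.univ ×ˢ Set.Ioc c d : Set (ℝ × ℝ)),
        ((η p : ℝ × ℝ)).2 = (p : ℝ × ℝ).2) ∧
      (∀ i, ∃ a b : ℝ, a < b ∧
        Subtype.val '' (⇑η ''
          {p : ↥(Set.univ ×ˢ Set.Ioc c d : Set (ℝ × ℝ)) | (p : ℝ × ℝ) ∈ T i}) =
        Set.Icc a b ×ˢ Set.Ioc c (t i)) := by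
  obtain ⟨σ, hσ, hanti⟩ :=
    exists_bijective_antitone_comp t fun i => finite_setOf_le_of_tendsto htc (ht i).1
  let F : SortedTrapezoids c :=
    { top := t ∘ σ
      left := α ∘ σ
      right := β ∘ σ
      c_lt_top := fun k => (ht (σ k)).1
      antitone_top := hanti
      tendsto_top := htc.comp hσ.1.nat_tendsto_atTop
      continuousOn_left := fun k => hα (σ k)
      continuousOn_right := fun k => hβ (σ k)
      left_lt_right := fun k => hαβ (σ k)
      disjoint := fun k l hkl y hk hl => disjoint_left.2 fun x hxk hxl =>
        disjoint_left.1 (hdisj (hσ.1.ne hkl)) (show (x, y) ∈ T (σ k) by rw [hT]; exact ⟨hk, hxk⟩)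
          (show (x, y) ∈ T (σ l) by rw [hT]; exact ⟨hl, hxl⟩) }
  obtain ⟨E, hE⟩ := F.exists_rectifying
  refine ⟨(E.restrict Ioc_subset_Ioi_self).toHomeomorph, fun _ => rfl, fun i => ?_⟩
  obtain ⟨k, rfl⟩ := hσ.2 i
  obtain ⟨a, b, hab⟩ := hE k
  have htop := F.top_mem_Ioc k
  refine ⟨a, b, ?_, ?_⟩
  · rw [← (hab _ htop).1, ← (hab _ htop).2]
    exact E.strictMono _ htop.1 (F.left_lt_right k _ htop)
  · rw [hT]
    exact (E.restrict _).image_toHomeomorph (Ioc_subset_Ioc_right (ht _).2)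
      (fun y hy => (hab y hy).1) fun y hy => (hab y hy).2

/-- given pairwise disjoint half open trapezoids `T i ⊆ ℝ × (c,d]` with upper
bases at levels `t i → c`, there is a homeomorphism of the strip `ℝ × (c,d]` preserving each
horizontal line and mapping each `T i` onto a half open rectangle `[a,b] × (c, t i]`. -/
theorem stmt18 (c d : ℝ) (hcd : c < d) (t : ℕ → ℝ) (ht : ∀ i, t i ∈ Set.Ioc c d)
    (htc : Filter.Tendsto t Filter.atTop (nhds c))
    (α β : ℕ → ℝ → ℝ)
    (hα : ∀ i, ContinuousOn (α i) (Set.Ioc c (t i)))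
    (hβ : ∀ i, ContinuousOn (β i) (Set.Ioc c (t i)))
    (hαβ : ∀ i, ∀ y ∈ Set.Ioc c (t i), α i y < β i y)
    (T : ℕ → Set (ℝ × ℝ))
    (hT : ∀ i, T i =
      {p : ℝ × ℝ | p.2 ∈ Set.Ioc c (t i) ∧ p.1 ∈ Set.Icc (α i p.2) (β i p.2)})
    (hdisj : Pairwise (Function.onFun Disjoint T)) :
    ∃ η : ↥(Set.univ ×ˢ Set.Ioc c d : Set (ℝ × ℝ)) ≃ₜ
          ↥(Set.univ ×ˢ Set.Ioc c d : Set (ℝ × ℝ)),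
      (∀ p : ↥(Set.univ ×ˢ Set.Ioc c d : Set (ℝ × ℝ)),
        ((η p : ℝ × ℝ)).2 = (p : ℝ × ℝ).2) ∧
      (∀ i, ∃ a b : ℝ, a < b ∧
        Subtype.val '' (⇑η ''
          {p : ↥(Set.univ ×ˢ Set.Ioc c d : Set (ℝ × ℝ)) | (p : ℝ × ℝ) ∈ T i}) =
        Set.Icc a b ×ˢ Set.Ioc c (t i)) :=
  stmt18_general c d t ht htc α β hα hβ hαβ T hT hdisj
end
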